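/- arXiv:1907.01148 — 10 statements merged into one kernel-verified Lean document; each statement's English description precedes it below -/
import Mathlib

section
/- For every real x > 0, the function x ↦ (1/2)·x²·(I_1(x)² − I_0(x)·I_2(x)) has derivative equal to x·I_1(x)²; that is, d/dx [ x²(I_1(x)² − I_0(x)I_2(x))/2 ] = x·I_1(x)². -/
/-- The modified Bessel function of the first kind of (nonnegative integer) order `n`:
`I_n(x) = (x/2)^n * ∑_{k=0}^∞ (x/2)^{2k} / (k! (n+k)!)`. -/
noncomputable def besselI (n : ℕ) (x : ℝ) : ℝ :=
  (x / 2) ^ n * ∑' k : ℕ, (x / 2) ^ (2 * k) / ((Nat.factorial k : ℝ) * (Nat.factorial (n + k) : ℝ))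

noncomputable def bb (n k : ℕ) : ℝ :=
  (1 / 2) ^ (n + 2 * k) / ((Nat.factorial k : ℝ) * (Nat.factorial (n + k) : ℝ))

lemma bb_nonneg (n k : ℕ) : 0 ≤ bb n k := by
  unfold bb
  positivity

lemma besselI_eq_tsum (n : ℕ) (x : ℝ) :
    besselI n x = ∑' k : ℕ, bb n k * x ^ (n + 2 * k) := by
  unfold besselI
  rw [← tsum_mul_left]
  refine tsum_congr fun k => ?_
  unfold bb
  rw [div_pow, div_pow, div_pow, one_pow, pow_add, pow_add]
  ring

lemma summable_u (n : ℕ) (R : ℝ) :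
    Summable (fun k : ℕ => R ^ n * ((R ^ 2) ^ k / (Nat.factorial k : ℝ))) :=
  (Real.summable_pow_div_factorial (R ^ 2)).mul_left _

lemma term_bound (n k : ℕ) {y R : ℝ} (hy : |y| ≤ R) (hR : 1 ≤ R) :
    |((n : ℝ) + 2 * k) * bb n k * y ^ (n + 2 * k - 1)|
      ≤ R ^ n * ((R ^ 2) ^ k / (Nat.factorial k : ℝ)) := by
  have hy0 : 0 ≤ R := le_trans zero_le_one hR
  have h1 : |y ^ (n + 2 * k - 1)| ≤ R ^ (n + 2 * k) := by
    rw [abs_pow]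
    calc |y| ^ (n + 2 * k - 1) ≤ R ^ (n + 2 * k - 1) :=
          pow_le_pow_left₀ (abs_nonneg y) hy _
      _ ≤ R ^ (n + 2 * k) := pow_le_pow_right₀ hR (Nat.sub_le _ _)
  have h2 : ((n : ℝ) + 2 * k) ≤ 2 ^ (n + 2 * k) := by
    calc ((n : ℝ) + 2 * k) = ((n + 2 * k : ℕ) : ℝ) := by push_cast; ring
      _ ≤ 2 ^ (n + 2 * k) := by
          exact_mod_cast (Nat.lt_two_pow_self (n := n + 2 * k)).le
  have hb : bb n k ≤ (1 / 2) ^ (n + 2 * k) / (Nat.factorial k : ℝ) := by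
    unfold bb
    have h1 : (1 : ℝ) ≤ (Nat.factorial (n + k) : ℝ) := by
      exact_mod_cast Nat.one_le_iff_ne_zero.mpr (Nat.factorial_pos (n + k)).ne'
    have h2 : (0 : ℝ) < (Nat.factorial k : ℝ) := by exact_mod_cast Nat.factorial_pos k
    exact div_le_div_of_nonneg_left (by positivity) h2 (le_mul_of_one_le_right h2.le h1)
  have hn2 : (0:ℝ) ≤ (n : ℝ) + 2 * k := by positivity
  calc |((n : ℝ) + 2 * k) * bb n k * y ^ (n + 2 * k - 1)|
      = ((n : ℝ) + 2 * k) * bb n k * |y ^ (n + 2 * k - 1)| := by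
        rw [abs_mul, abs_mul, abs_of_nonneg hn2, abs_of_nonneg (bb_nonneg n k)]
    _ ≤ 2 ^ (n + 2 * k) * ((1 / 2) ^ (n + 2 * k) / (Nat.factorial k : ℝ)) * R ^ (n + 2 * k) := by
        gcongr
        exact bb_nonneg n k
    _ = ((2 : ℝ) ^ (n + 2 * k) * (1 / 2) ^ (n + 2 * k)) * R ^ (n + 2 * k) / (Nat.factorial k : ℝ) := by
        ring
    _ = R ^ n * ((R ^ 2) ^ k / (Nat.factorial k : ℝ)) := by
        rw [← mul_pow]
        norm_num
        rw [pow_add, pow_mul]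
        ring

lemma summable_deriv_series (n : ℕ) (x : ℝ) :
    Summable (fun k : ℕ => ((n : ℝ) + 2 * k) * bb n k * x ^ (n + 2 * k - 1)) := by
  have hR : (1 : ℝ) ≤ |x| + 1 := by linarith [abs_nonneg x]
  refine Summable.of_norm_bounded (summable_u n (|x| + 1)) fun k => ?_
  exact term_bound n k (by linarith [abs_nonneg x]) hR

lemma summable_series (n : ℕ) (x : ℝ) :
    Summable (fun k : ℕ => bb n k * x ^ (n + 2 * k)) := by
  have hR : (1 : ℝ) ≤ |x| + 1 := by linarith [abs_nonneg x]
  refine Summable.of_norm_bounded (summable_u n (|x| + 1)) fun k => ?_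
  set R := |x| + 1 with hR'
  have hxR : |x| ≤ R := by simp [hR']
  have h1 : |x ^ (n + 2 * k)| ≤ R ^ (n + 2 * k) := by
    rw [abs_pow]; exact pow_le_pow_left₀ (abs_nonneg x) hxR _
  have h2 : (0 : ℝ) < (Nat.factorial k : ℝ) := by exact_mod_cast Nat.factorial_pos k
  have hb : bb n k ≤ 1 / (Nat.factorial k : ℝ) := by
    unfold bb
    have h1' : (1 : ℝ) ≤ (Nat.factorial (n + k) : ℝ) := by
      exact_mod_cast Nat.one_le_iff_ne_zero.mpr (Nat.factorial_pos (n + k)).ne'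
    calc (1 / 2 : ℝ) ^ (n + 2 * k) / ((Nat.factorial k : ℝ) * (Nat.factorial (n + k) : ℝ))
        ≤ 1 / ((Nat.factorial k : ℝ) * (Nat.factorial (n + k) : ℝ)) := by
          have hp : (1 / 2 : ℝ) ^ (n + 2 * k) ≤ 1 := pow_le_one₀ (by norm_num) (by norm_num)
          have hd : (0 : ℝ) < (Nat.factorial k : ℝ) * (Nat.factorial (n + k) : ℝ) := by
            have a1 : (0 : ℝ) < (Nat.factorial k : ℝ) := by exact_mod_cast Nat.factorial_pos k
            have a2 : (0 : ℝ) < (Nat.factorial (n + k) : ℝ) := by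
              exact_mod_cast Nat.factorial_pos (n + k)
            positivity
          exact (div_le_div_iff_of_pos_right hd).mpr hp
      _ ≤ 1 / (Nat.factorial k : ℝ) :=
          div_le_div_of_nonneg_left zero_le_one h2 (le_mul_of_one_le_right h2.le h1')
  calc ‖bb n k * x ^ (n + 2 * k)‖ = bb n k * |x ^ (n + 2 * k)| := by
        rw [norm_mul, Real.norm_eq_abs, Real.norm_eq_abs, abs_of_nonneg (bb_nonneg n k)]
    _ ≤ (1 / (Nat.factorial k : ℝ)) * R ^ (n + 2 * k) := by
        gcongr
    _ = R ^ n * ((R ^ 2) ^ k / (Nat.factorial k : ℝ)) := by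
        rw [pow_add, pow_mul]; ring

lemma hasDerivAt_besselI (n : ℕ) (x : ℝ) :
    HasDerivAt (besselI n)
      (∑' k : ℕ, ((n : ℝ) + 2 * k) * bb n k * x ^ (n + 2 * k - 1)) x := by
  have heq : besselI n = fun y : ℝ => ∑' k : ℕ, bb n k * y ^ (n + 2 * k) :=
    funext fun y => besselI_eq_tsum n y
  rw [heq]
  set R := |x| + 1 with hRdef
  have hR : (1 : ℝ) ≤ R := by rw [hRdef]; linarith [abs_nonneg x]
  have hxR : x ∈ Metric.ball (0 : ℝ) R := by
    simp only [Metric.mem_ball, Real.dist_eq, sub_zero, hRdef]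
    linarith
  refine hasDerivAt_tsum_of_isPreconnected
    (u := fun k : ℕ => R ^ n * ((R ^ 2) ^ k / (Nat.factorial k : ℝ)))
    (g := fun (k : ℕ) (y : ℝ) => bb n k * y ^ (n + 2 * k))
    (g' := fun (k : ℕ) (y : ℝ) => ((n : ℝ) + 2 * k) * bb n k * y ^ (n + 2 * k - 1))
    (summable_u n R) Metric.isOpen_ball
    (convex_ball (0 : ℝ) R).isPreconnected
    (fun k y _ => ?_) (fun k y hy => ?_) hxR (summable_series n x) hxR
  · have h := (hasDerivAt_pow (n + 2 * k) y).const_mul (bb n k)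
    refine h.congr_deriv ?_
    push_cast
    ring
  · have hyR : |y| ≤ R := by
      rw [Metric.mem_ball, Real.dist_eq, sub_zero] at hy
      exact hy.le
    exact term_bound n k hyR hR

lemma fact_cast_pos (k : ℕ) : (0 : ℝ) < (Nat.factorial k : ℝ) := by
  exact_mod_cast Nat.factorial_pos k

lemma fact0 (k : ℕ) : ((Nat.factorial (0 + k) : ℝ)) = (Nat.factorial k : ℝ) := by
  norm_num

lemma fact1 (k : ℕ) : ((Nat.factorial (1 + k) : ℝ)) = ((k : ℝ) + 1) * (Nat.factorial k : ℝ) := by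
  rw [Nat.add_comm 1 k, Nat.factorial_succ]; push_cast; ring

lemma fact2 (k : ℕ) :
    ((Nat.factorial (2 + k) : ℝ)) = ((k : ℝ) + 2) * (((k : ℝ) + 1) * (Nat.factorial k : ℝ)) := by
  rw [show 2 + k = (k + 1) + 1 from by omega, Nat.factorial_succ, Nat.factorial_succ]
  push_cast; ring

lemma coeff_shift0 (k : ℕ) : (2 * (k : ℝ) + 2) * bb 0 (k + 1) = bb 1 k := by
  unfold bb
  rw [fact0 (k + 1), fact1 k]
  rw [show (Nat.factorial (k + 1) : ℝ) = ((k : ℝ) + 1) * (Nat.factorial k : ℝ) from by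
    rw [Nat.factorial_succ]; push_cast; ring]
  have hk := (fact_cast_pos k).ne'
  have hk1 : ((k : ℝ) + 1) ≠ 0 := by positivity
  field_simp
  ring

lemma coeff1 (k : ℕ) : ((1 : ℝ) + 2 * k) * bb 1 k = bb 0 k - bb 1 k := by
  unfold bb
  rw [fact0 k, fact1 k]
  have hk := (fact_cast_pos k).ne'
  have hk1 : ((k : ℝ) + 1) ≠ 0 := by positivity
  field_simp
  ring

lemma coeff2 (k : ℕ) : ((2 : ℝ) + 2 * k) * bb 2 k = bb 1 k - 2 * bb 2 k := by
  unfold bb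
  rw [fact1 k, fact2 k]
  have hk := (fact_cast_pos k).ne'
  have hk1 : ((k : ℝ) + 1) ≠ 0 := by positivity
  have hk2 : ((k : ℝ) + 2) ≠ 0 := by positivity
  field_simp
  ring

lemma coeffR (k : ℕ) : bb 0 (k + 1) - 2 * bb 1 (k + 1) = bb 2 k := by
  unfold bb
  rw [fact0 (k + 1), fact1 (k + 1), fact2 k]
  rw [show (Nat.factorial (k + 1) : ℝ) = ((k : ℝ) + 1) * (Nat.factorial k : ℝ) from by
    rw [Nat.factorial_succ]; push_cast; ring]
  have hk := (fact_cast_pos k).ne'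
  have hk1 : ((k : ℝ) + 1) ≠ 0 := by positivity
  have hk2 : ((k : ℝ) + 2) ≠ 0 := by positivity
  push_cast
  field_simp
  ring

lemma hasDerivAt_besselI_zero (x : ℝ) : HasDerivAt (besselI 0) (besselI 1 x) x := by
  have h := hasDerivAt_besselI 0 x
  have e : besselI 1 x
      = ∑' k : ℕ, (((0 : ℕ) : ℝ) + 2 * (k : ℝ)) * bb 0 k * x ^ (0 + 2 * k - 1) := by
    rw [besselI_eq_tsum 1, Summable.tsum_eq_zero_add (summable_deriv_series 0 x)]
    have h0 : (((0 : ℕ) : ℝ) + 2 * ((0 : ℕ) : ℝ)) * bb 0 0 * x ^ (0 + 2 * 0 - 1) = 0 := by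
      norm_num
    rw [h0, zero_add]
    refine tsum_congr fun k => ?_
    have hexp : 0 + 2 * (k + 1) - 1 = 1 + 2 * k := by omega
    rw [hexp]
    have hc := coeff_shift0 k
    push_cast
    linear_combination (-(x ^ (1 + 2 * k))) * hc
  rw [e]
  exact h

lemma hasDerivAt_besselI_one (x : ℝ) (hx : x ≠ 0) :
    HasDerivAt (besselI 1) (besselI 0 x - besselI 1 x / x) x := by
  have h := hasDerivAt_besselI 1 x
  have e : besselI 0 x - besselI 1 x / x
      = ∑' k : ℕ, (((1 : ℕ) : ℝ) + 2 * (k : ℝ)) * bb 1 k * x ^ (1 + 2 * k - 1) := by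
    rw [besselI_eq_tsum 0, besselI_eq_tsum 1, ← tsum_div_const,
      ← Summable.tsum_sub (summable_series 0 x) ((summable_series 1 x).div_const x)]
    refine tsum_congr fun k => ?_
    have hexp : 1 + 2 * k - 1 = 2 * k := by omega
    rw [hexp]
    have hdiv : bb 1 k * x ^ (1 + 2 * k) / x = bb 1 k * x ^ (2 * k) := by
      rw [Nat.add_comm 1 (2 * k), pow_succ, ← mul_assoc, mul_div_assoc, div_self hx, mul_one]
    rw [hdiv]
    have hc := coeff1 k
    push_cast
    linear_combination (-(x ^ (2 * k))) * hc
  rw [e]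
  exact h

lemma hasDerivAt_besselI_two (x : ℝ) (hx : x ≠ 0) :
    HasDerivAt (besselI 2) (besselI 1 x - 2 * besselI 2 x / x) x := by
  have h := hasDerivAt_besselI 2 x
  have e : besselI 1 x - 2 * besselI 2 x / x
      = ∑' k : ℕ, (((2 : ℕ) : ℝ) + 2 * (k : ℝ)) * bb 2 k * x ^ (2 + 2 * k - 1) := by
    rw [besselI_eq_tsum 1, besselI_eq_tsum 2, ← tsum_mul_left, ← tsum_div_const,
      ← Summable.tsum_sub (summable_series 1 x) (((summable_series 2 x).mul_left 2).div_const x)]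
    refine tsum_congr fun k => ?_
    have hexp : 2 + 2 * k - 1 = 1 + 2 * k := by omega
    rw [hexp]
    have hdiv : 2 * (bb 2 k * x ^ (2 + 2 * k)) / x = 2 * bb 2 k * x ^ (1 + 2 * k) := by
      rw [show 2 + 2 * k = (1 + 2 * k) + 1 from by omega, pow_succ]
      field_simp
    rw [hdiv]
    have hc := coeff2 k
    push_cast
    linear_combination (-(x ^ (1 + 2 * k))) * hc
  rw [e]
  exact h

lemma besselI_two_key (x : ℝ) :
    x * besselI 2 x = x * besselI 0 x - 2 * besselI 1 x := by
  rw [besselI_eq_tsum 0, besselI_eq_tsum 1, besselI_eq_tsum 2,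
    ← tsum_mul_left, ← tsum_mul_left, ← tsum_mul_left,
    ← Summable.tsum_sub ((summable_series 0 x).mul_left x) ((summable_series 1 x).mul_left 2),
    Summable.tsum_eq_zero_add (((summable_series 0 x).mul_left x).sub ((summable_series 1 x).mul_left 2))]
  have h0 : x * (bb 0 0 * x ^ (0 + 2 * 0)) - 2 * (bb 1 0 * x ^ (1 + 2 * 0)) = 0 := by
    unfold bb
    norm_num [Nat.factorial]
    ring
  rw [h0, zero_add]
  refine tsum_congr fun k => ?_
  have hc := coeffR k
  linear_combination (-(x ^ (2 + 2 * k) * x)) * hc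

/-- For every real `x > 0`, `d/dx [ x²(I₁(x)² − I₀(x)I₂(x))/2 ] = x·I₁(x)²`. -/
theorem deriv_besselI_combination (x : ℝ) (hx : 0 < x) :
    deriv (fun y : ℝ => (1 / 2) * y ^ 2 * (besselI 1 y ^ 2 - besselI 0 y * besselI 2 y)) x
      = x * besselI 1 x ^ 2 := by
  have hx0 : x ≠ 0 := hx.ne'
  have h0 := hasDerivAt_besselI_zero x
  have h1 := hasDerivAt_besselI_one x hx0
  have h2 := hasDerivAt_besselI_two x hx0
  have hsq : HasDerivAt (fun y : ℝ => besselI 1 y ^ 2)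
      (2 * besselI 1 x * (besselI 0 x - besselI 1 x / x)) x := by
    have h := h1.pow 2
    have h2 : (↑(2:ℕ) : ℝ) * besselI 1 x ^ (2 - 1) * (besselI 0 x - besselI 1 x / x)
        = 2 * besselI 1 x * (besselI 0 x - besselI 1 x / x) := by push_cast; ring
    rw [h2] at h
    exact h
  have hq : HasDerivAt (fun y : ℝ => (1 / 2) * y ^ 2) x x := by
    have h := (hasDerivAt_pow 2 x).const_mul (1 / 2 : ℝ)
    have h2 : (1 / 2 : ℝ) * (↑(2:ℕ) * x ^ (2 - 1)) = x := by push_cast; ring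
    rw [h2] at h
    exact h
  have hfull : HasDerivAt
      (fun y : ℝ => (1 / 2) * y ^ 2 * (besselI 1 y ^ 2 - besselI 0 y * besselI 2 y))
      (x * (besselI 1 x ^ 2 - besselI 0 x * besselI 2 x)
        + (1 / 2) * x ^ 2 * (2 * besselI 1 x * (besselI 0 x - besselI 1 x / x)
          - (besselI 1 x * besselI 2 x + besselI 0 x * (besselI 1 x - 2 * besselI 2 x / x)))) x :=
    hq.mul (hsq.sub (h0.mul h2))
  rw [hfull.deriv]
  have key := besselI_two_key x
  field_simp
  linear_combination (-besselI 1 x) * key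
end

section
/- (Turán-type inequality.) For every integer n ≥ 1 and every real x > 0, I_{n−1}(x)·I_{n+1}(x) < I_n(x)². -/
/-!
With `S_n(t) = ∑ₖ tᵏ / (k! (n+k)!)` we have `I_n(x) = (x/2)ⁿ S_n((x/2)²)`, and the Cauchy product
gives `S_u S_v = ∑ₘ C(u+v+2m, u+m) tᵐ / (m! (u+v+m)!)`. The products `S_{n-1} S_{n+1}` and `S_n²`
have the same `u + v = 2n`, so their coefficients differ only in the binomial factor, which is
`C(2N, N-1) < C(2N, N)` (with `N = n + m`). Multiplying by `(x/2)^{2n} > 0` gives the claim.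
-/

open Finset
open scoped Nat

theorem Nat.sum_range_choose_mul_choose_add (m M s : ℕ) :
    ∑ k ∈ range (m + 1), m.choose k * M.choose (s + k) = (m + M).choose (s + m) := by
  -- Reindexing `k ↦ m - k` turns the sum into Vandermonde's convolution along `i + j = s + m`.
  have reflect : ∑ k ∈ range (m + 1), m.choose k * M.choose (s + k)
      = ∑ k ∈ range (m + 1), m.choose k * M.choose (s + m - k) := by
    rw [← sum_range_reflect]
    refine sum_congr rfl fun k hk => ?_
    have hk : k ≤ m := Nat.lt_succ_iff.mp (mem_range.mp hk)
    rw [add_tsub_cancel_right, Nat.choose_symm hk, show s + (m - k) = s + m - k by omega]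
  rw [reflect, Nat.add_choose_eq, Nat.sum_antidiagonal_eq_sum_range_succ_mk]
  refine sum_subset (range_subset_range.2 (by omega)) fun i hi hi' => ?_
  rw [mem_range] at hi hi'
  rw [Nat.choose_eq_zero_of_lt (by omega), zero_mul]

theorem Nat.choose_lt_succ_of_lt_half_left {r n : ℕ} (h : r < n / 2) :
    n.choose r < n.choose (r + 1) := by
  have hsucc := Nat.choose_succ_right_eq n r
  have hpos : 0 < n.choose r := Nat.choose_pos (by omega)
  have hgap : r + 1 < n - r := by omega
  nlinarith

noncomputable def besselTerm (n : ℕ) (t : ℝ) (k : ℕ) : ℝ :=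
  t ^ k / ((k ! : ℝ) * ((n + k)! : ℝ))

noncomputable def besselSeries (n : ℕ) (t : ℝ) : ℝ :=
  ∑' k, besselTerm n t k

theorem besselI_eq_pow_mul_besselSeries (n : ℕ) (x : ℝ) :
    besselI n x = (x / 2) ^ n * besselSeries n ((x / 2) ^ 2) := by
  simp only [besselI, besselSeries, besselTerm, ← pow_mul]

theorem summable_norm_besselTerm (n : ℕ) (t : ℝ) :
    Summable fun k => ‖besselTerm n t k‖ := by
  refine (Real.summable_pow_div_factorial ‖t‖).of_nonneg_of_le (fun _ => norm_nonneg _) fun k => ?_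
  rw [besselTerm, norm_div, norm_pow,
    Real.norm_of_nonneg (by positivity : (0 : ℝ) ≤ k ! * (n + k)!)]
  gcongr
  exact le_mul_of_one_le_right (by positivity) (by exact_mod_cast (n + k).factorial_pos)

theorem besselTerm_mul_besselTerm (u v : ℕ) (t : ℝ) {k m : ℕ} (hk : k ≤ m) :
    besselTerm u t k * besselTerm v t (m - k) =
      (m.choose k * (u + v + m).choose (u + k) : ℕ) * t ^ m / ((m ! : ℝ) * ((u + v + m)! : ℝ)) := by
  have hm : ((m.choose k : ℕ) : ℝ) * k ! * (m - k)! = m ! := by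
    exact_mod_cast Nat.choose_mul_factorial_mul_factorial hk
  have huv : (((u + v + m).choose (u + k) : ℕ) : ℝ) * (u + k)! * (v + (m - k))! =
      (u + v + m)! := by
    have h := Nat.choose_mul_factorial_mul_factorial (show u + k ≤ u + v + m by omega)
    rw [show u + v + m - (u + k) = v + (m - k) by omega] at h
    exact_mod_cast h
  rw [besselTerm, besselTerm, _root_.div_mul_div_comm, ← pow_add, Nat.add_sub_cancel' hk,
    div_eq_div_iff (by positivity) (by positivity), ← hm, ← huv]
  push_cast
  ring

theorem sum_range_besselTerm_mul_besselTerm (u v : ℕ) (t : ℝ) (m : ℕ) :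
    ∑ k ∈ range (m + 1), besselTerm u t k * besselTerm v t (m - k) =
      ((u + v + 2 * m).choose (u + m) : ℕ) * t ^ m / ((m ! : ℝ) * ((u + v + m)! : ℝ)) := by
  rw [sum_congr rfl fun k hk =>
      besselTerm_mul_besselTerm u v t (Nat.lt_succ_iff.mp (mem_range.mp hk)),
    ← sum_div, ← sum_mul, ← Nat.cast_sum, Nat.sum_range_choose_mul_choose_add,
    show m + (u + v + m) = u + v + 2 * m by omega]

theorem hasSum_besselSeries_mul_besselSeries (u v : ℕ) (t : ℝ) :
    HasSum
      (fun m => ((u + v + 2 * m).choose (u + m) : ℕ) * t ^ m / ((m ! : ℝ) * ((u + v + m)! : ℝ)))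
      (besselSeries u t * besselSeries v t) := by
  simpa only [besselSeries, sum_range_besselTerm_mul_besselTerm] using
    hasSum_sum_range_mul_of_summable_norm (summable_norm_besselTerm u t)
      (summable_norm_besselTerm v t)

theorem besselSeries_mul_lt_sq (p : ℕ) {t : ℝ} (ht : 0 ≤ t) :
    besselSeries p t * besselSeries (p + 2) t < besselSeries (p + 1) t ^ 2 := by
  have hoff := hasSum_besselSeries_mul_besselSeries p (p + 2) t
  have hcen := hasSum_besselSeries_mul_besselSeries (p + 1) (p + 1) t
  rw [show p + (p + 2) = 2 * p + 2 by omega] at hoff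
  rw [← sq, show p + 1 + (p + 1) = 2 * p + 2 by omega] at hcen
  have hchoose (m : ℕ) : (2 * p + 2 + 2 * m).choose (p + m) <
      (2 * p + 2 + 2 * m).choose (p + 1 + m) := by
    rw [add_right_comm p 1 m]
    exact Nat.choose_lt_succ_of_lt_half_left (by omega)
  refine hasSum_lt (i := 0) (fun m => ?_) ?_ hoff hcen
  · dsimp only
    gcongr
    exact (hchoose m).le
  · simp only [mul_zero, add_zero, pow_zero, mul_one, Nat.factorial_zero, Nat.cast_one, one_mul]
    gcongr
    exact hchoose 0

/-- Turán-type inequality: for every integer `n ≥ 1` and real `x > 0`,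
`I_{n-1}(x)·I_{n+1}(x) < I_n(x)²`. -/
theorem besselI_turan (n : ℕ) (hn : 1 ≤ n) (x : ℝ) (hx : 0 < x) :
    besselI (n - 1) x * besselI (n + 1) x < besselI n x ^ 2 := by
  obtain ⟨p, rfl⟩ : ∃ p, n = p + 1 := ⟨n - 1, by omega⟩
  have hpow : 0 < (x / 2) ^ (2 * p + 2) := by positivity
  have key := besselSeries_mul_lt_sq p (sq_nonneg (x / 2))
  simp only [besselI_eq_pow_mul_besselSeries, add_tsub_cancel_right]
  calc (x / 2) ^ p * besselSeries p ((x / 2) ^ 2) *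
        ((x / 2) ^ (p + 1 + 1) * besselSeries (p + 1 + 1) ((x / 2) ^ 2))
      = (x / 2) ^ (2 * p + 2) *
          (besselSeries p ((x / 2) ^ 2) * besselSeries (p + 2) ((x / 2) ^ 2)) := by ring
    _ < (x / 2) ^ (2 * p + 2) * besselSeries (p + 1) ((x / 2) ^ 2) ^ 2 :=
        mul_lt_mul_of_pos_left key hpow
    _ = ((x / 2) ^ (p + 1) * besselSeries (p + 1) ((x / 2) ^ 2)) ^ 2 := by ring
end

section
/- (Product series formula.) For all integers m, n ≥ 0 and every real x, I_m(x)·I_n(x) = ∑_{k=0}^∞ [ (m+n+2k)! / ( k! · (m+k)! · (n+k)! · (m+n+k)! ) ] · (x/2)^{m+n+2k}. -/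
open Finset

lemma nat_key (m n k : ℕ) :
    ∑ i ∈ Finset.range (k + 1), k.choose i * (m + n + k).choose (m + i)
      = (m + n + 2 * k).choose (m + k) := by
  have h := Nat.add_choose_eq k (m + n + k) (m + k)
  rw [Finset.Nat.sum_antidiagonal_eq_sum_range_succ_mk] at h
  have h2 : ∑ p ∈ range (m + k + 1), k.choose p * (m + n + k).choose (m + k - p)
      = ∑ p ∈ range (k + 1), k.choose p * (m + n + k).choose (m + k - p) := by
    symm
    apply Finset.sum_subset
    · intro p hp
      simp only [Finset.mem_range] at hp ⊢
      omega
    · intro p hp hnp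
      simp only [Finset.mem_range] at hp hnp
      have : k < p := by omega
      rw [Nat.choose_eq_zero_of_lt this, zero_mul]
  have h3 : ∑ p ∈ range (k + 1),
        k.choose (k - p) * (m + n + k).choose (m + k - (k - p))
      = ∑ p ∈ range (k + 1), k.choose p * (m + n + k).choose (m + k - p) := by
    have := Finset.sum_range_reflect
      (fun p => k.choose p * (m + n + k).choose (m + k - p)) (k + 1)
    simpa using this
  have h4 : ∑ p ∈ range (k + 1),
        k.choose (k - p) * (m + n + k).choose (m + k - (k - p))
      = ∑ i ∈ range (k + 1), k.choose i * (m + n + k).choose (m + i) := by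
    apply Finset.sum_congr rfl
    intro i hi
    simp only [Finset.mem_range] at hi
    have hik : i ≤ k := by omega
    rw [Nat.choose_symm hik]
    have he : m + k - (k - i) = m + i := by omega
    rw [he]
  have hc : k + (m + n + k) = m + n + 2 * k := by omega
  rw [hc] at h
  simp only [Nat.succ_eq_add_one] at h
  rw [← h4, h3, ← h2]
  exact h.symm

lemma real_key (m n k : ℕ) :
    ∑ i ∈ Finset.range (k + 1),
        (1 : ℝ) / ((Nat.factorial i : ℝ) * (Nat.factorial (m + i) : ℝ) *
          (Nat.factorial (k - i) : ℝ) * (Nat.factorial (n + (k - i)) : ℝ))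
      = (Nat.factorial (m + n + 2 * k) : ℝ) /
          ((Nat.factorial k : ℝ) * (Nat.factorial (m + k) : ℝ) *
            (Nat.factorial (n + k) : ℝ) * (Nat.factorial (m + n + k) : ℝ)) := by
  have key : ∑ i ∈ Finset.range (k + 1),
      ((k.choose i : ℝ) * ((m + n + k).choose (m + i) : ℝ))
      = ((m + n + 2 * k).choose (m + k) : ℝ) := by
    exact_mod_cast nat_key m n k
  have step : ∀ i ∈ Finset.range (k + 1),
      (1 : ℝ) / ((Nat.factorial i : ℝ) * (Nat.factorial (m + i) : ℝ) *
          (Nat.factorial (k - i) : ℝ) * (Nat.factorial (n + (k - i)) : ℝ))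
      = ((k.choose i : ℝ) * ((m + n + k).choose (m + i) : ℝ)) /
          ((Nat.factorial k : ℝ) * (Nat.factorial (m + n + k) : ℝ)) := by
    intro i hi
    simp only [Finset.mem_range] at hi
    have hik : i ≤ k := by omega
    have h1 : (k.choose i : ℝ) = (Nat.factorial k : ℝ) /
        ((Nat.factorial i : ℝ) * (Nat.factorial (k - i) : ℝ)) := by
      rw [Nat.cast_choose ℝ hik]
    have hle : m + i ≤ m + n + k := by omega
    have h2 : ((m + n + k).choose (m + i) : ℝ) = (Nat.factorial (m + n + k) : ℝ) /
        ((Nat.factorial (m + i) : ℝ) * (Nat.factorial (n + (k - i)) : ℝ)) := by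
      rw [Nat.cast_choose ℝ hle]
      have he : m + n + k - (m + i) = n + (k - i) := by omega
      rw [he]
    rw [h1, h2]
    have f0 : ∀ a : ℕ, (Nat.factorial a : ℝ) ≠ 0 := fun a => by
      exact_mod_cast (Nat.factorial_pos a).ne'
    field_simp
  rw [Finset.sum_congr rfl step, ← Finset.sum_div, key]
  have hle2 : m + k ≤ m + n + 2 * k := by omega
  rw [Nat.cast_choose ℝ hle2]
  have h3 : m + n + 2 * k - (m + k) = n + k := by omega
  rw [h3]
  rw [div_div]
  congr 1
  ring

lemma summable_aux (m : ℕ) (y : ℝ) :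
    Summable fun i : ℕ =>
      ‖y ^ (2 * i) / ((Nat.factorial i : ℝ) * (Nat.factorial (m + i) : ℝ))‖ := by
  apply Summable.of_nonneg_of_le (fun _ => norm_nonneg _) _
    (Real.summable_pow_div_factorial (y ^ 2))
  intro i
  have h1 : ‖y ^ (2 * i) / ((Nat.factorial i : ℝ) * (Nat.factorial (m + i) : ℝ))‖
      = (y ^ 2) ^ i / ((Nat.factorial i : ℝ) * (Nat.factorial (m + i) : ℝ)) := by
    rw [norm_div, norm_pow, Real.norm_eq_abs, Real.norm_eq_abs, pow_mul, sq_abs,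
      abs_of_nonneg (by positivity : (0:ℝ) ≤ (Nat.factorial i : ℝ) * (Nat.factorial (m + i) : ℝ))]
  rw [h1]
  gcongr
  exact_mod_cast Nat.le_mul_of_pos_right _ (Nat.factorial_pos (m + i))

/-- Product series formula: for all integers `m, n ≥ 0` and every real `x`,
`I_m(x)·I_n(x) = ∑_{k=0}^∞ [(m+n+2k)! / (k!(m+k)!(n+k)!(m+n+k)!)] (x/2)^{m+n+2k}`. -/
theorem besselI_mul_besselI (m n : ℕ) (x : ℝ) :
    besselI m x * besselI n x
      = ∑' k : ℕ, ((Nat.factorial (m + n + 2 * k) : ℝ) /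
          ((Nat.factorial k : ℝ) * (Nat.factorial (m + k) : ℝ) *
            (Nat.factorial (n + k) : ℝ) * (Nat.factorial (m + n + k) : ℝ))) *
          (x / 2) ^ (m + n + 2 * k) := by
  set y := x / 2 with hy
  have hA := summable_aux m y
  have hB := summable_aux n y
  unfold besselI
  rw [show (y ^ m * ∑' k : ℕ, y ^ (2 * k) / ((Nat.factorial k : ℝ) * (Nat.factorial (m + k) : ℝ))) *
        (y ^ n * ∑' k : ℕ, y ^ (2 * k) / ((Nat.factorial k : ℝ) * (Nat.factorial (n + k) : ℝ)))
      = y ^ (m + n) *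
        ((∑' k : ℕ, y ^ (2 * k) / ((Nat.factorial k : ℝ) * (Nat.factorial (m + k) : ℝ))) *
         (∑' k : ℕ, y ^ (2 * k) / ((Nat.factorial k : ℝ) * (Nat.factorial (n + k) : ℝ))))
      from by rw [pow_add]; ring]
  rw [tsum_mul_tsum_eq_tsum_sum_antidiagonal_of_summable_norm hA hB, ← tsum_mul_left]
  apply tsum_congr
  intro k
  rw [Finset.Nat.sum_antidiagonal_eq_sum_range_succ_mk]
  have inner : ∀ i ∈ Finset.range (k + 1),
      y ^ (2 * i) / ((Nat.factorial i : ℝ) * (Nat.factorial (m + i) : ℝ)) *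
        (y ^ (2 * (k - i)) / ((Nat.factorial (k - i) : ℝ) * (Nat.factorial (n + (k - i)) : ℝ)))
      = y ^ (2 * k) *
        ((1 : ℝ) / ((Nat.factorial i : ℝ) * (Nat.factorial (m + i) : ℝ) *
          (Nat.factorial (k - i) : ℝ) * (Nat.factorial (n + (k - i)) : ℝ))) := by
    intro i hi
    simp only [Finset.mem_range] at hi
    have : 2 * i + 2 * (k - i) = 2 * k := by omega
    rw [← this, pow_add]
    ring
  rw [Finset.sum_congr rfl inner, ← Finset.mul_sum, real_key, ← mul_assoc,
    ← pow_add, show m + n + 2 * k = m + n + 2 * k from rfl]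
  ring
end

section
/- (Lemma 4.1, key inequality.) For every real x > 0, 1 − 2·I_1(x)/(x·I_0(x)) − I_1(x)²/I_0(x)² < 0. -/
/-- Key inequality of Lemma 4.1: for every real `x > 0`,
`1 − 2I₁(x)/(xI₀(x)) − I₁(x)²/I₀(x)² < 0`. -/
theorem besselI_lemma41_inequality (x : ℝ) (hx : 0 < x) :
    1 - 2 * besselI 1 x / (x * besselI 0 x) - besselI 1 x ^ 2 / besselI 0 x ^ 2 < 0 := by
  set t : ℝ := x / 2 with ht
  have ht0 : 0 < t := by positivity
  set c : ℝ := t ^ 2 with hc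
  have hc0 : 0 < c := by positivity
  set a : ℕ → ℝ := fun k => c ^ k / ((Nat.factorial k : ℝ) * (Nat.factorial k : ℝ)) with ha
  have hfacpos : ∀ k : ℕ, (0 : ℝ) < (Nat.factorial k : ℝ) := fun k => by
    exact_mod_cast (Nat.factorial_pos k)
  have hfac1 : ∀ k : ℕ, (1 : ℝ) ≤ (Nat.factorial k : ℝ) := fun k => by
    exact_mod_cast Nat.one_le_iff_ne_zero.mpr (Nat.factorial_pos k).ne'
  have hapos : ∀ k, 0 < a k := fun k => by
    have := hfacpos k; rw [ha]; positivity
  set b : ℕ → ℝ := fun k => a k / ((k : ℝ) + 1) with hb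
  have hbpos : ∀ k, 0 < b k := fun k => by
    have := hapos k; rw [hb]; positivity
  set f : ℕ → ℝ := fun k => ((k : ℝ) + 1) * a k with hf
  have hfpos : ∀ k, 0 < f k := fun k => by
    have := hapos k; rw [hf]; positivity
  -- summability
  have hSa : Summable a := by
    refine Summable.of_nonneg_of_le (fun k => (hapos k).le) (fun k => ?_)
      (Real.summable_pow_div_factorial c)
    rw [ha]
    have h1 := hfacpos k
    have h2 : (Nat.factorial k : ℝ) ≤ (Nat.factorial k : ℝ) * (Nat.factorial k : ℝ) :=
      le_mul_of_one_le_left h1.le (hfac1 k)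
    exact div_le_div_of_nonneg_left (by positivity) h1 h2
  have hSb : Summable b := by
    refine Summable.of_nonneg_of_le (fun k => (hbpos k).le) (fun k => ?_) hSa
    rw [hb]
    have := hapos k
    exact div_le_self this.le (le_add_of_nonneg_left (Nat.cast_nonneg k))
  have hSf : Summable f := by
    refine Summable.of_nonneg_of_le (fun k => (hfpos k).le) (fun k => ?_)
      (Real.summable_pow_div_factorial (2 * c))
    simp only [hf, ha]
    rw [mul_pow, mul_div_assoc']
    have h1 := hfacpos k
    have hkle : ((k : ℝ) + 1) ≤ 2 ^ k := by
      have := Nat.lt_two_pow_self (n := k)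
      exact_mod_cast Nat.succ_le_of_lt this
    refine div_le_div₀ (by positivity) ?_ h1 ?_
    · exact mul_le_mul_of_nonneg_right hkle (by positivity)
    · exact le_mul_of_one_le_left h1.le (hfac1 k)
  set A := ∑' k, a k with hA
  set B := ∑' k, b k with hB
  set D := ∑' k, f k with hD
  have hApos : 0 < A := Summable.tsum_pos hSa (fun k => (hapos k).le) 0 (hapos 0)
  have hBpos : 0 < B := Summable.tsum_pos hSb (fun k => (hbpos k).le) 0 (hbpos 0)
  -- identify the Bessel values
  have hI0 : besselI 0 x = A := by
    rw [besselI, hA]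
    simp only [pow_zero, one_mul, Nat.zero_add]
    refine tsum_congr fun k => ?_
    rw [← ht, pow_mul, ← hc]
  have hI1 : besselI 1 x = t * B := by
    rw [besselI, hB, ← ht, pow_one]
    congr 1
    refine tsum_congr fun k => ?_
    have h1 := (hfacpos k).ne'
    rw [pow_mul, ← hc, Nat.add_comm 1 k, Nat.factorial_succ, hb, ha]
    push_cast
    field_simp
  -- D = c * B + A
  have hshift : ∀ k : ℕ, c * b k = ((k : ℝ) + 1) * a (k + 1) := by
    intro k
    have h1 := (hfacpos k).ne'
    have h2 : ((k : ℝ) + 1) ≠ 0 := by positivity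
    simp only [hb, ha, Nat.factorial_succ]
    push_cast
    field_simp
    ring
  have hShift : Summable (fun k : ℕ => ((k : ℝ) + 1) * a (k + 1)) := by
    simp only [← hshift]
    exact hSb.mul_left c
  have hcB : c * B = ∑' k : ℕ, ((k : ℝ) + 1) * a (k + 1) := by
    rw [hB, ← tsum_mul_left]
    exact tsum_congr hshift
  have hDeq : D = c * B + A := by
    rw [hD, Summable.tsum_eq_zero_add hSf, hA, Summable.tsum_eq_zero_add hSa, hcB]
    have hSa' : Summable (fun k : ℕ => a (k + 1)) := (summable_nat_add_iff 1).mpr hSa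
    have : ∑' k : ℕ, f (k + 1) = (∑' k : ℕ, ((k : ℝ) + 1) * a (k + 1)) + ∑' k : ℕ, a (k + 1) := by
      rw [← Summable.tsum_add hShift hSa']
      refine tsum_congr fun k => ?_
      rw [hf]
      push_cast
      ring
    rw [this, hf, ha]
    push_cast
    simp [Nat.factorial]
    ring
  -- key inequality : A^2 < D * B  via double sums
  have hnF : Summable (fun k => ‖f k‖) := summable_norm_iff.mpr hSf
  have hnB : Summable (fun k => ‖b k‖) := summable_norm_iff.mpr hSb
  have hnA : Summable (fun k => ‖a k‖) := summable_norm_iff.mpr hSa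
  set H : ℕ × ℕ → ℝ := fun z => f z.1 * b z.2 - a z.1 * a z.2 with hH
  have hSFb : Summable (fun z : ℕ × ℕ => f z.1 * b z.2) := summable_mul_of_summable_norm hnF hnB
  have hSaa : Summable (fun z : ℕ × ℕ => a z.1 * a z.2) := summable_mul_of_summable_norm hnA hnA
  have hSH : Summable H := hSFb.sub hSaa
  have htsumH : ∑' z, H z = D * B - A * A := by
    rw [hH, Summable.tsum_sub hSFb hSaa, ← tsum_mul_tsum_of_summable_norm hnF hnB,
      ← tsum_mul_tsum_of_summable_norm hnA hnA, ← hD, ← hB, ← hA]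
  have hSHs : Summable (fun z : ℕ × ℕ => H z.swap) := by
    have := (Equiv.prodComm ℕ ℕ).summable_iff.mpr hSH
    exact this
  have htsumHs : ∑' z : ℕ × ℕ, H z.swap = D * B - A * A := by
    rw [← htsumH]
    exact (Equiv.prodComm ℕ ℕ).tsum_eq H
  have hpos : 0 < ∑' z : ℕ × ℕ, (H z + H z.swap) := by
    refine Summable.tsum_pos (hSH.add hSHs) (fun z => ?_) (0, 1) ?_
    · obtain ⟨k, j⟩ := z
      have hp : (0 : ℝ) < (k : ℝ) + 1 := by positivity
      have hq : (0 : ℝ) < (j : ℝ) + 1 := by positivity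
      have hak := hapos k
      have haj := hapos j
      have heq : H (k, j) + H (k, j).swap
          = a k * a j * (((k : ℝ) + 1) - ((j : ℝ) + 1)) ^ 2 / (((k : ℝ) + 1) * ((j : ℝ) + 1)) := by
        simp only [hH, hf, hb, Prod.swap]
        field_simp
        ring
      rw [heq]
      positivity
    · have h01 : H (0, 1) + H (0, 1).swap = c / 2 := by
        simp only [hH, hf, hb, ha, Prod.swap]
        norm_num [Nat.factorial]
        ring
      rw [h01]
      positivity
  have hkey : A ^ 2 < D * B := by
    have := hpos
    rw [Summable.tsum_add hSH hSHs, htsumH, htsumHs] at this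
    nlinarith
  -- conclude
  rw [hI0, hI1]
  have hxt : x = 2 * t := by rw [ht]; ring
  have hEq : 1 - 2 * (t * B) / (x * A) - (t * B) ^ 2 / A ^ 2 = (A ^ 2 - D * B) / A ^ 2 := by
    rw [hxt, hDeq, hc]
    field_simp
    ring
  rw [hEq]
  exact div_neg_of_neg_of_pos (by linarith) (by positivity)
end

section
/- (Lemma 4.3.) For every integer n ≥ 2 and every real x > 0, 1 − 2·I_1(x)/(x·I_0(x)) − I_1(x)·I_{n+1}(x)/(I_0(x)·I_n(x)) > 0. -/
open Finset

namespace Bessel43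

/-- The series term. -/
noncomputable def T (n : ℕ) (u : ℝ) (k : ℕ) : ℝ :=
  u ^ k / ((Nat.factorial k : ℝ) * (Nat.factorial (n + k) : ℝ))

/-- The auxiliary entire function `g_n(u) = ∑ u^k/(k!(n+k)!)`. -/
noncomputable def G (n : ℕ) (u : ℝ) : ℝ := ∑' k : ℕ, T n u k

/-- Closed-form coefficient of the product `G a * G b`. -/
noncomputable def P (a b k : ℕ) : ℝ :=
  (Nat.factorial (a + b + 2 * k) : ℝ) /
    ((Nat.factorial k : ℝ) * (Nat.factorial (a + k) : ℝ) * (Nat.factorial (b + k) : ℝ) *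
      (Nat.factorial (a + b + k) : ℝ))

lemma fact_pos (m : ℕ) : (0 : ℝ) < (Nat.factorial m : ℝ) := by
  exact_mod_cast Nat.factorial_pos m

lemma fact_ne (m : ℕ) : ((Nat.factorial m : ℝ)) ≠ 0 := (fact_pos m).ne'

lemma T_nonneg (n : ℕ) {u : ℝ} (hu : 0 ≤ u) (k : ℕ) : 0 ≤ T n u k := by
  unfold T; positivity

lemma T_le (n : ℕ) {u : ℝ} (hu : 0 ≤ u) (k : ℕ) :
    T n u k ≤ u ^ k / (Nat.factorial k : ℝ) := by
  unfold T
  rw [div_le_div_iff₀ (by positivity) (by positivity)]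
  have h1 : (1 : ℝ) ≤ (Nat.factorial (n + k) : ℝ) := by
    exact_mod_cast Nat.one_le_iff_ne_zero.mpr (Nat.factorial_ne_zero _)
  calc u ^ k * (Nat.factorial k : ℝ)
      = u ^ k * (Nat.factorial k : ℝ) * 1 := by ring
    _ ≤ u ^ k * (Nat.factorial k : ℝ) * (Nat.factorial (n + k) : ℝ) := by
        apply mul_le_mul_of_nonneg_left h1; positivity
    _ = u ^ k * ((Nat.factorial k : ℝ) * (Nat.factorial (n + k) : ℝ)) := by ring

lemma summable_T (n : ℕ) {u : ℝ} (hu : 0 ≤ u) : Summable (T n u) :=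
  Summable.of_nonneg_of_le (T_nonneg n hu) (T_le n hu) (Real.summable_pow_div_factorial u)

lemma summable_T_prod (a b : ℕ) {u : ℝ} (hu : 0 ≤ u) :
    Summable fun x : ℕ × ℕ => T a u x.1 * T b u x.2 := by
  have h : Summable fun x : ℕ × ℕ =>
      (u ^ x.1 / (Nat.factorial x.1 : ℝ)) * (u ^ x.2 / (Nat.factorial x.2 : ℝ)) :=
    (Real.summable_pow_div_factorial u).mul_of_nonneg (Real.summable_pow_div_factorial u)
      (fun k => by positivity) (fun k => by positivity)
  refine Summable.of_nonneg_of_le (fun x => mul_nonneg (T_nonneg a hu _) (T_nonneg b hu _))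
    (fun x => ?_) h
  exact mul_le_mul (T_le a hu _) (T_le b hu _) (T_nonneg b hu _) (by positivity)

/-- Vandermonde identity in the form we need (natural numbers). -/
lemma nat_vdm (a b k : ℕ) :
    ∑ i ∈ range (k + 1), Nat.choose k i * Nat.choose (a + b + k) (a + i)
      = Nat.choose (a + b + 2 * k) (a + k) := by
  have hsub : range (k + 1) ⊆ range (a + k + 1) := by
    apply Finset.range_subset_range.2; omega
  calc ∑ i ∈ range (k + 1), Nat.choose k i * Nat.choose (a + b + k) (a + i)
      = ∑ p ∈ range (k + 1), Nat.choose k p * Nat.choose (a + b + k) (a + k - p) := by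
        rw [← Finset.sum_range_reflect
          (fun p => Nat.choose k p * Nat.choose (a + b + k) (a + k - p)) (k + 1)]
        apply Finset.sum_congr rfl
        intro j hj
        have hjk : j ≤ k := by simpa [Nat.lt_succ_iff] using hj
        have h1 : k + 1 - 1 - j = k - j := by omega
        have h2 : a + k - (k - j) = a + j := by omega
        rw [h1, h2, Nat.choose_symm hjk]
    _ = ∑ p ∈ range (a + k + 1), Nat.choose k p * Nat.choose (a + b + k) (a + k - p) := by
        apply Finset.sum_subset hsub
        intro p hp hnp
        have : k < p := by simp only [Finset.mem_range] at hp hnp; omega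
        simp [Nat.choose_eq_zero_of_lt this]
    _ = ∑ ij ∈ Finset.HasAntidiagonal.antidiagonal (a + k),
          Nat.choose k ij.1 * Nat.choose (a + b + k) ij.2 := by
        rw [Finset.Nat.sum_antidiagonal_eq_sum_range_succ_mk]
    _ = Nat.choose (k + (a + b + k)) (a + k) := (Nat.add_choose_eq _ _ _).symm
    _ = Nat.choose (a + b + 2 * k) (a + k) := by congr 1; omega

/-- The real-number convolution identity. -/
lemma conv_eq (a b k : ℕ) :
    ∑ i ∈ range (k + 1),
        (1 / ((Nat.factorial i : ℝ) * (Nat.factorial (a + i) : ℝ))) *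
          (1 / ((Nat.factorial (k - i) : ℝ) * (Nat.factorial (b + (k - i)) : ℝ)))
      = P a b k := by
  have key : ∀ i ∈ range (k + 1),
      (1 / ((Nat.factorial i : ℝ) * (Nat.factorial (a + i) : ℝ))) *
          (1 / ((Nat.factorial (k - i) : ℝ) * (Nat.factorial (b + (k - i)) : ℝ)))
        = ((Nat.choose k i * Nat.choose (a + b + k) (a + i) : ℕ) : ℝ) /
            ((Nat.factorial k : ℝ) * (Nat.factorial (a + b + k) : ℝ)) := by
    intro i hi
    have hik : i ≤ k := by simpa [Nat.lt_succ_iff] using hi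
    have h1 : (Nat.choose k i : ℝ) = (Nat.factorial k : ℝ) /
        ((Nat.factorial i : ℝ) * (Nat.factorial (k - i) : ℝ)) := by
      exact_mod_cast Nat.cast_choose ℝ hik
    have hle2 : a + i ≤ a + b + k := by omega
    have h2 : (Nat.choose (a + b + k) (a + i) : ℝ) = (Nat.factorial (a + b + k) : ℝ) /
        ((Nat.factorial (a + i) : ℝ) * (Nat.factorial (a + b + k - (a + i)) : ℝ)) := by
      exact_mod_cast Nat.cast_choose ℝ hle2
    have h3 : a + b + k - (a + i) = b + (k - i) := by omega
    rw [h3] at h2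
    push_cast
    rw [h1, h2]
    field_simp
  rw [Finset.sum_congr rfl key, ← Finset.sum_div, ← Nat.cast_sum, nat_vdm a b k]
  have hle : a + k ≤ a + b + 2 * k := by omega
  have h4 : (Nat.choose (a + b + 2 * k) (a + k) : ℝ) = (Nat.factorial (a + b + 2 * k) : ℝ) /
      ((Nat.factorial (a + k) : ℝ) * (Nat.factorial (a + b + 2 * k - (a + k)) : ℝ)) := by
    exact_mod_cast Nat.cast_choose ℝ hle
  have h5 : a + b + 2 * k - (a + k) = b + k := by omega
  rw [h4, h5]
  unfold P
  rw [div_div]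
  congr 1
  ring

lemma inner_sum_eq (a b : ℕ) {u : ℝ} (hu : 0 ≤ u) (k : ℕ) :
    ∑ i ∈ range (k + 1), T a u i * T b u (k - i) = u ^ k * P a b k := by
  rw [← conv_eq a b k, Finset.mul_sum]
  apply Finset.sum_congr rfl
  intro i hi
  have hik : i ≤ k := by simpa [Nat.lt_succ_iff] using hi
  have hpow : u ^ i * u ^ (k - i) = u ^ k := by
    rw [← pow_add]; congr 1; omega
  have hT : T a u i * T b u (k - i)
      = u ^ k / (((Nat.factorial i : ℝ) * (Nat.factorial (a + i) : ℝ)) *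
          ((Nat.factorial (k - i) : ℝ) * (Nat.factorial (b + (k - i)) : ℝ))) := by
    unfold T
    rw [div_mul_div_comm, hpow]
  rw [hT, one_div_mul_one_div, mul_one_div]

lemma G_mul (a b : ℕ) {u : ℝ} (hu : 0 ≤ u) :
    G a u * G b u = ∑' k : ℕ, u ^ k * P a b k := by
  unfold G
  rw [Summable.tsum_mul_tsum_eq_tsum_sum_range (summable_T a hu) (summable_T b hu)
    (summable_T_prod a b hu)]
  exact tsum_congr fun k => inner_sum_eq a b hu k

lemma summable_uP (a b : ℕ) {u : ℝ} (hu : 0 ≤ u) :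
    Summable (fun k => u ^ k * P a b k) := by
  have h := summable_sum_mul_range_of_summable_mul (summable_T_prod a b hu)
  exact h.congr fun k => inner_sum_eq a b hu k

lemma P_pos (a b k : ℕ) : 0 < P a b k := by
  unfold P
  positivity

/-- Coefficient identity: `P 1 n (k+1)` in terms of `P 0 n (k+1)`. -/
lemma P1n_eq (n k : ℕ) :
    P 1 n (k + 1) = P 0 n (k + 1) *
      (((n : ℝ) + 2 * k + 3) / (((k : ℝ) + 2) * ((n : ℝ) + k + 2))) := by
  unfold P
  have i1 : 1 + n + 2 * (k + 1) = (n + 2 * k + 2) + 1 := by omega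
  have i2 : 0 + n + 2 * (k + 1) = n + 2 * k + 2 := by omega
  have i3 : 1 + (k + 1) = (k + 1) + 1 := by omega
  have i4 : 0 + (k + 1) = k + 1 := by omega
  have i5 : n + (k + 1) = n + k + 1 := by omega
  have i6 : 1 + n + (k + 1) = (n + k + 1) + 1 := by omega
  have i7 : 0 + n + (k + 1) = n + k + 1 := by omega
  rw [i1, i2, i3, i4, i5, i6, i7, Nat.factorial_succ (n + 2 * k + 2),
    Nat.factorial_succ (k + 1), Nat.factorial_succ (n + k + 1)]
  push_cast
  field_simp
  ring

lemma P1n1_eq (n k : ℕ) :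
    P 1 (n + 1) k = P 0 n (k + 1) * (((k : ℝ) + 1) / ((n : ℝ) + k + 2)) := by
  unfold P
  have j1 : 1 + (n + 1) + 2 * k = n + 2 * k + 2 := by omega
  have j2 : 1 + k = k + 1 := by omega
  have j3 : (n + 1) + k = n + k + 1 := by omega
  have j4 : 1 + (n + 1) + k = (n + k + 1) + 1 := by omega
  have i2 : 0 + n + 2 * (k + 1) = n + 2 * k + 2 := by omega
  have i4 : 0 + (k + 1) = k + 1 := by omega
  have i5 : n + (k + 1) = n + k + 1 := by omega
  have i7 : 0 + n + (k + 1) = n + k + 1 := by omega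
  rw [j1, j2, j3, j4, i2, i4, i5, i7, Nat.factorial_succ (n + k + 1),
    Nat.factorial_succ k]
  push_cast
  field_simp
  ring

lemma key_pos (n k : ℕ) (hn : 2 ≤ n) :
    0 < P 0 n (k + 1) - P 1 n (k + 1) - P 1 (n + 1) k := by
  rw [P1n_eq, P1n1_eq]
  have hP := P_pos 0 n (k + 1)
  have h1 : (0 : ℝ) < (k : ℝ) + 2 := by positivity
  have h2 : (0 : ℝ) < (n : ℝ) + k + 2 := by positivity
  have key : ((n : ℝ) + 2 * k + 3) / (((k : ℝ) + 2) * ((n : ℝ) + k + 2))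
      + ((k : ℝ) + 1) / ((n : ℝ) + k + 2) < 1 := by
    rw [div_add_div _ _ (by positivity) h2.ne', div_lt_one (by positivity)]
    have hn' : (2 : ℝ) ≤ (n : ℝ) := by exact_mod_cast hn
    have hk : (0 : ℝ) ≤ (k : ℝ) := Nat.cast_nonneg k
    nlinarith [mul_pos h2 (mul_pos (show (0:ℝ) < (k:ℝ) + 1 by positivity)
      (show (0:ℝ) < (n:ℝ) - 1 by linarith))]
  nlinarith

lemma P0_eq_P1_zero (n : ℕ) : P 0 n 0 = P 1 n 0 := by
  unfold P
  simp only [Nat.mul_zero, Nat.add_zero, Nat.zero_add, Nat.factorial_zero, Nat.factorial_one,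
    Nat.cast_one, one_mul, mul_one]
  rw [div_eq_div_iff (by positivity) (by positivity)]
  ring

lemma G_pos (n : ℕ) {u : ℝ} (hu : 0 ≤ u) : 0 < G n u := by
  have h0 : 0 < T n u 0 := by
    unfold T
    simp only [pow_zero]
    positivity
  exact Summable.tsum_pos (summable_T n hu) (T_nonneg n hu) 0 h0

/-- The main positivity of `D = G₀Gₙ − G₁Gₙ − u G₁ G_{n+1}`. -/
lemma D_pos (n : ℕ) (hn : 2 ≤ n) {u : ℝ} (hu : 0 < u) :
    0 < G 0 u * G n u - G 1 u * G n u - u * (G 1 u * G (n + 1) u) := by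
  have hu' : 0 ≤ u := hu.le
  rw [G_mul 0 n hu', G_mul 1 n hu', G_mul 1 (n + 1) hu']
  have s0 := summable_uP 0 n hu'
  have s1 := summable_uP 1 n hu'
  have s2 := summable_uP 1 (n + 1) hu'
  rw [← Summable.tsum_sub s0 s1, ← tsum_mul_left]
  have hsub : Summable fun k => u ^ k * P 0 n k - u ^ k * P 1 n k := s0.sub s1
  have hzero : u ^ 0 * P 0 n 0 - u ^ 0 * P 1 n 0 = 0 := by
    rw [P0_eq_P1_zero]; ring
  rw [Summable.tsum_eq_zero_add hsub, hzero, zero_add]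
  have hshift : Summable fun k => u ^ (k + 1) * P 0 n (k + 1) - u ^ (k + 1) * P 1 n (k + 1) :=
    (summable_nat_add_iff 1).2 hsub
  have hsm : Summable fun k : ℕ => u * (u ^ k * P 1 (n + 1) k) := s2.mul_left u
  rw [← Summable.tsum_sub hshift hsm]
  have hterm : ∀ k : ℕ, 0 < (u ^ (k + 1) * P 0 n (k + 1) - u ^ (k + 1) * P 1 n (k + 1))
      - u * (u ^ k * P 1 (n + 1) k) := by
    intro k
    have h := key_pos n k hn
    have hup : 0 < u ^ (k + 1) := pow_pos hu _
    have he : u * (u ^ k * P 1 (n + 1) k) = u ^ (k + 1) * P 1 (n + 1) k := by ring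
    rw [he]
    nlinarith
  exact Summable.tsum_pos (hshift.sub hsm) (fun k => (hterm k).le) 0 (hterm 0)

lemma besselI_eq (n : ℕ) (x : ℝ) : besselI n x = (x / 2) ^ n * G n ((x / 2) ^ 2) := by
  unfold besselI G T
  congr 1
  apply tsum_congr
  intro k
  rw [← pow_mul]

lemma besselI_pos (n : ℕ) {x : ℝ} (hx : 0 < x) : 0 < besselI n x := by
  rw [besselI_eq]
  have h1 : 0 < (x / 2) ^ n := by positivity
  have h2 : (0 : ℝ) ≤ (x / 2) ^ 2 := sq_nonneg _
  exact mul_pos h1 (G_pos n h2)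

end Bessel43

/-- Lemma 4.3: for every integer `n ≥ 2` and real `x > 0`,
`1 − 2I₁(x)/(xI₀(x)) − I₁(x)I_{n+1}(x)/(I₀(x)I_n(x)) > 0`. -/
theorem besselI_lemma43 (n : ℕ) (hn : 2 ≤ n) (x : ℝ) (hx : 0 < x) :
    1 - 2 * besselI 1 x / (x * besselI 0 x)
      - besselI 1 x * besselI (n + 1) x / (besselI 0 x * besselI n x) > 0 := by
  have hI0 := Bessel43.besselI_pos 0 hx
  have hI1 := Bessel43.besselI_pos 1 hx
  have hIn := Bessel43.besselI_pos n hx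
  have hIn1 := Bessel43.besselI_pos (n + 1) hx
  set t : ℝ := x / 2 with ht
  have htpos : 0 < t := by positivity
  have hupos : 0 < t ^ 2 := by positivity
  set u : ℝ := t ^ 2 with hu
  have hT : 0 < x * besselI 0 x * besselI n x - 2 * besselI 1 x * besselI n x
      - x * besselI 1 x * besselI (n + 1) x := by
    have hD := Bessel43.D_pos n hn hupos
    rw [Bessel43.besselI_eq 0, Bessel43.besselI_eq 1, Bessel43.besselI_eq n,
        Bessel43.besselI_eq (n + 1), ← ht, ← hu]
    have hx2 : x = 2 * t := by rw [ht]; ring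
    rw [hx2]
    have expand : 2 * t * (t ^ 0 * Bessel43.G 0 u * (t ^ n * Bessel43.G n u))
        - 2 * (t ^ 1 * Bessel43.G 1 u * (t ^ n * Bessel43.G n u))
        - 2 * t * (t ^ 1 * Bessel43.G 1 u * (t ^ (n + 1) * Bessel43.G (n + 1) u))
        = 2 * t ^ (n + 1) * (Bessel43.G 0 u * Bessel43.G n u - Bessel43.G 1 u * Bessel43.G n u
            - u * (Bessel43.G 1 u * Bessel43.G (n + 1) u)) := by
      rw [hu]; ring
    calc (0 : ℝ) < 2 * t ^ (n + 1) * (Bessel43.G 0 u * Bessel43.G n u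
          - Bessel43.G 1 u * Bessel43.G n u
          - u * (Bessel43.G 1 u * Bessel43.G (n + 1) u)) := by positivity
      _ = _ := by rw [← expand]; ring
  have heq : 1 - 2 * besselI 1 x / (x * besselI 0 x)
      - besselI 1 x * besselI (n + 1) x / (besselI 0 x * besselI n x)
      = (x * besselI 0 x * besselI n x - 2 * besselI 1 x * besselI n x
          - x * besselI 1 x * besselI (n + 1) x) / (x * besselI 0 x * besselI n x) := by
    field_simp
  rw [gt_iff_lt, heq]
  positivity
end

section
/- For every integer n ≥ 2 and every real x > 0, (n+2)·x·I_{n+1}(x)/I_n(x) − (n−1)·x·I_{n+2}(x)/I_{n+1}(x) − 3·x·I_0(x)/I_1(x) + 6 < 0. -/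
namespace BesselAux
open Finset



/-- the k-th term of the series for order n -/
noncomputable def bterm (n : ℕ) (x : ℝ) (k : ℕ) : ℝ :=
  (x / 2) ^ (2 * k) / ((Nat.factorial k : ℝ) * (Nat.factorial (n + k) : ℝ))

lemma bterm_nonneg (n : ℕ) (x : ℝ) (k : ℕ) : 0 ≤ bterm n x k := by
  unfold bterm
  apply div_nonneg
  · rw [pow_mul]; positivity
  · positivity

lemma bterm_pos (n : ℕ) {x : ℝ} (hx : 0 < x) (k : ℕ) : 0 < bterm n x k := by
  unfold bterm
  apply div_pos
  · rw [pow_mul]; positivity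
  · positivity

lemma summable_bterm (n : ℕ) (x : ℝ) : Summable (bterm n x) := by
  apply Summable.of_nonneg_of_le (bterm_nonneg n x) (fun k => ?_)
    (Real.summable_pow_div_factorial ((x/2)^2))
  unfold bterm
  rw [pow_mul]
  have h1 : (Nat.factorial k : ℝ) ≤ (Nat.factorial k : ℝ) * (Nat.factorial (n+k) : ℝ) := by
    have a1 : (1:ℝ) ≤ (Nat.factorial (n+k) : ℝ) := Nat.one_le_cast.2 (Nat.one_le_iff_ne_zero.2 (Nat.factorial_ne_zero (n+k)))
    have a2 : (0:ℝ) < (Nat.factorial k : ℝ) := Nat.cast_pos.2 (Nat.factorial_pos k)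
    nlinarith
  exact div_le_div_of_nonneg_left (by positivity) (by positivity) h1

lemma besselI_eq (n : ℕ) (x : ℝ) : besselI n x = (x/2)^n * ∑' k, bterm n x k := rfl

lemma besselI_pos (n : ℕ) {x : ℝ} (hx : 0 < x) : 0 < besselI n x := by
  rw [besselI_eq]
  have : 0 < ∑' k, bterm n x k :=
    Summable.tsum_pos (summable_bterm n x) (bterm_nonneg n x) 0 (bterm_pos n hx 0)
  positivity




/-- shifted identity: (k+1) * bterm (n+1) x (k+1) = (x/2)^2 * bterm (n+2) x k -/
lemma bterm_shift (n : ℕ) (x : ℝ) (k : ℕ) :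
    ((k:ℝ)+1) * bterm (n+1) x (k+1) = (x/2)^2 * bterm (n+2) x k := by
  unfold bterm
  have e1 : n + 1 + (k + 1) = n + 2 + k := by omega
  rw [e1]
  have e2 : 2 * (k+1) = 2*k + 2 := by ring
  rw [e2, pow_add]
  rw [Nat.factorial_succ]
  push_cast
  have hk : ((Nat.factorial k : ℝ)) ≠ 0 := Nat.cast_ne_zero.2 (Nat.factorial_ne_zero k)
  have hnk : ((Nat.factorial (n+2+k) : ℝ)) ≠ 0 := Nat.cast_ne_zero.2 (Nat.factorial_ne_zero _)
  field_simp

/-- per-k: bterm n x k = k * bterm (n+1) x k + (n+1) * bterm (n+1) x k -/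
lemma bterm_split (n : ℕ) (x : ℝ) (k : ℕ) :
    bterm n x k = (k:ℝ) * bterm (n+1) x k + ((n:ℝ)+1) * bterm (n+1) x k := by
  unfold bterm
  have e1 : n + 1 + k = (n + k) + 1 := by omega
  rw [e1, Nat.factorial_succ]
  push_cast
  have hk : ((Nat.factorial k : ℝ)) ≠ 0 := Nat.cast_ne_zero.2 (Nat.factorial_ne_zero k)
  have hnk : ((Nat.factorial (n+k) : ℝ)) ≠ 0 := Nat.cast_ne_zero.2 (Nat.factorial_ne_zero _)
  field_simp
  ring

lemma summable_g (n : ℕ) (x : ℝ) : Summable (fun k : ℕ => (k:ℝ) * bterm (n+1) x k) := by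
  rw [← summable_nat_add_iff 1]
  have : (fun k => ((k+1 : ℕ):ℝ) * bterm (n+1) x (k+1)) = fun k => (x/2)^2 * bterm (n+2) x k := by
    funext k
    push_cast
    exact bterm_shift n x k
  rw [this]
  exact (summable_bterm (n+2) x).mul_left _

lemma tsum_g (n : ℕ) (x : ℝ) :
    ∑' k : ℕ, (k:ℝ) * bterm (n+1) x k = (x/2)^2 * ∑' k, bterm (n+2) x k := by
  rw [Summable.tsum_eq_zero_add (summable_g n x)]
  simp only [Nat.cast_zero, zero_mul, zero_add]
  rw [show (fun k : ℕ => ((k+1 : ℕ):ℝ) * bterm (n+1) x (k+1)) = fun k => (x/2)^2 * bterm (n+2) x k by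
    funext k; push_cast; exact bterm_shift n x k]
  exact tsum_mul_left

lemma tsum_split (n : ℕ) (x : ℝ) :
    ∑' k, bterm n x k = (x/2)^2 * (∑' k, bterm (n+2) x k) + ((n:ℝ)+1) * ∑' k, bterm (n+1) x k := by
  calc ∑' k, bterm n x k = ∑' k : ℕ, ((k:ℝ) * bterm (n+1) x k + ((n:ℝ)+1) * bterm (n+1) x k) := by
        exact tsum_congr (bterm_split n x)
    _ = (∑' k : ℕ, (k:ℝ) * bterm (n+1) x k) + ∑' k, ((n:ℝ)+1) * bterm (n+1) x k := by
        exact Summable.tsum_add (summable_g n x) ((summable_bterm (n+1) x).mul_left _)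
    _ = (x/2)^2 * (∑' k, bterm (n+2) x k) + ((n:ℝ)+1) * ∑' k, bterm (n+1) x k := by
        rw [tsum_g, tsum_mul_left]

/-- The three-term recurrence. -/
lemma besselI_rec (n : ℕ) (x : ℝ) :
    x * besselI n x = x * besselI (n+2) x + (2*((n:ℝ)+1)) * besselI (n+1) x := by
  rw [besselI_eq, besselI_eq, besselI_eq, tsum_split n x]
  ring


/-- Cauchy coefficient -/
noncomputable def cc (a b M : ℕ) : ℝ :=
  ∑ j ∈ range (M+1), 1 / ((Nat.factorial j : ℝ) * (Nat.factorial (a+j)) *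
      (Nat.factorial (M-j)) * (Nat.factorial (b+(M-j))))

/-- Vandermonde corollary -/
lemma vand (a b M : ℕ) :
    ∑ j ∈ range (M+1), (M.choose j) * ((a+b+M).choose (a+j)) = (a+b+2*M).choose (a+M) := by
  have h := Nat.add_choose_eq M (a+b+M) (a+M)
  rw [Finset.Nat.sum_antidiagonal_eq_sum_range_succ (fun i j => M.choose i * (a+b+M).choose j)]
    at h
  have e : a + b + 2*M = M + (a+b+M) := by ring
  rw [e, h, Nat.succ_eq_add_one]
  rw [show a + M + 1 = (M+1) + a by ring]
  conv_rhs => rw [Finset.sum_range_add]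
  have h2 : ∀ i ∈ range a, M.choose (M + 1 + i) * (a+b+M).choose (a+M - (M+1+i)) = 0 := by
    intro i _
    rw [Nat.choose_eq_zero_of_lt (by omega), zero_mul]
  rw [Finset.sum_congr rfl h2, Finset.sum_const, smul_zero, add_zero]
  rw [← Finset.sum_range_reflect]
  apply Finset.sum_congr rfl
  intro j hj
  rw [Finset.mem_range] at hj
  have h3 : M + 1 - 1 - j = M - j := by omega
  rw [h3, Nat.choose_symm (by omega)]
  rw [show a + (M-j) = a + M - j by omega]

/-- closed form for the Cauchy coefficient -/
lemma cc_eq (a b M : ℕ) :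
    cc a b M = (Nat.factorial (a+b+2*M) : ℝ) /
      ((Nat.factorial M) * (Nat.factorial (a+M)) * (Nat.factorial (b+M)) *
        (Nat.factorial (a+b+M))) := by
  have fne : ∀ m : ℕ, (Nat.factorial m : ℝ) ≠ 0 :=
    fun m => Nat.cast_ne_zero.2 (Nat.factorial_ne_zero m)
  have key : ∀ j ∈ range (M+1),
      1 / ((Nat.factorial j : ℝ) * (Nat.factorial (a+j)) * (Nat.factorial (M-j)) *
        (Nat.factorial (b+(M-j)))) =
      ((M.choose j : ℝ) * ((a+b+M).choose (a+j))) /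
        ((Nat.factorial M) * (Nat.factorial (a+b+M))) := by
    intro j hj
    rw [Finset.mem_range] at hj
    have hjM : j ≤ M := by omega
    have c1 : ((M.choose j : ℝ)) * (Nat.factorial j) * (Nat.factorial (M-j)) =
        Nat.factorial M := by
      exact_mod_cast congrArg (Nat.cast : ℕ → ℝ) (Nat.choose_mul_factorial_mul_factorial hjM)
    have c2 : (((a+b+M).choose (a+j) : ℝ)) * (Nat.factorial (a+j)) * (Nat.factorial (b+(M-j))) =
        Nat.factorial (a+b+M) := by
      have e : b + (M - j) = (a+b+M) - (a+j) := by omega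
      rw [e]
      exact_mod_cast congrArg (Nat.cast : ℕ → ℝ)
        (Nat.choose_mul_factorial_mul_factorial (show a+j ≤ a+b+M by omega))
    rw [div_eq_div_iff (by exact mul_ne_zero (mul_ne_zero (mul_ne_zero (fne _) (fne _)) (fne _)) (fne _))
      (mul_ne_zero (fne _) (fne _))]
    rw [← c1, ← c2]
    ring
  rw [cc, Finset.sum_congr rfl key, ← Finset.sum_div]
  have v' : (∑ j ∈ range (M+1), (M.choose j : ℝ) * ((a+b+M).choose (a+j))) =
      (((a+b+2*M).choose (a+M) : ℕ) : ℝ) := by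
    rw [← vand a b M]
    push_cast
    ring
  rw [v']
  have c3 : (((a+b+2*M).choose (a+M) : ℝ)) * (Nat.factorial (a+M)) * (Nat.factorial (b+M)) =
      Nat.factorial (a+b+2*M) := by
    have e : b + M = (a+b+2*M) - (a+M) := by omega
    rw [e]
    exact_mod_cast congrArg (Nat.cast : ℕ → ℝ)
      (Nat.choose_mul_factorial_mul_factorial (show a+M ≤ a+b+2*M by omega))
  have fne4 : ((Nat.factorial M : ℝ) * (Nat.factorial (a+M)) * (Nat.factorial (b+M)) *
      (Nat.factorial (a+b+M))) ≠ 0 :=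
    mul_ne_zero (mul_ne_zero (mul_ne_zero (fne _) (fne _)) (fne _)) (fne _)
  rw [div_eq_div_iff (mul_ne_zero (fne _) (fne _)) fne4, ← c3]
  ring


set_option maxHeartbeats 2000000 in
lemma keyM (n M : ℕ) :
    2 * cc (n+1) (n+1) M + (2*(n:ℝ)+1) * cc n (n+1) (M+1) ≤ 2 * cc n n (M+1) := by
  rw [cc_eq, cc_eq, cc_eq]
  rw [show (n+1)+(n+1)+2*M = 2*n+2*M+2 by ring, show (n+1)+M = n+M+1 by ring,
      show (n+1)+(n+1)+M = 2*n+M+2 by ring,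
      show n+(n+1)+2*(M+1) = 2*n+2*M+3 by ring, show n+(M+1) = n+M+1 by ring,
      show (n+1)+(M+1) = n+M+2 by ring, show n+(n+1)+(M+1) = 2*n+M+2 by ring,
      show n+n+2*(M+1) = 2*n+2*M+2 by ring, show n+n+(M+1) = 2*n+M+1 by ring]
  set A : ℝ := (Nat.factorial (2*n+2*M+2) : ℝ) with hA
  set B : ℝ := (Nat.factorial (n+M+1) : ℝ) with hB
  set Cm : ℝ := (Nat.factorial M : ℝ) with hCm
  set E : ℝ := (Nat.factorial (2*n+M+1) : ℝ) with hE
  have fpos : ∀ m : ℕ, (0:ℝ) < (Nat.factorial m : ℝ) :=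
    fun m => Nat.cast_pos.2 (Nat.factorial_pos m)
  have hApos : 0 < A := fpos _
  have hBpos : 0 < B := fpos _
  have hCpos : 0 < Cm := fpos _
  have hEpos : 0 < E := fpos _
  have r1 : (Nat.factorial (2*n+2*M+3) : ℝ) = (2*(n:ℝ)+2*M+3) * A := by
    rw [show 2*n+2*M+3 = (2*n+2*M+2)+1 by ring, Nat.factorial_succ]
    push_cast [hA]; ring
  have r2 : (Nat.factorial (M+1) : ℝ) = ((M:ℝ)+1) * Cm := by
    rw [Nat.factorial_succ]; push_cast [hCm]; ring
  have r3 : (Nat.factorial (n+M+2) : ℝ) = ((n:ℝ)+M+2) * B := by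
    rw [show n+M+2 = (n+M+1)+1 by ring, Nat.factorial_succ]; push_cast [hB]; ring
  have r4 : (Nat.factorial (2*n+M+2) : ℝ) = (2*(n:ℝ)+M+2) * E := by
    rw [show 2*n+M+2 = (2*n+M+1)+1 by ring, Nat.factorial_succ]; push_cast [hE]; ring
  rw [r1, r2, r3, r4]
  set P : ℝ := ((M:ℝ)+1) * Cm * B^2 * E * (2*(n:ℝ)+M+2) * ((n:ℝ)+M+2) with hP
  have hPpos : 0 < P := by
    have h1 : (0:ℝ) < (M:ℝ)+1 := by positivity
    have h2 : (0:ℝ) < 2*(n:ℝ)+M+2 := by positivity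
    have h3 : (0:ℝ) < (n:ℝ)+M+2 := by positivity
    positivity
  have t1 : 2 * (A / (Cm * B * B * ((2*(n:ℝ)+M+2) * E))) = (2*((M:ℝ)+1)*((n:ℝ)+M+2)) * A / P := by
    rw [hP]; field_simp
  have t2 : (2*(n:ℝ)+1) * ((2*(n:ℝ)+2*M+3) * A / (((M:ℝ)+1)*Cm * B * (((n:ℝ)+M+2)*B) * ((2*(n:ℝ)+M+2)*E)))
      = ((2*(n:ℝ)+1)*(2*(n:ℝ)+2*M+3)) * A / P := by
    rw [hP]; field_simp
  have t3 : 2 * (A / (((M:ℝ)+1)*Cm * B * B * E)) = (2*(2*(n:ℝ)+M+2)*((n:ℝ)+M+2)) * A / P := by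
    rw [hP]; field_simp
  calc 2 * (A / (Cm * B * B * ((2*(n:ℝ)+M+2) * E)))
        + (2*(n:ℝ)+1) * ((2*(n:ℝ)+2*M+3) * A / (((M:ℝ)+1)*Cm * B * (((n:ℝ)+M+2)*B) * ((2*(n:ℝ)+M+2)*E)))
      = ((2*((M:ℝ)+1)*((n:ℝ)+M+2)) * A + ((2*(n:ℝ)+1)*(2*(n:ℝ)+2*M+3)) * A) / P := by
        rw [t1, t2, add_div]
    _ ≤ (2*(2*(n:ℝ)+M+2)*((n:ℝ)+M+2)) * A / P := by
        apply (div_le_div_iff_of_pos_right hPpos).2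
        have hc : 2*((M:ℝ)+1)*((n:ℝ)+M+2) + (2*(n:ℝ)+1)*(2*(n:ℝ)+2*M+3)
            ≤ 2*(2*(n:ℝ)+M+2)*((n:ℝ)+M+2) := by
          have hn : (0:ℝ) ≤ (n:ℝ) := Nat.cast_nonneg n
          nlinarith
        nlinarith [hApos.le, mul_le_mul_of_nonneg_right hc hApos.le]
    _ = 2 * (A / (((M:ℝ)+1)*Cm * B * B * E)) := t3.symm

lemma summable_norm_bterm (n : ℕ) (x : ℝ) : Summable (fun k => ‖bterm n x k‖) := by
  have : (fun k => ‖bterm n x k‖) = bterm n x := by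
    funext k; exact Real.norm_of_nonneg (bterm_nonneg n x k)
  rw [this]; exact summable_bterm n x

lemma range_sum_eq (a b : ℕ) (x : ℝ) (M : ℕ) :
    ∑ j ∈ range (M+1), bterm a x j * bterm b x (M - j) = ((x/2)^2)^M * cc a b M := by
  rw [cc, Finset.mul_sum]
  apply Finset.sum_congr rfl
  intro j hj
  rw [Finset.mem_range] at hj
  unfold bterm
  rw [div_mul_div_comm, ← pow_add, show 2*j + 2*(M-j) = 2*M by omega, ← pow_mul, mul_one_div]
  congr 1
  push_cast
  ring

lemma cauchy (a b : ℕ) (x : ℝ) :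
    (∑' k, bterm a x k) * (∑' k, bterm b x k) = ∑' M, ((x/2)^2)^M * cc a b M := by
  rw [tsum_mul_tsum_eq_tsum_sum_range_of_summable_norm (summable_norm_bterm a x)
    (summable_norm_bterm b x)]
  exact tsum_congr (range_sum_eq a b x)

lemma summable_coeff (a b : ℕ) (x : ℝ) : Summable (fun M => ((x/2)^2)^M * cc a b M) := by
  have h := summable_sum_mul_range_of_summable_norm' (summable_norm_bterm a x)
    (summable_bterm a x) (summable_norm_bterm b x) (summable_bterm b x)
  have e : (fun M => ∑ j ∈ range (M+1), bterm a x j * bterm b x (M - j))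
      = fun M => ((x/2)^2)^M * cc a b M := by
    funext M; exact range_sum_eq a b x M
  rwa [e] at h

/-- shifted coefficient function -/
noncomputable def dd (n : ℕ) : ℕ → ℝ
  | 0 => 0
  | (M+1) => cc (n+1) (n+1) M

lemma key0 (n : ℕ) : (2*(n:ℝ)+1) * cc n (n+1) 0 ≤ 2 * cc n n 0 := by
  rw [cc_eq, cc_eq]
  simp only [Nat.mul_zero, Nat.add_zero, Nat.factorial_zero]
  have fpos : ∀ m : ℕ, (0:ℝ) < (Nat.factorial m : ℝ) :=
    fun m => Nat.cast_pos.2 (Nat.factorial_pos m)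
  have r1 : (Nat.factorial (n+(n+1)) : ℝ) = (Nat.factorial (n+n)) * (2*(n:ℝ)+1) := by
    rw [show n+(n+1) = (n+n)+1 by ring, Nat.factorial_succ]; push_cast; ring
  have r2 : (Nat.factorial (n+1) : ℝ) = ((n:ℝ)+1) * (Nat.factorial n) := by
    rw [Nat.factorial_succ]; push_cast; ring
  rw [r1, r2]
  have h1 := fpos n
  have h2 := fpos (n+n)
  have hn : (0:ℝ) ≤ (n:ℝ) := Nat.cast_nonneg n
  rw [mul_div_assoc', mul_div_assoc', div_le_div_iff₀ (by positivity) (by positivity)]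
  have hff : (0:ℝ) < (Nat.factorial n : ℝ) * (Nat.factorial n) * ((Nat.factorial (n+n)) * (Nat.factorial (n+n))) :=
    by positivity
  nlinarith [hff, mul_nonneg (mul_nonneg hn hff.le) hn, mul_nonneg hn hff.le]

lemma key' (n M : ℕ) : 2 * dd n M + (2*(n:ℝ)+1) * cc n (n+1) M ≤ 2 * cc n n M := by
  cases M with
  | zero => simpa [dd] using key0 n
  | succ M => simpa [dd] using keyM n M

lemma summable_dd (n : ℕ) (x : ℝ) : Summable (fun M => ((x/2)^2)^M * dd n M) := by
  rw [← summable_nat_add_iff 1]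
  have e : (fun M => ((x/2)^2)^(M+1) * dd n (M+1))
      = fun M => (x/2)^2 * (((x/2)^2)^M * cc (n+1) (n+1) M) := by
    funext M; rw [dd]; ring
  rw [e]
  exact (summable_coeff (n+1) (n+1) x).mul_left _

lemma tsum_dd (n : ℕ) (x : ℝ) :
    (x/2)^2 * ∑' M, ((x/2)^2)^M * cc (n+1) (n+1) M = ∑' M, ((x/2)^2)^M * dd n M := by
  rw [Summable.tsum_eq_zero_add (summable_dd n x)]
  simp only [dd, pow_zero, one_mul, mul_zero, zero_add]
  rw [← tsum_mul_left]
  exact tsum_congr (fun M => by ring)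

lemma tsum_ineq (n : ℕ) (x : ℝ) :
    2 * (x/2)^2 * (∑' k, bterm (n+1) x k)^2
      + (2*(n:ℝ)+1) * ((∑' k, bterm n x k) * (∑' k, bterm (n+1) x k))
      ≤ 2 * (∑' k, bterm n x k)^2 := by
  have h1 : (∑' k, bterm (n+1) x k)^2 = ∑' M, ((x/2)^2)^M * cc (n+1) (n+1) M := by
    rw [sq]; exact cauchy (n+1) (n+1) x
  have h2 : (∑' k, bterm n x k)^2 = ∑' M, ((x/2)^2)^M * cc n n M := by
    rw [sq]; exact cauchy n n x
  have h3 := cauchy n (n+1) x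
  rw [h1, h2, h3, mul_assoc, tsum_dd n x, ← tsum_mul_left, ← tsum_mul_left, ← tsum_mul_left,
    ← Summable.tsum_add ((summable_dd n x).mul_left _) ((summable_coeff n (n+1) x).mul_left _)]
  apply Summable.tsum_le_tsum ?_ (((summable_dd n x).mul_left _).add ((summable_coeff n (n+1) x).mul_left _))
    ((summable_coeff n n x).mul_left _)
  intro M
  have hT : (0:ℝ) ≤ ((x/2)^2)^M := by positivity
  have := mul_le_mul_of_nonneg_left (key' n M) hT
  nlinarith [this]

/-- Turán-type inequality -/
lemma turan (n : ℕ) {x : ℝ} (hx : 0 ≤ x) :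
    x * besselI (n+1) x^2 + (2*(n:ℝ)+1) * (besselI n x * besselI (n+1) x)
      ≤ x * (besselI n x)^2 := by
  rw [besselI_eq, besselI_eq]
  have ht : (0:ℝ) ≤ (x/2)^(2*n+1) := by positivity
  have h := mul_le_mul_of_nonneg_left (tsum_ineq n x) ht
  calc x * ((x/2)^(n+1) * ∑' k, bterm (n+1) x k)^2
        + (2*(n:ℝ)+1) * (((x/2)^n * ∑' k, bterm n x k) * ((x/2)^(n+1) * ∑' k, bterm (n+1) x k))
      = (x/2)^(2*n+1) * (2 * (x/2)^2 * (∑' k, bterm (n+1) x k)^2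
          + (2*(n:ℝ)+1) * ((∑' k, bterm n x k) * (∑' k, bterm (n+1) x k))) := by
        ring
    _ ≤ (x/2)^(2*n+1) * (2 * (∑' k, bterm n x k)^2) := h
    _ = x * ((x/2)^n * ∑' k, bterm n x k)^2 := by ring



end BesselAux


open BesselAux in
/-- For every integer `n ≥ 2` and real `x > 0`,
`(n+2)x I_{n+1}(x)/I_n(x) − (n−1)x I_{n+2}(x)/I_{n+1}(x) − 3x I₀(x)/I₁(x) + 6 < 0`. -/
theorem besselI_ratio_inequality (n : ℕ) (hn : 2 ≤ n) (x : ℝ) (hx : 0 < x) :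
    ((n : ℝ) + 2) * x * besselI (n + 1) x / besselI n x
      - ((n : ℝ) - 1) * x * besselI (n + 2) x / besselI (n + 1) x
      - 3 * x * besselI 0 x / besselI 1 x + 6 < 0 := by
  have hI : ∀ k : ℕ, 0 < besselI k x := fun k => besselI_pos k hx
  set r : ℕ → ℝ := fun k => x * besselI (k+1) x / besselI k x with hrdef
  have hr_pos : ∀ k, 0 < r k := fun k =>
    div_pos (mul_pos hx (hI (k+1))) (hI k)
  have hrec : ∀ k : ℕ, r k * (r (k+1) + 2*(k:ℝ)+2) = x^2 := by
    intro k
    have h := besselI_rec k x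
    simp only [hrdef]
    field_simp [(hI k).ne', (hI (k+1)).ne']
    linear_combination (-1 : ℝ) * h
  -- d k := r k - r (k+1)
  set d : ℕ → ℝ := fun k => r k - r (k+1) with hddef
  have hd1 : ∀ k, d k ≤ 1 := by
    intro k
    have ht := turan k hx.le
    have h := besselI_rec k x
    simp only [hddef, hrdef]
    rw [div_sub_div _ _ (hI k).ne' (hI (k+1)).ne', div_le_one (mul_pos (hI k) (hI (k+1)))]
    nlinarith [ht, h, hI k, hI (k+1)]
  have hdagger : ∀ k : ℕ, d k * (2*(k:ℝ)+2 + r (k+1)) = r (k+1) * (2 - d (k+1)) := by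
    intro k
    have h1 := hrec k
    have h2 := hrec (k+1)
    push_cast at h2
    simp only [hddef]
    linear_combination h1 - h2
  have hd0 : ∀ k, 0 < d k := by
    intro k
    have h := hdagger k
    have hk : (0:ℝ) ≤ (k:ℝ) := Nat.cast_nonneg k
    nlinarith [hd1 (k+1), hr_pos (k+1)]
  have hds : ∀ k, d k = r k - r (k+1) := fun k => rfl
  have hd0' : ∀ k, r (k+1) < r k := by
    intro k
    have h1 := hd0 k
    rw [hds k] at h1
    linarith
  have hmono : ∀ j k : ℕ, j ≤ k → r k ≤ r j := by
    intro j k hjk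
    induction k, hjk using Nat.le_induction with
    | base => exact le_refl _
    | succ m hm ih => exact le_trans (hd0' m).le ih
  -- key comparison
  have hkey : ∀ k, 1 ≤ k → k < n → d n < 3 * d k := by
    intro k hk1 hkn
    have P1 : (0:ℝ) < 2*(n:ℝ)+2 + r (n+1) := by
      have h1 := hr_pos (n+1); have h2 : (0:ℝ) ≤ (n:ℝ) := Nat.cast_nonneg n; linarith
    have P2 : (0:ℝ) < 2*(k:ℝ)+2 + r (k+1) := by
      have h1 := hr_pos (k+1); have h2 : (0:ℝ) ≤ (k:ℝ) := Nat.cast_nonneg k; linarith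
    have hA : d n * (2*(n:ℝ)+2 + r (n+1)) ≤ 2 * r (n+1) := by
      nlinarith [hdagger n, hd0 (n+1), hr_pos (n+1)]
    have hB : r (k+1) ≤ d k * (2*(k:ℝ)+2 + r (k+1)) := by
      nlinarith [hdagger k, hd1 (k+1), hr_pos (k+1)]
    have hmon : r (n+1) ≤ r (k+1) := hmono (k+1) (n+1) (by omega)
    have hcast : (k:ℝ) + 1 ≤ (n:ℝ) := by exact_mod_cast Nat.succ_le_of_lt hkn
    have hmid : 2 * r (n+1) * (2*(k:ℝ)+2 + r (k+1)) < 3 * r (k+1) * (2*(n:ℝ)+2 + r (n+1)) := by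
      nlinarith [hr_pos (n+1), hr_pos (k+1), hmon, hcast, Nat.cast_nonneg k (α := ℝ)]
    have : d n * (2*(n:ℝ)+2 + r (n+1)) * (2*(k:ℝ)+2 + r (k+1))
        < 3 * d k * (2*(n:ℝ)+2 + r (n+1)) * (2*(k:ℝ)+2 + r (k+1)) := by
      calc d n * (2*(n:ℝ)+2 + r (n+1)) * (2*(k:ℝ)+2 + r (k+1))
          ≤ 2 * r (n+1) * (2*(k:ℝ)+2 + r (k+1)) := by nlinarith [hA, P2]
        _ < 3 * r (k+1) * (2*(n:ℝ)+2 + r (n+1)) := hmid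
        _ ≤ 3 * d k * (2*(k:ℝ)+2 + r (k+1)) * (2*(n:ℝ)+2 + r (n+1)) := by nlinarith [hB, P1]
        _ = 3 * d k * (2*(n:ℝ)+2 + r (n+1)) * (2*(k:ℝ)+2 + r (k+1)) := by ring
    have hP := mul_pos P1 P2
    nlinarith [this]
  -- telescoping sum
  have htel : ∀ m : ℕ, 1 ≤ m → ∑ k ∈ Finset.Ico 1 m, d k = r 1 - r m := by
    intro m hm
    induction m, hm using Nat.le_induction with
    | base => simp
    | succ m hm ih =>
        rw [Finset.sum_Ico_succ_top hm, ih, hds m]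
        ring
  have hsum : ((n:ℝ) - 1) * d n < 3 * (r 1 - r n) := by
    have hne : (Finset.Ico 1 n).Nonempty := by
      rw [Finset.nonempty_Ico]; omega
    have hlt : ∑ _k ∈ Finset.Ico 1 n, d n < ∑ k ∈ Finset.Ico 1 n, (3 * d k) := by
      apply Finset.sum_lt_sum_of_nonempty hne
      intro k hk
      rw [Finset.mem_Ico] at hk
      exact hkey k hk.1 hk.2
    rw [Finset.sum_const, Nat.card_Ico, ← Finset.mul_sum, htel n (by omega)] at hlt
    have hcast : ((n - 1 : ℕ) : ℝ) = (n:ℝ) - 1 := by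
      push_cast [Nat.cast_sub (by omega : 1 ≤ n)]; ring
    rw [nsmul_eq_mul, hcast] at hlt
    exact hlt
  -- rewrite the goal
  have g1 : ((n : ℝ) + 2) * x * besselI (n + 1) x / besselI n x = ((n:ℝ)+2) * r n := by
    simp only [hrdef]; ring
  have g2 : ((n : ℝ) - 1) * x * besselI (n + 2) x / besselI (n + 1) x = ((n:ℝ)-1) * r (n+1) := by
    simp only [hrdef]; ring
  have g3 : 3 * x * besselI 0 x / besselI 1 x = 3 * r 1 + 6 := by
    have h := besselI_rec 0 x
    simp only [hrdef]
    field_simp [(hI 0).ne', (hI 1).ne']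
    linear_combination 3 * h
  rw [g1, g2, g3]
  -- final arithmetic
  have hdn : d n = r n - r (n+1) := rfl
  nlinarith [hsum, hd0 n]
end

section
/- (Identification of the critical value μ_* = μ_2.) For every integer n ≥ 2 and every real x > 0, μ_2(x) ≤ μ_n(x), where μ_n(x) := [ n(n²−1)/x³ ] / [ 1 − 2·I_1(x)/(x·I_0(x)) − I_1(x)·I_{n+1}(x)/(I_0(x)·I_n(x)) ]; that is, the infimum of μ_n(x) over n ≥ 2 is attained at n = 2. -/
/-- The eigenvalue thresholds `μ_n(x)` from the linear stability analysis. -/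
noncomputable def mu (n : ℕ) (x : ℝ) : ℝ :=
  ((n : ℝ) * ((n : ℝ) ^ 2 - 1) / x ^ 3) /
    (1 - 2 * besselI 1 x / (x * besselI 0 x)
      - besselI 1 x * besselI (n + 1) x / (besselI 0 x * besselI n x))


namespace BesselMuAux
open Finset

/-- normalized series `S t a = ∑ t^k/(k! (a+k)!)`. -/
noncomputable def S (t : ℝ) (a : ℕ) : ℝ :=
  ∑' k : ℕ, t ^ k / ((Nat.factorial k : ℝ) * (Nat.factorial (a + k) : ℝ))

lemma summable_term {t : ℝ} (ht : 0 ≤ t) (a : ℕ) :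
    Summable (fun k : ℕ => t ^ k / ((Nat.factorial k : ℝ) * (Nat.factorial (a + k) : ℝ))) := by
  refine Summable.of_nonneg_of_le (fun k => by positivity) (fun k => ?_)
    (Real.summable_pow_div_factorial t)
  have h1 : (0:ℝ) < (Nat.factorial k : ℝ) := by positivity
  refine div_le_div_of_nonneg_left (by positivity) h1 ?_
  have : (1:ℝ) ≤ (Nat.factorial (a+k) : ℝ) := by
    exact_mod_cast Nat.one_le_iff_ne_zero.mpr (Nat.factorial_ne_zero _)
  nlinarith
  
lemma S_pos {t : ℝ} (ht : 0 ≤ t) (a : ℕ) : 0 < S t a := by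
  refine Summable.tsum_pos (summable_term ht a) (fun k => by positivity) 0 ?_
  positivity

lemma S_rec {t : ℝ} (ht : 0 ≤ t) (a : ℕ) :
    S t a = (a+1 : ℝ) * S t (a+1) + t * S t (a+2) := by
  have hs1 := summable_term ht (a+1)
  have hs2 := summable_term ht (a+2)
  -- the shifted series g k = k * term (a+1) k
  set g : ℕ → ℝ := fun k => (k : ℝ) * (t ^ k / ((Nat.factorial k : ℝ) * (Nat.factorial (a+1+k) : ℝ))) with hg
  have hgsucc : ∀ k : ℕ, g (k+1) = t * (t ^ k / ((Nat.factorial k : ℝ) * (Nat.factorial (a+2+k) : ℝ))) := by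
    intro k
    have h1 : ((a+1) + (k+1)) = (a+2+k) := by omega
    have h2 : (Nat.factorial (k+1) : ℝ) = (k+1) * Nat.factorial k := by
      exact_mod_cast Nat.factorial_succ k
    have hk : (0:ℝ) < (k:ℝ)+1 := by positivity
    simp only [hg]
    rw [h1, h2]
    field_simp
    push_cast
    ring
  have hgs : Summable g := by
    rw [← summable_nat_add_iff 1]
    exact Summable.congr (hs2.mul_left t) (fun k => (hgsucc k).symm)
  have htg : ∑' k, g k = t * S t (a+2) := by
    rw [Summable.tsum_eq_zero_add hgs]
    simp only [hg]
    rw [tsum_congr hgsucc, tsum_mul_left]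
    simp [S]
  have hsplit : ∀ k : ℕ, t ^ k / ((Nat.factorial k : ℝ) * (Nat.factorial (a + k) : ℝ))
      = (a+1 : ℝ) * (t ^ k / ((Nat.factorial k : ℝ) * (Nat.factorial (a+1+k) : ℝ))) + g k := by
    intro k
    have h1 : (Nat.factorial (a+1+k) : ℝ) = (a+1+k) * Nat.factorial (a+k) := by
      have h' : a+1+k = (a+k)+1 := by omega
      rw [h']
      push_cast [Nat.factorial_succ (a+k)]
      ring
    have hf1 : (0:ℝ) < (Nat.factorial k : ℝ) := by positivity
    have hf2 : (0:ℝ) < (Nat.factorial (a+k) : ℝ) := by positivity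
    have hak : (0:ℝ) < (a:ℝ)+1+(k:ℝ) := by positivity
    simp only [hg]
    rw [h1]
    push_cast
    field_simp
  calc S t a = ∑' k, ((a+1 : ℝ) * (t ^ k / ((Nat.factorial k : ℝ) * (Nat.factorial (a+1+k) : ℝ))) + g k) := tsum_congr hsplit
    _ = (a+1 : ℝ) * S t (a+1) + t * S t (a+2) := by
        rw [Summable.tsum_add (hs1.mul_left _) hgs, tsum_mul_left, htg]
        simp [S]


lemma choose_le_two_pow (n k : ℕ) : n.choose k ≤ 2 ^ n := by
  rcases le_or_gt k n with h | h
  · calc n.choose k ≤ ∑ i ∈ range (n+1), n.choose i :=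
        Finset.single_le_sum (fun i _ => Nat.zero_le _) (mem_range.mpr (by omega))
    _ = 2 ^ n := Nat.sum_range_choose n
  · simp [Nat.choose_eq_zero_of_lt h]

lemma nat_vdm (a b m : ℕ) :
    ∑ i ∈ range (m+1), (a+m).choose (a+i) * (b+m).choose (b+(m-i))
      = (a+b+2*m).choose (a+b+m) := by
  have h0 : (a+b+2*m) = (a+m) + (b+m) := by ring
  rw [h0, Nat.add_choose_eq, Finset.Nat.sum_antidiagonal_eq_sum_range_succ_mk]
  set F : ℕ → ℕ := fun p => (a+m).choose p * (b+m).choose (a+b+m-p) with hF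
  have h1 : ∑ p ∈ range (a+b+m+1), F p = ∑ p ∈ Ico a (a+m+1), F p := by
    refine (Finset.sum_subset ?_ ?_).symm
    · intro p hp
      rw [mem_Ico] at hp; rw [mem_range]; omega
    · intro p hp hnp
      rw [mem_range] at hp; rw [mem_Ico] at hnp
      rcases lt_or_ge p a with h | h
      · have : b+m < a+b+m-p := by omega
        simp [hF, Nat.choose_eq_zero_of_lt this]
      · have : a+m < p := by omega
        simp [hF, Nat.choose_eq_zero_of_lt this]
  have h2 : ∑ p ∈ Ico a (a+m+1), F p = ∑ i ∈ range (m+1), F (a+i) := by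
    rw [Finset.sum_Ico_eq_sum_range]
    have h' : a+m+1-a = m+1 := by omega
    rw [h']
  rw [h1, h2]
  refine Finset.sum_congr rfl fun i hi => ?_
  rw [mem_range] at hi
  have : a+b+m-(a+i) = b+(m-i) := by omega
  simp [hF, this]

/-- closed form for the Cauchy-product coefficients -/
noncomputable def co (a b m : ℕ) : ℝ :=
  ((a+b+2*m).choose (a+b+m) : ℝ) /
    ((Nat.factorial (a+m) : ℝ) * (Nat.factorial (b+m) : ℝ))

lemma co_pos (a b m : ℕ) : 0 < co a b m := by
  have h : 0 < (a+b+2*m).choose (a+b+m) := Nat.choose_pos (by omega)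
  unfold co
  have h1 : (0:ℝ) < ((a+b+2*m).choose (a+b+m) : ℝ) := by exact_mod_cast h
  positivity

lemma real_vdm (a b m : ℕ) :
    ∑ ij ∈ Finset.HasAntidiagonal.antidiagonal m,
      (1:ℝ) / ((Nat.factorial ij.1 : ℝ) * (Nat.factorial (a+ij.1) : ℝ))
        * (1 / ((Nat.factorial ij.2 : ℝ) * (Nat.factorial (b+ij.2) : ℝ)))
      = co a b m := by
  rw [Finset.Nat.sum_antidiagonal_eq_sum_range_succ_mk]
  unfold co
  rw [← nat_vdm a b m]
  rw [Nat.cast_sum, Finset.sum_div]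
  refine Finset.sum_congr rfl fun i hi => ?_
  rw [mem_range] at hi
  have e1 : (a+m).choose (a+i) * (Nat.factorial (a+i)) * (Nat.factorial (m-i)) = Nat.factorial (a+m) := by
    have := Nat.choose_mul_factorial_mul_factorial (show a+i ≤ a+m by omega)
    have h' : a+m-(a+i) = m-i := by omega
    rwa [h'] at this
  have e2 : (b+m).choose (b+(m-i)) * (Nat.factorial (b+(m-i))) * (Nat.factorial i) = Nat.factorial (b+m) := by
    have := Nat.choose_mul_factorial_mul_factorial (show b+(m-i) ≤ b+m by omega)
    have h' : b+m-(b+(m-i)) = i := by omega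
    rwa [h'] at this
  have f1 : (0:ℝ) < (Nat.factorial i : ℝ) := by positivity
  have f2 : (0:ℝ) < (Nat.factorial (a+i) : ℝ) := by positivity
  have f3 : (0:ℝ) < (Nat.factorial (m-i) : ℝ) := by positivity
  have f4 : (0:ℝ) < (Nat.factorial (b+(m-i)) : ℝ) := by positivity
  have e1' : ((a+m).choose (a+i) : ℝ) * (Nat.factorial (a+i) : ℝ) * (Nat.factorial (m-i) : ℝ)
      = (Nat.factorial (a+m) : ℝ) := by exact_mod_cast e1
  have e2' : ((b+m).choose (b+(m-i)) : ℝ) * (Nat.factorial (b+(m-i)) : ℝ) * (Nat.factorial i : ℝ)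
      = (Nat.factorial (b+m) : ℝ) := by exact_mod_cast e2
  have c1 : ((a+m).choose (a+i) : ℝ) = (Nat.factorial (a+m) : ℝ) / ((Nat.factorial (a+i) : ℝ) * (Nat.factorial (m-i) : ℝ)) := by
    rw [eq_div_iff (by positivity)]; linarith [e1']
  have c2 : ((b+m).choose (b+(m-i)) : ℝ) = (Nat.factorial (b+m) : ℝ) / ((Nat.factorial (b+(m-i)) : ℝ) * (Nat.factorial i : ℝ)) := by
    rw [eq_div_iff (by positivity)]; linarith [e2']
  have f5 : (0:ℝ) < (Nat.factorial (a+m) : ℝ) := by positivity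
  have f6 : (0:ℝ) < (Nat.factorial (b+m) : ℝ) := by positivity
  push_cast [c1, c2]
  field_simp


lemma summable_co {t : ℝ} (ht : 0 ≤ t) (a b : ℕ) :
    Summable (fun m : ℕ => t ^ m * co a b m) := by
  refine Summable.of_nonneg_of_le (fun m => by
      have := Nat.cast_nonneg (α := ℝ) ((a+b+2*m).choose (a+b+m))
      unfold co; positivity)
    (fun m => ?_) (((Real.summable_pow_div_factorial (4*t)).mul_left ((2:ℝ)^(a+b))))
  unfold co
  have h1 : ((a+b+2*m).choose (a+b+m) : ℝ) ≤ (2:ℝ)^(a+b) * 4^m := by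
    calc ((a+b+2*m).choose (a+b+m) : ℝ) ≤ ((2:ℕ)^(a+b+2*m) : ℝ) := by
          exact_mod_cast choose_le_two_pow _ _
    _ = (2:ℝ)^(a+b) * 4^m := by
          push_cast
          rw [pow_add, pow_mul]
          norm_num
  have h2 : (Nat.factorial m : ℝ) ≤ (Nat.factorial (a+m) : ℝ) * (Nat.factorial (b+m) : ℝ) := by
    have hb : (1:ℝ) ≤ (Nat.factorial (b+m) : ℝ) := by
      exact_mod_cast Nat.one_le_iff_ne_zero.mpr (Nat.factorial_ne_zero _)
    have ha : (Nat.factorial m : ℝ) ≤ (Nat.factorial (a+m) : ℝ) := by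
      exact_mod_cast Nat.factorial_le (by omega)
    have hp : (0:ℝ) < (Nat.factorial (a+m) : ℝ) := by positivity
    nlinarith
  have hfm : (0:ℝ) < (Nat.factorial m : ℝ) := by positivity
  have hd : (0:ℝ) < (Nat.factorial (a+m) : ℝ) * (Nat.factorial (b+m) : ℝ) := by positivity
  have step : t ^ m * (((a+b+2*m).choose (a+b+m) : ℝ) / ((Nat.factorial (a+m) : ℝ) * (Nat.factorial (b+m) : ℝ)))
      ≤ t ^ m * (((2:ℝ)^(a+b) * 4^m) / (Nat.factorial m : ℝ)) := by
    refine mul_le_mul_of_nonneg_left ?_ (by positivity)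
    exact div_le_div₀ (by positivity) h1 hfm h2
  calc t ^ m * (((a+b+2*m).choose (a+b+m) : ℝ) / ((Nat.factorial (a+m) : ℝ) * (Nat.factorial (b+m) : ℝ)))
      ≤ t ^ m * (((2:ℝ)^(a+b) * 4^m) / (Nat.factorial m : ℝ)) := step
  _ = (2:ℝ)^(a+b) * ((4*t)^m / (Nat.factorial m : ℝ)) := by
        rw [mul_pow]
        ring

lemma S_mul {t : ℝ} (ht : 0 ≤ t) (a b : ℕ) :
    S t a * S t b = ∑' m : ℕ, t ^ m * co a b m := by
  have hna : Summable (fun k : ℕ => ‖t ^ k / ((Nat.factorial k : ℝ) * (Nat.factorial (a + k) : ℝ))‖) := by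
    refine (summable_term ht a).congr fun k => ?_
    rw [Real.norm_of_nonneg (by positivity)]
  have hnb : Summable (fun k : ℕ => ‖t ^ k / ((Nat.factorial k : ℝ) * (Nat.factorial (b + k) : ℝ))‖) := by
    refine (summable_term ht b).congr fun k => ?_
    rw [Real.norm_of_nonneg (by positivity)]
  rw [S, S, tsum_mul_tsum_eq_tsum_sum_antidiagonal_of_summable_norm hna hnb]
  refine tsum_congr fun m => ?_
  rw [← real_vdm a b m, Finset.mul_sum]
  refine Finset.sum_congr rfl fun ij hij => ?_
  have hm : ij.1 + ij.2 = m := Finset.HasAntidiagonal.mem_antidiagonal.mp hij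
  rw [← hm, pow_add]
  field_simp


lemma co_nonneg (a b m : ℕ) : 0 ≤ co a b m := by
  have := Nat.cast_nonneg (α := ℝ) ((a+b+2*m).choose (a+b+m))
  unfold co; positivity

-- Turán, coefficientwise
lemma co_turan (a m : ℕ) : co a (a+2) m ≤ co (a+1) (a+1) m := by
  unfold co
  have e1 : (a+(a+2)+2*m).choose (a+(a+2)+m) = ((a+1)+(a+1)+2*m).choose ((a+1)+(a+1)+m) := by
    congr 1 <;> omega
  rw [e1]
  have hfac : (Nat.factorial (a+1+m) : ℝ) * (Nat.factorial (a+1+m) : ℝ)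
      ≤ (Nat.factorial (a+m) : ℝ) * (Nat.factorial (a+2+m) : ℝ) := by
    have n1 : Nat.factorial (a+1+m) = (a+1+m) * Nat.factorial (a+m) := by
      have : a+1+m = (a+m)+1 := by omega
      rw [this, Nat.factorial_succ]
    have n2 : Nat.factorial (a+2+m) = (a+2+m) * Nat.factorial (a+1+m) := by
      have : a+2+m = (a+1+m)+1 := by omega
      rw [this, Nat.factorial_succ]
    have : Nat.factorial (a+1+m) * Nat.factorial (a+1+m)
        ≤ Nat.factorial (a+m) * Nat.factorial (a+2+m) := by
      rw [n2]
      calc Nat.factorial (a+1+m) * Nat.factorial (a+1+m)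
          = (a+1+m) * (Nat.factorial (a+m) * Nat.factorial (a+1+m)) := by rw [n1]; ring
        _ ≤ (a+2+m) * (Nat.factorial (a+m) * Nat.factorial (a+1+m)) := by
            exact Nat.mul_le_mul_right _ (by omega)
        _ = Nat.factorial (a+m) * ((a+2+m) * Nat.factorial (a+1+m)) := by ring
    exact_mod_cast this
  refine div_le_div_of_nonneg_left (by positivity) (by positivity) hfac

lemma co_turan_strict (a : ℕ) : co a (a+2) 0 < co (a+1) (a+1) 0 := by
  unfold co
  have e1 : (a+(a+2)+2*0).choose (a+(a+2)+0) = ((a+1)+(a+1)+2*0).choose ((a+1)+(a+1)+0) := by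
    congr 1 <;> omega
  rw [e1]
  have hpos : (0:ℝ) < (((a+1)+(a+1)+2*0).choose ((a+1)+(a+1)+0) : ℝ) := by
    exact_mod_cast Nat.choose_pos (by omega)
  have hfac : (Nat.factorial (a+1+0) : ℝ) * (Nat.factorial (a+1+0) : ℝ)
      < (Nat.factorial (a+0) : ℝ) * (Nat.factorial (a+2+0) : ℝ) := by
    simp only [Nat.add_zero]
    have e1 : (Nat.factorial (a+1) : ℝ) = ((a:ℝ)+1) * (Nat.factorial a : ℝ) := by
      rw [Nat.factorial_succ]; push_cast; ring
    have e2 : (Nat.factorial (a+2) : ℝ) = ((a:ℝ)+2) * (Nat.factorial (a+1) : ℝ) := by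
      rw [show a+2 = (a+1)+1 by omega, Nat.factorial_succ]; push_cast; ring
    have hf : (0:ℝ) < (Nat.factorial a : ℝ) := by positivity
    rw [e2, e1]
    nlinarith [mul_pos hf hf, hf]
  exact div_lt_div_of_pos_left hpos (by positivity) hfac

-- key coefficient inequality
lemma co_key (m : ℕ) : co 1 4 m + 3 * co 1 3 m ≤ 3 * co 2 2 m := by
  unfold co
  have e14 : (1+4+2*m).choose (1+4+m) = (2*m+5).choose (m+5) := by congr 1 <;> omega
  have e13 : (1+3+2*m).choose (1+3+m) = (2*m+4).choose (m+4) := by congr 1 <;> omega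
  have e22 : (2+2+2*m).choose (2+2+m) = (2*m+4).choose (m+4) := by congr 1 <;> omega
  simp only [e14, e13, e22]
  set c4 : ℝ := ((2*m+4).choose (m+4) : ℝ) with hc4def
  set c5 : ℝ := ((2*m+5).choose (m+5) : ℝ) with hc5def
  have hc4 : 0 ≤ c4 := Nat.cast_nonneg _
  -- factorial relations
  set F1 : ℝ := (Nat.factorial (1+m) : ℝ) with hF1def
  set F2 : ℝ := (Nat.factorial (2+m) : ℝ) with hF2def
  set F3 : ℝ := (Nat.factorial (3+m) : ℝ) with hF3def
  set F4 : ℝ := (Nat.factorial (4+m) : ℝ) with hF4def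
  have hF1 : 0 < F1 := by positivity
  have hF2e : F2 = ((m:ℝ)+2) * F1 := by
    rw [hF2def, hF1def, show 2+m = (1+m)+1 by omega, Nat.factorial_succ]
    push_cast; ring
  have hF3e : F3 = ((m:ℝ)+3) * F2 := by
    rw [hF3def, hF2def, show 3+m = (2+m)+1 by omega, Nat.factorial_succ]
    push_cast; ring
  have hF4e : F4 = ((m:ℝ)+4) * F3 := by
    rw [hF4def, hF3def, show 4+m = (3+m)+1 by omega, Nat.factorial_succ]
    push_cast; ring
  have hF2 : 0 < F2 := by rw [hF2e]; positivity
  have hF3 : 0 < F3 := by rw [hF3e]; positivity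
  have hF4 : 0 < F4 := by rw [hF4e]; positivity
  -- relation between c5 and c4
  have hrel : c5 * ((m:ℝ)+5) = (2*(m:ℝ)+5) * c4 := by
    have h4 : (2*m+4).choose (m+4) * Nat.factorial (m+4) * Nat.factorial m = Nat.factorial (2*m+4) := by
      have := Nat.choose_mul_factorial_mul_factorial (show m+4 ≤ 2*m+4 by omega)
      have e : 2*m+4-(m+4) = m := by omega
      rwa [e] at this
    have h5 : (2*m+5).choose (m+5) * Nat.factorial (m+5) * Nat.factorial m = Nat.factorial (2*m+5) := by
      have := Nat.choose_mul_factorial_mul_factorial (show m+5 ≤ 2*m+5 by omega)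
      have e : 2*m+5-(m+5) = m := by omega
      rwa [e] at this
    have h6 : Nat.factorial (2*m+5) = (2*m+5) * Nat.factorial (2*m+4) := Nat.factorial_succ _
    have h7 : Nat.factorial (m+5) = (m+5) * Nat.factorial (m+4) := Nat.factorial_succ _
    have hnat : ((2*m+5).choose (m+5) * (m+5)) * (Nat.factorial (m+4) * Nat.factorial m)
        = ((2*m+5) * ((2*m+4).choose (m+4))) * (Nat.factorial (m+4) * Nat.factorial m) := by
      calc ((2*m+5).choose (m+5) * (m+5)) * (Nat.factorial (m+4) * Nat.factorial m)
          = (2*m+5).choose (m+5) * ((m+5) * Nat.factorial (m+4)) * Nat.factorial m := by ring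
        _ = (2*m+5).choose (m+5) * Nat.factorial (m+5) * Nat.factorial m := by rw [h7]
        _ = Nat.factorial (2*m+5) := h5
        _ = (2*m+5) * Nat.factorial (2*m+4) := h6
        _ = (2*m+5) * ((2*m+4).choose (m+4) * Nat.factorial (m+4) * Nat.factorial m) := by rw [h4]
        _ = ((2*m+5) * ((2*m+4).choose (m+4))) * (Nat.factorial (m+4) * Nat.factorial m) := by ring
    have hpos : 0 < Nat.factorial (m+4) * Nat.factorial m :=
      Nat.mul_pos (Nat.factorial_pos _) (Nat.factorial_pos _)
    have hcan : (2*m+5).choose (m+5) * (m+5) = (2*m+5) * ((2*m+4).choose (m+4)) :=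
      Nat.eq_of_mul_eq_mul_right hpos hnat
    rw [hc5def, hc4def]
    exact_mod_cast hcan
  -- index normalizations inside goal:  -- index normalizations inside goal: the factorial indices are of form (1+m) etc.
  -- goal : c5 / (F1 * F4) + 3 * (c4 / (F1 * F3)) ≤ 3 * (c4 / (F2 * F2))
  have main : c5 / (F1 * F4) ≤ 3 * c4 / (F2 * F3) := by
    rw [div_le_div_iff₀ (by positivity) (by positivity)]
    have expand : c5 * (F2 * F3) = ((m:ℝ)+2) * c5 * (F1 * F3) := by rw [hF2e]; ring
    rw [expand, hF4e]
    have hF13 : 0 < F1 * F3 := by positivity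
    have key : ((m:ℝ)+2) * c5 ≤ 3 * c4 * ((m:ℝ)+4) := by
      nlinarith [hrel, hc4, sq_nonneg ((m:ℝ))]
    calc ((m:ℝ)+2) * c5 * (F1 * F3) ≤ (3 * c4 * ((m:ℝ)+4)) * (F1 * F3) := by
          exact mul_le_mul_of_nonneg_right key (le_of_lt hF13)
      _ = 3 * c4 * (F1 * (((m:ℝ)+4) * F3)) := by ring
  have heq : 3 * (c4 / (F2 * F2)) - 3 * (c4 / (F1 * F3)) = 3 * c4 / (F2 * F3) := by
    rw [hF3e, hF2e]
    field_simp
    ring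
  have h2 : c5 / (F1 * F4) ≤ 3 * (c4 / (F2 * F2)) - 3 * (c4 / (F1 * F3)) := by
    rw [heq]; exact main
  linarith

-- tsum-level results
lemma turan_lt {t : ℝ} (ht : 0 < t) (a : ℕ) :
    S t a * S t (a+2) < S t (a+1) * S t (a+1) := by
  rw [S_mul ht.le, S_mul ht.le]
  refine Summable.tsum_lt_tsum (i := 0) (fun m => ?_) ?_ (summable_co ht.le _ _) (summable_co ht.le _ _)
  · exact mul_le_mul_of_nonneg_left (co_turan a m) (by positivity)
  · have h1 : t ^ 0 = (1:ℝ) := pow_zero t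
    simpa [h1] using co_turan_strict a

lemma key_ineq {t : ℝ} (ht : 0 < t) :
    S t 1 * S t 4 + 3 * (S t 1 * S t 3) ≤ 3 * (S t 2 * S t 2) := by
  rw [S_mul ht.le, S_mul ht.le, S_mul ht.le, ← tsum_mul_left, ← tsum_mul_left,
    ← Summable.tsum_add (summable_co ht.le 1 4) ((summable_co ht.le 1 3).mul_left 3)]
  refine Summable.tsum_le_tsum (fun m => ?_) ((summable_co ht.le 1 4).add ((summable_co ht.le 1 3).mul_left 3)) ((summable_co ht.le 2 2).mul_left 3)
  have h := co_key m
  have htm : (0:ℝ) ≤ t ^ m := by positivity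
  nlinarith [co_nonneg 1 4 m, co_nonneg 1 3 m, co_nonneg 2 2 m]


/-- ratio of consecutive normalized Bessel series -/
noncomputable def r (t : ℝ) (a : ℕ) : ℝ := S t (a+1) / S t a

lemma r_pos {t : ℝ} (ht : 0 < t) (a : ℕ) : 0 < r t a :=
  div_pos (S_pos ht.le _) (S_pos ht.le _)

lemma r_strict {t : ℝ} (ht : 0 < t) (a : ℕ) : r t (a+1) < r t a := by
  unfold r
  rw [div_lt_div_iff₀ (S_pos ht.le _) (S_pos ht.le _)]
  have := turan_lt ht a
  nlinarith

lemma r_mono {t : ℝ} (ht : 0 < t) {a b : ℕ} (hab : a ≤ b) : r t b ≤ r t a := by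
  induction b with
  | zero => simp_all
  | succ b ih =>
    rcases Nat.lt_or_ge a (b+1) with h | h
    · exact le_trans (r_strict ht b).le (ih (by omega))
    · have : a = b+1 := by omega
      rw [this]

lemma rr_eq {t : ℝ} (ht : 0 < t) (a : ℕ) : r t a * r t (a+1) = S t (a+2) / S t a := by
  unfold r
  rw [div_mul_div_comm]
  rw [mul_comm (S t (a+1)) (S t (a+2))]
  rw [mul_div_mul_right _ _ (ne_of_gt (S_pos ht.le (a+1)))]

lemma d_le {t : ℝ} (ht : 0 < t) (a : ℕ) :
    r t a - r t (a+1) ≤ r t a * r t (a+1) := by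
  have h0 := S_pos ht.le a
  have h1 := S_pos ht.le (a+1)
  have h2 := S_pos ht.le (a+2)
  have h3 := S_pos ht.le (a+3)
  have prod_ineq : S t (a+1) * S t (a+1) - S t a * S t (a+2) ≤ S t (a+1) * S t (a+2) := by
    have hr1 := S_rec ht.le a
    have hr2 := S_rec ht.le (a+1)
    have htu : S t (a+1) * S t (a+3) ≤ S t (a+2) * S t (a+2) := by
      have := turan_lt ht (a+1)
      nlinarith
    have e1 : S t (a+1) * S t (a+1)
        = ((a:ℝ)+2) * (S t (a+1) * S t (a+2)) + t * (S t (a+1) * S t (a+3)) := by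
      nth_rewrite 2 [hr2]
      push_cast
      ring_nf
    have e2 : S t a * S t (a+2)
        = ((a:ℝ)+1) * (S t (a+1) * S t (a+2)) + t * (S t (a+2) * S t (a+2)) := by
      rw [hr1]; ring
    have e3 : t * (S t (a+1) * S t (a+3)) ≤ t * (S t (a+2) * S t (a+2)) :=
      mul_le_mul_of_nonneg_left htu ht.le
    linarith
  rw [rr_eq ht a]
  unfold r
  rw [div_sub_div _ _ (ne_of_gt h0) (ne_of_gt h1), div_le_div_iff₀ (by positivity) h0]
  nlinarith [prod_ineq]

lemma d_le_23 {t : ℝ} (ht : 0 < t) {a : ℕ} (ha : 2 ≤ a) :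
    r t a - r t (a+1) ≤ r t 2 * r t 3 := by
  calc r t a - r t (a+1) ≤ r t a * r t (a+1) := d_le ht a
    _ ≤ r t 2 * r t 3 := by
      have h1 : r t a ≤ r t 2 := r_mono ht ha
      have h2 : r t (a+1) ≤ r t 3 := r_mono ht (by omega)
      have := r_pos ht a
      have := r_pos ht (a+1)
      have := r_pos ht 2
      have := r_pos ht 3
      nlinarith

lemma key_r {t : ℝ} (ht : 0 < t) : r t 2 * r t 3 ≤ 3 * (r t 1 - r t 2) := by
  have h1 := S_pos ht.le 1
  have h2 := S_pos ht.le 2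
  have h3 := S_pos ht.le 3
  have h4 := S_pos ht.le 4
  have hk := key_ineq ht
  rw [rr_eq ht 2]
  show S t 4 / S t 2 ≤ 3 * (S t 2 / S t 1 - S t 3 / S t 2)
  rw [div_sub_div _ _ (ne_of_gt h1) (ne_of_gt h2), ← mul_div_assoc,
    div_le_div_iff₀ h2 (by positivity)]
  nlinarith

lemma main_ineq {t : ℝ} (ht : 0 < t) : ∀ n : ℕ, 2 ≤ n →
    6 * (r t 1 - r t n) ≤ ((n:ℝ)^3 - (n:ℝ)) * (r t 1 - r t 2) := by
  intro n hn
  induction n, hn using Nat.le_induction with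
  | base => norm_num
  | succ n hn ih =>
    have hd : r t n - r t (n+1) ≤ r t 2 * r t 3 := d_le_23 ht hn
    have hkey : r t 2 * r t 3 ≤ 3 * (r t 1 - r t 2) := key_r ht
    have h12 : 0 < r t 1 - r t 2 := sub_pos.mpr (r_strict ht 1)
    have hcoef : (18:ℝ) ≤ 3*(n:ℝ)^2 + 3*(n:ℝ) := by
      have : (2:ℝ) ≤ (n:ℝ) := by exact_mod_cast hn
      nlinarith
    have expand : (((n:ℕ)+1:ℕ):ℝ)^3 - (((n:ℕ)+1:ℕ):ℝ)
        = ((n:ℝ)^3 - (n:ℝ)) + (3*(n:ℝ)^2 + 3*(n:ℝ)) := by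
      push_cast
      ring
    rw [expand]
    have step : 6 * (r t n - r t (n+1)) ≤ (3*(n:ℝ)^2 + 3*(n:ℝ)) * (r t 1 - r t 2) := by
      calc 6 * (r t n - r t (n+1)) ≤ 6 * (r t 2 * r t 3) := by nlinarith
        _ ≤ 18 * (r t 1 - r t 2) := by nlinarith
        _ ≤ (3*(n:ℝ)^2 + 3*(n:ℝ)) * (r t 1 - r t 2) := by nlinarith
    nlinarith [ih]

lemma r1_sub_rn_pos {t : ℝ} (ht : 0 < t) {n : ℕ} (hn : 2 ≤ n) : 0 < r t 1 - r t n := by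
  have h1 : r t n ≤ r t 2 := r_mono ht hn
  have h2 : r t 2 < r t 1 := r_strict ht 1
  linarith


lemma besselI_S (n : ℕ) (x : ℝ) : besselI n x = (x/2)^n * S ((x/2)^2) n := by
  unfold besselI S
  congr 1
  exact tsum_congr fun k => by rw [pow_mul]

lemma mu_eq (n : ℕ) (x : ℝ) (hx : 0 < x) {t : ℝ} (hteq : t = (x/2)^2) :
    mu n x = ((n : ℝ) * ((n : ℝ) ^ 2 - 1) / x ^ 3) /
      ((t * S t 1 / S t 0) * (r t 1 - r t n)) := by
  have hh : (0:ℝ) < x/2 := by linarith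
  have ht : 0 < t := by rw [hteq]; positivity
  have hS0 := S_pos ht.le 0
  have hS1 := S_pos ht.le 1
  have hSn := S_pos ht.le n
  have hSn1 := S_pos ht.le (n+1)
  have hS2 := S_pos ht.le 2
  have hxne : x ≠ 0 := ne_of_gt hx
  have hhne : (x/2) ≠ 0 := ne_of_gt hh
  have hhn : ((x/2):ℝ)^n ≠ 0 := pow_ne_zero _ hhne
  have hbS : ∀ m : ℕ, besselI m x = (x/2)^m * S t m := by
    intro m; rw [besselI_S m x, hteq]
  have hA : 2 * besselI 1 x / (x * besselI 0 x) = S t 1 / S t 0 := by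
    rw [hbS 1, hbS 0, pow_one, pow_zero, one_mul]
    have e1 : 2 * (x/2 * S t 1) = x * S t 1 := by ring
    rw [e1, mul_div_mul_left _ _ hxne]
  have hB : besselI 1 x * besselI (n+1) x / (besselI 0 x * besselI n x)
      = t * (S t 1 * S t (n+1)) / (S t 0 * S t n) := by
    rw [hbS 1, hbS 0, hbS (n+1), hbS n, pow_one, pow_zero, one_mul, pow_succ]
    have e1 : x/2 * S t 1 * ((x/2)^n * (x/2) * S t (n+1))
        = ((x/2)^n) * (t * (S t 1 * S t (n+1))) := by rw [hteq]; ring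
    have e2 : S t 0 * ((x/2)^n * S t n) = ((x/2)^n) * (S t 0 * S t n) := by ring
    rw [e1, e2, mul_div_mul_left _ _ hhn]
  have hrec0 : S t 0 = S t 1 + t * S t 2 := by
    have := S_rec ht.le 0
    push_cast at this
    linarith
  have hC : 1 - S t 1 / S t 0 = t * S t 2 / S t 0 := by
    rw [sub_eq_iff_eq_add, ← add_div ,eq_comm, div_eq_one_iff_eq (ne_of_gt hS0)]
    linarith
  have hD : (t * S t 1 / S t 0) * (r t 1 - r t n)
      = t * S t 2 / S t 0 - t * (S t 1 * S t (n+1)) / (S t 0 * S t n) := by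
    unfold r
    field_simp
  unfold mu
  rw [hA, hB, hD, ← hC]


end BesselMuAux

open BesselMuAux

/-- The critical value is `μ_* = μ₂`: for every integer `n ≥ 2` and real `x > 0`,
`μ₂(x) ≤ μ_n(x)`. -/
theorem mu_two_le_mu (n : ℕ) (hn : 2 ≤ n) (x : ℝ) (hx : 0 < x) :
    mu 2 x ≤ mu n x := by
  have hh : (0:ℝ) < x/2 := by linarith
  set t : ℝ := (x/2)^2 with htdef
  have ht : 0 < t := by positivity
  have hS0 := S_pos ht.le 0
  have hS1 := S_pos ht.le 1
  have hC : 0 < t * S t 1 / S t 0 := by positivity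
  have h2 : (0:ℝ) < r t 1 - r t 2 := r1_sub_rn_pos ht (le_refl 2)
  have hnpos : (0:ℝ) < r t 1 - r t n := r1_sub_rn_pos ht hn
  rw [mu_eq 2 x hx htdef, mu_eq n x hx htdef]
  rw [div_le_div_iff₀ (by positivity) (by positivity)]
  have hx3 : (0:ℝ) < x^3 := by positivity
  have hmain := main_ineq ht n hn
  have h6 : ((2:ℕ) : ℝ) * (((2:ℕ) : ℝ)^2 - 1) = 6 := by norm_num
  rw [h6]
  have hNn : ((n:ℝ)^3 - (n:ℝ)) = (n : ℝ) * ((n : ℝ) ^ 2 - 1) := by ring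
  rw [← hNn]
  calc 6 / x ^ 3 * (t * S t 1 / S t 0 * (r t 1 - r t n))
      = (t * S t 1 / S t 0) / x^3 * (6 * (r t 1 - r t n)) := by ring
    _ ≤ (t * S t 1 / S t 0) / x^3 * (((n:ℝ)^3 - (n:ℝ)) * (r t 1 - r t 2)) := by
        refine mul_le_mul_of_nonneg_left hmain (by positivity)
    _ = ((n:ℝ)^3 - (n:ℝ)) / x ^ 3 * (t * S t 1 / S t 0 * (r t 1 - r t 2)) := by ring
end

section
/- (Lemma 4.5, uniform spectral bound.) Let R > 0 and let μ_* := μ_2(R), where μ_n(x) := [ n(n²−1)/x³ ] / [ 1 − 2·I_1(x)/(x·I_0(x)) − I_1(x)·I_{n+1}(x)/(I_0(x)·I_n(x)) ]. Then for every μ with 0 < μ < μ_*, there exists δ > 0, independent of n, such that for every integer n ≥ 2: μ·( 1 − 2·I_1(R)/(R·I_0(R)) − I_1(R)·I_{n+1}(R)/(I_0(R)·I_n(R)) ) − n(n²−1)/R³ < −δ·n³. -/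
set_option maxHeartbeats 1000000

namespace SpecAux

open Finset

noncomputable def bt (x : ℝ) (n k : ℕ) : ℝ :=
  (x / 2) ^ (2 * k) / ((Nat.factorial k : ℝ) * (Nat.factorial (n + k) : ℝ))

lemma besselI_eq (n : ℕ) (x : ℝ) : besselI n x = (x / 2) ^ n * ∑' k, bt x n k := rfl

lemma bt_nonneg {x : ℝ} (hx : 0 ≤ x) (n k : ℕ) : 0 ≤ bt x n k := by
  unfold bt; positivity

lemma bt_le {x : ℝ} (hx : 0 ≤ x) (n k : ℕ) :
    bt x n k ≤ ((x / 2) ^ 2) ^ k / (Nat.factorial k : ℝ) := by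
  unfold bt
  rw [← pow_mul]
  apply div_le_div_of_nonneg_left (by positivity) (by positivity)
  have h1 : (1:ℝ) ≤ (Nat.factorial (n + k) : ℝ) := by
    exact_mod_cast Nat.one_le_iff_ne_zero.2 (Nat.factorial_ne_zero _)
  have h2 : (0:ℝ) < (Nat.factorial k : ℝ) := by exact_mod_cast Nat.factorial_pos k
  nlinarith

lemma summable_bt (x : ℝ) (n : ℕ) (hx : 0 ≤ x) : Summable (bt x n) := by
  apply Summable.of_nonneg_of_le (bt_nonneg hx n) (bt_le hx n)
  exact Real.summable_pow_div_factorial _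

lemma besselI_pos {x : ℝ} (hx : 0 < x) (n : ℕ) : 0 < besselI n x := by
  rw [besselI_eq]
  apply mul_pos (by positivity)
  apply Summable.tsum_pos (summable_bt x n hx.le) (bt_nonneg hx.le n) 0
  unfold bt
  positivity

noncomputable def PC (A B j : ℕ) : ℝ :=
  ((A + B + 2 * j).choose (A + j) : ℝ) /
    ((Nat.factorial j : ℝ) * (Nat.factorial (A + B + j) : ℝ))

lemma PC_nonneg (A B j : ℕ) : 0 ≤ PC A B j := by unfold PC; positivity

lemma nat_vdm (A B j : ℕ) :
    ∑ k ∈ range (j + 1), j.choose k * (A + B + j).choose (A + k)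
      = (A + B + 2 * j).choose (A + j) := by
  have h := Nat.add_choose_eq j (A + B + j) (A + j)
  rw [Finset.Nat.sum_antidiagonal_eq_sum_range_succ (fun a b => j.choose a * (A+B+j).choose b)] at h
  have e1 : j + (A + B + j) = A + B + 2 * j := by ring
  rw [e1] at h
  rw [h]
  have hsub : ∑ k ∈ range ((A + j).succ), j.choose k * (A + B + j).choose (A + j - k)
      = ∑ k ∈ range (j + 1), j.choose k * (A + B + j).choose (A + j - k) := by
    symm
    apply Finset.sum_subset
    · intro k hk
      simp only [mem_range] at *
      omega
    · intro k _ hk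
      simp only [mem_range, not_lt] at hk
      rw [Nat.choose_eq_zero_of_lt (by omega), zero_mul]
  rw [hsub, ← Finset.sum_range_reflect (fun i => j.choose i * (A + B + j).choose (A + j - i)) (j+1)]
  apply Finset.sum_congr rfl
  intro i hi
  simp only [mem_range] at hi
  have h1 : j + 1 - 1 - i = j - i := by omega
  rw [h1, Nat.choose_symm (by omega : i ≤ j)]
  congr 2
  omega


lemma term_eq (A B j k : ℕ) (hk : k ≤ j) :
    (1:ℝ) / ((k.factorial : ℝ) * ((A+k).factorial : ℝ) * ((j-k).factorial : ℝ)
        * ((B+(j-k)).factorial : ℝ))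
      = ((j.choose k * (A+B+j).choose (A+k) : ℕ) : ℝ)
        / ((j.factorial : ℝ) * ((A+B+j).factorial : ℝ)) := by
  have e1 : j.choose k * k.factorial * (j-k).factorial = j.factorial :=
    Nat.choose_mul_factorial_mul_factorial hk
  have e2 : (A+B+j).choose (A+k) * (A+k).factorial * ((A+B+j)-(A+k)).factorial
      = (A+B+j).factorial :=
    Nat.choose_mul_factorial_mul_factorial (by omega)
  have e3 : (A+B+j) - (A+k) = B + (j-k) := by omega
  rw [e3] at e2
  have e1' : (j.choose k : ℝ) * k.factorial * (j-k).factorial = j.factorial := by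
    exact_mod_cast e1
  have e2' : ((A+B+j).choose (A+k) : ℝ) * (A+k).factorial * (B+(j-k)).factorial
      = (A+B+j).factorial := by exact_mod_cast e2
  have h1 : (0:ℝ) < k.factorial := by exact_mod_cast Nat.factorial_pos k
  have h2 : (0:ℝ) < (A+k).factorial := by exact_mod_cast Nat.factorial_pos (A+k)
  have h3 : (0:ℝ) < (j-k).factorial := by exact_mod_cast Nat.factorial_pos (j-k)
  have h4 : (0:ℝ) < (B+(j-k)).factorial := by exact_mod_cast Nat.factorial_pos (B+(j-k))
  have h5 : (0:ℝ) < j.factorial := by exact_mod_cast Nat.factorial_pos j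
  have h6 : (0:ℝ) < (A+B+j).factorial := by exact_mod_cast Nat.factorial_pos (A+B+j)
  rw [div_eq_div_iff (by positivity) (by positivity)]
  push_cast
  nlinarith [mul_pos h1 h3, mul_pos h2 h4]

lemma coeff_eq (x : ℝ) (A B j : ℕ) :
    ∑ k ∈ range (j + 1), bt x A k * bt x B (j - k)
      = PC A B j * ((x/2)^2) ^ j := by
  have step : ∀ k ∈ range (j+1), bt x A k * bt x B (j - k)
      = (((j.choose k * (A+B+j).choose (A+k) : ℕ) : ℝ)
          / ((j.factorial : ℝ) * ((A+B+j).factorial : ℝ))) * ((x/2)^2) ^ j := by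
    intro k hk
    simp only [mem_range] at hk
    have hkj : k ≤ j := by omega
    unfold bt
    rw [← term_eq A B j k hkj]
    have hp : (x/2) ^ (2*k) * (x/2) ^ (2*(j-k)) = ((x/2)^2) ^ j := by
      rw [← pow_add, ← pow_mul]
      congr 1
      omega
    rw [div_mul_div_comm, hp]
    ring
  rw [Finset.sum_congr rfl step, ← Finset.sum_mul, ← Finset.sum_div]
  rw [show ∑ k ∈ range (j+1), ((j.choose k * (A+B+j).choose (A+k) : ℕ) : ℝ)
      = (((A + B + 2*j).choose (A+j) : ℕ) : ℝ) from by rw [← nat_vdm A B j]; push_cast; ring]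
  rfl


variable {x : ℝ}

lemma summable_norm_bt (hx : 0 < x) (n : ℕ) : Summable (fun k => ‖bt x n k‖) := by
  have : (fun k => ‖bt x n k‖) = bt x n := by
    funext k; exact Real.norm_of_nonneg (bt_nonneg hx.le n k)
  rw [this]; exact summable_bt x n hx.le

lemma antidiag_eq (hx : 0 < x) (A B : ℕ) :
    (fun j => ∑ kl ∈ antidiagonal j, bt x A kl.1 * bt x B kl.2)
      = fun j => PC A B j * ((x/2)^2) ^ j := by
  funext j
  rw [Finset.Nat.sum_antidiagonal_eq_sum_range_succ (fun k l => bt x A k * bt x B l)]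
  exact coeff_eq x A B j

lemma summable_PCq (hx : 0 < x) (A B : ℕ) :
    Summable (fun j => PC A B j * ((x/2)^2) ^ j) := by
  rw [← antidiag_eq hx A B]
  exact (summable_norm_sum_mul_antidiagonal_of_summable_norm
    (summable_norm_bt hx A) (summable_norm_bt hx B)).of_norm

lemma prod_eq (hx : 0 < x) (A B : ℕ) :
    besselI A x * besselI B x
      = (x/2)^(A+B) * ∑' j, PC A B j * ((x/2)^2) ^ j := by
  rw [besselI_eq, besselI_eq]
  rw [mul_mul_mul_comm, ← pow_add]
  congr 1
  rw [tsum_mul_tsum_eq_tsum_sum_antidiagonal_of_summable_norm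
    (summable_norm_bt hx A) (summable_norm_bt hx B), antidiag_eq hx A B]


lemma keyL1 (m j : ℕ) :
    2 * PC (m+1) (m+1) j ≤ PC m (m+1) (j+1) + 2 * PC m (m+2) j := by
  unfold PC
  have i1 : (m+1) + (m+1) + 2*j = 2*m+2*j+2 := by ring
  have i2 : (m+1) + j = m+j+1 := by ring
  have i3 : (m+1) + (m+1) + j = 2*m+j+2 := by ring
  have i4 : m + (m+1) + 2*(j+1) = 2*m+2*j+3 := by ring
  have i5 : m + (j+1) = m+j+1 := by ring
  have i6 : m + (m+1) + (j+1) = 2*m+j+2 := by ring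
  have i7 : m + (m+2) + 2*j = 2*m+2*j+2 := by ring
  have i8 : m + (m+2) + j = 2*m+j+2 := by ring
  rw [i1, i2, i3, i4, i5, i6, i7, i8]
  set c1 := ((2*m+2*j+2).choose (m+j+1) : ℝ) with hc1
  set c2 := ((2*m+2*j+3).choose (m+j+1) : ℝ) with hc2
  set c3 := ((2*m+2*j+2).choose (m+j) : ℝ) with hc3
  have nat1 : (2*m+2*j+3).choose (m+j+1) = (2*m+2*j+2).choose (m+j) + (2*m+2*j+2).choose (m+j+1) :=
    Nat.choose_succ_succ' (2*m+2*j+2) (m+j)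
  have nat2 : (2*m+2*j+2).choose (m+j+1) * (m+j+1) = (2*m+2*j+2).choose (m+j) * (m+j+2) := by
    have := Nat.choose_succ_right_eq (2*m+2*j+2) (m+j)
    have e : 2*m+2*j+2 - (m+j) = m+j+2 := by omega
    rw [e] at this
    exact this
  have r1 : c2 = c3 + c1 := by rw [hc1, hc2, hc3]; exact_mod_cast nat1
  have r2 : c1 * (m+j+1) = c3 * (m+j+2) := by rw [hc1, hc3]; exact_mod_cast nat2
  have hc1n : 0 ≤ c1 := by rw [hc1]; positivity
  have hc3n : 0 ≤ c3 := by rw [hc3]; positivity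
  have hfj : (0:ℝ) < (Nat.factorial j : ℝ) := by exact_mod_cast Nat.factorial_pos j
  have hfj1 : (0:ℝ) < (Nat.factorial (j+1) : ℝ) := by exact_mod_cast Nat.factorial_pos (j+1)
  have hfF : (0:ℝ) < (Nat.factorial (2*m+j+2) : ℝ) := by
    exact_mod_cast Nat.factorial_pos (2*m+j+2)
  have hfs : (Nat.factorial (j+1) : ℝ) = (j+1) * (Nat.factorial j : ℝ) := by
    exact_mod_cast Nat.factorial_succ j
  rw [hfs]
  have key : 2 * c1 * ((j:ℝ)+1) ≤ c2 + 2 * c3 * ((j:ℝ)+1) := by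
    nlinarith [r1, r2, hc1n, hc3n]
  have hD : (0:ℝ) < ((j:ℝ)+1) * ((Nat.factorial j : ℝ) * (Nat.factorial (2*m+j+2) : ℝ)) := by
    positivity
  calc 2 * (c1 / ((Nat.factorial j : ℝ) * (Nat.factorial (2*m+j+2) : ℝ)))
      = (2 * c1 * ((j:ℝ)+1)) / (((j:ℝ)+1) * ((Nat.factorial j : ℝ) * (Nat.factorial (2*m+j+2) : ℝ))) := by
        field_simp
    _ ≤ (c2 + 2 * c3 * ((j:ℝ)+1)) / (((j:ℝ)+1) * ((Nat.factorial j : ℝ) * (Nat.factorial (2*m+j+2) : ℝ))) :=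
        (div_le_div_iff_of_pos_right hD).mpr key
    _ = c2 / (((j:ℝ)+1) * (Nat.factorial j : ℝ) * (Nat.factorial (2*m+j+2) : ℝ))
        + 2 * (c3 / ((Nat.factorial j : ℝ) * (Nat.factorial (2*m+j+2) : ℝ))) := by
        field_simp

lemma keyL2 (m j : ℕ) :
    ((m:ℝ)+1) * ((m:ℝ)+2) * PC (m+1) (m+1) j
      ≤ PC m (m+1) j + ((m:ℝ)+1) * ((m:ℝ)+2) * PC m (m+2) j := by
  unfold PC
  have i1 : (m+1) + (m+1) + 2*j = 2*m+2*j+2 := by ring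
  have i2 : (m+1) + j = m+j+1 := by ring
  have i3 : (m+1) + (m+1) + j = 2*m+j+2 := by ring
  have i4 : m + (m+1) + 2*j = 2*m+2*j+1 := by ring
  have i6 : m + (m+1) + j = 2*m+j+1 := by ring
  have i7 : m + (m+2) + 2*j = 2*m+2*j+2 := by ring
  have i8 : m + (m+2) + j = 2*m+j+2 := by ring
  rw [i1, i2, i3, i4, i6, i7, i8]
  set c1 := ((2*m+2*j+2).choose (m+j+1) : ℝ) with hc1
  set c4 := ((2*m+2*j+1).choose (m+j) : ℝ) with hc4
  set c3 := ((2*m+2*j+2).choose (m+j) : ℝ) with hc3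
  have nat2 : (2*m+2*j+2).choose (m+j+1) * (m+j+1) = (2*m+2*j+2).choose (m+j) * (m+j+2) := by
    have := Nat.choose_succ_right_eq (2*m+2*j+2) (m+j)
    have e : 2*m+2*j+2 - (m+j) = m+j+2 := by omega
    rw [e] at this; exact this
  have nat3 : (2*m+2*j+2) * (2*m+2*j+1).choose (m+j) = (2*m+2*j+2).choose (m+j+1) * (m+j+1) := by
    have := Nat.add_one_mul_choose_eq (2*m+2*j+1) (m+j)
    exact_mod_cast this
  have r2 : c1 * ((m:ℝ)+(j:ℝ)+1) = c3 * ((m:ℝ)+(j:ℝ)+2) := by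
    rw [hc1, hc3]; exact_mod_cast nat2
  have r3 : (2*(m:ℝ)+2*(j:ℝ)+2) * c4 = c1 * ((m:ℝ)+(j:ℝ)+1) := by
    rw [hc1, hc4]; exact_mod_cast nat3
  have hc1n : 0 ≤ c1 := by rw [hc1]; positivity
  have hc3n : 0 ≤ c3 := by rw [hc3]; positivity
  have hc4n : 0 ≤ c4 := by rw [hc4]; positivity
  have hfj : (0:ℝ) < (Nat.factorial j : ℝ) := by exact_mod_cast Nat.factorial_pos j
  have hfF1 : (0:ℝ) < (Nat.factorial (2*m+j+1) : ℝ) := by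
    exact_mod_cast Nat.factorial_pos (2*m+j+1)
  have hfs : (Nat.factorial (2*m+j+2) : ℝ)
      = (2*(m:ℝ)+(j:ℝ)+2) * (Nat.factorial (2*m+j+1) : ℝ) := by
    have := Nat.factorial_succ (2*m+j+1)
    have e : 2*m+j+1+1 = 2*m+j+2 := by omega
    rw [e] at this
    push_cast [this]; ring
  rw [hfs]
  have key : ((m:ℝ)+1) * ((m:ℝ)+2) * c1 ≤ (2*(m:ℝ)+(j:ℝ)+2) * c4 + ((m:ℝ)+1) * ((m:ℝ)+2) * c3 := by
    have hm : (0:ℝ) ≤ (m:ℝ) := Nat.cast_nonneg m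
    have hj : (0:ℝ) ≤ (j:ℝ) := Nat.cast_nonneg j
    -- (m+j+1) * goal
    have e1 : ((m:ℝ)+1)*((m:ℝ)+2)*c1*(((m:ℝ)+(j:ℝ)+1)*((m:ℝ)+(j:ℝ)+2))
        = 2*((m:ℝ)+1)*((m:ℝ)+2)*((m:ℝ)+(j:ℝ)+1)*((m:ℝ)+(j:ℝ)+2)*c4 := by
      linear_combination (((m:ℝ)+1)*((m:ℝ)+2)*((m:ℝ)+(j:ℝ)+2)) * r3.symm
    have e2 : ((m:ℝ)+1)*((m:ℝ)+2)*c3*(((m:ℝ)+(j:ℝ)+1)*((m:ℝ)+(j:ℝ)+2))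
        = 2*((m:ℝ)+1)*((m:ℝ)+2)*((m:ℝ)+(j:ℝ)+1)*((m:ℝ)+(j:ℝ)+1)*c4 := by
      linear_combination (((m:ℝ)+1)*((m:ℝ)+2)*((m:ℝ)+(j:ℝ)+1)) * (r2.symm)
        + (((m:ℝ)+1)*((m:ℝ)+2)*((m:ℝ)+(j:ℝ)+1)) * r3.symm
    have hq : (0:ℝ) ≤ (2*(m:ℝ)+(j:ℝ)+2)*((m:ℝ)+(j:ℝ)+2) - 2*((m:ℝ)+1)*((m:ℝ)+2) := by
      nlinarith [hm, hj, mul_nonneg hm hj, mul_nonneg hj hj]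
    have hq2 : (0:ℝ) ≤ c4 * (((m:ℝ)+(j:ℝ)+1) * ((2*(m:ℝ)+(j:ℝ)+2)*((m:ℝ)+(j:ℝ)+2) - 2*((m:ℝ)+1)*((m:ℝ)+2))) :=
      mul_nonneg hc4n (mul_nonneg (by positivity) hq)
    have step : ((m:ℝ)+1)*((m:ℝ)+2)*c1*(((m:ℝ)+(j:ℝ)+1)*((m:ℝ)+(j:ℝ)+2))
        ≤ ((2*(m:ℝ)+(j:ℝ)+2)*c4 + ((m:ℝ)+1)*((m:ℝ)+2)*c3)*(((m:ℝ)+(j:ℝ)+1)*((m:ℝ)+(j:ℝ)+2)) := by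
      nlinarith [e1, e2, hq2]
    have hpos : (0:ℝ) < ((m:ℝ)+(j:ℝ)+1)*((m:ℝ)+(j:ℝ)+2) := by positivity
    exact le_of_mul_le_mul_right step hpos
  have hD : (0:ℝ) < (Nat.factorial j : ℝ) * ((2*(m:ℝ)+(j:ℝ)+2) * (Nat.factorial (2*m+j+1) : ℝ)) := by
    positivity
  calc ((m:ℝ)+1) * ((m:ℝ)+2) * (c1 / ((Nat.factorial j : ℝ) * ((2*(m:ℝ)+(j:ℝ)+2) * (Nat.factorial (2*m+j+1) : ℝ))))
      = (((m:ℝ)+1) * ((m:ℝ)+2) * c1) / ((Nat.factorial j : ℝ) * ((2*(m:ℝ)+(j:ℝ)+2) * (Nat.factorial (2*m+j+1) : ℝ))) := by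
        ring
    _ ≤ ((2*(m:ℝ)+(j:ℝ)+2) * c4 + ((m:ℝ)+1) * ((m:ℝ)+2) * c3) / ((Nat.factorial j : ℝ) * ((2*(m:ℝ)+(j:ℝ)+2) * (Nat.factorial (2*m+j+1) : ℝ))) :=
        (div_le_div_iff_of_pos_right hD).mpr key
    _ = c4 / ((Nat.factorial j : ℝ) * (Nat.factorial (2*m+j+1) : ℝ))
        + ((m:ℝ)+1) * ((m:ℝ)+2) * (c3 / ((Nat.factorial j : ℝ) * ((2*(m:ℝ)+(j:ℝ)+2) * (Nat.factorial (2*m+j+1) : ℝ)))) := by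
        field_simp

lemma keyK0 : 144 * PC 1 2 1 + 32 * PC 1 2 0 + 144 * PC 1 3 0
    ≤ 144 * PC 0 2 1 + 24 * PC 0 2 0 := by
  unfold PC
  norm_num [Nat.factorial, Nat.choose]

lemma keyK1 (j : ℕ) :
    144 * PC 1 2 (j+2) + 32 * PC 1 2 (j+1) + 144 * PC 1 3 (j+1) + 24 * PC 1 3 j
      ≤ 144 * PC 0 2 (j+2) + 24 * PC 0 2 (j+1) := by
  unfold PC
  have i1 : 1 + 2 + 2*(j+2) = 2*j+7 := by ring
  have i2 : 1 + (j+2) = j+3 := by ring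
  have i3 : 1 + 2 + (j+2) = j+5 := by ring
  have i4 : 1 + 2 + 2*(j+1) = 2*j+5 := by ring
  have i5 : 1 + (j+1) = j+2 := by ring
  have i6 : 1 + 2 + (j+1) = j+4 := by ring
  have i7 : 1 + 3 + 2*(j+1) = 2*j+6 := by ring
  have i8 : 1 + 3 + (j+1) = j+5 := by ring
  have i9 : 1 + 3 + 2*j = 2*j+4 := by ring
  have i10 : 1 + j = j+1 := by ring
  have i11 : 1 + 3 + j = j+4 := by ring
  have i12 : 0 + 2 + 2*(j+2) = 2*j+6 := by ring
  have i13 : 0 + (j+2) = j+2 := by ring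
  have i14 : 0 + 2 + (j+2) = j+4 := by ring
  have i15 : 0 + 2 + 2*(j+1) = 2*j+4 := by ring
  have i16 : 0 + (j+1) = j+1 := by ring
  have i17 : 0 + 2 + (j+1) = j+3 := by ring
  rw [i1, i2, i3, i4, i5, i6, i7, i8, i9, i10, i11, i12, i13, i14, i15, i16, i17]
  set J := (j:ℝ) with hJ
  have hJ0 : 0 ≤ J := Nat.cast_nonneg j
  set c := ((2*j+4).choose (j+1) : ℝ) with hc
  set d := ((2*j+5).choose (j+2) : ℝ) with hd
  set e2 := ((2*j+6).choose (j+2) : ℝ) with he2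
  set f := ((2*j+7).choose (j+3) : ℝ) with hf
  have hcn : 0 ≤ c := by rw [hc]; positivity
  -- ladder identities
  have lad1 : d * (J+2) = c * (2*J+5) := by
    have := Nat.add_one_mul_choose_eq (2*j+4) (j+1)
    have e : 2*j+4+1 = 2*j+5 := by omega
    have e' : j+1+1 = j+2 := by omega
    rw [e, e'] at this
    have tc : (2*J+5) * c = d * (J+2) := by rw [hc, hd, hJ]; exact_mod_cast this
    linear_combination -tc
  have lad2 : e2 * (J+4) = d * (2*J+6) := by
    have := Nat.choose_mul_succ_eq (2*j+5) (j+2)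
    have e : 2*j+5+1 = 2*j+6 := by omega
    have e' : 2*j+5+1 - (j+2) = j+4 := by omega
    rw [e, e'] at this
    have tc : d * (2*J+6) = e2 * (J+4) := by rw [hd, he2, hJ]; exact_mod_cast this
    linear_combination -tc
  have lad3 : f * (J+3) = e2 * (2*J+7) := by
    have := Nat.add_one_mul_choose_eq (2*j+6) (j+2)
    have e : 2*j+6+1 = 2*j+7 := by omega
    have e' : j+2+1 = j+3 := by omega
    rw [e, e'] at this
    have tc : (2*J+7) * e2 = f * (J+3) := by rw [hf, he2, hJ]; exact_mod_cast this
    linear_combination -tc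
  -- factorial rewrites
  have hF5 : (Nat.factorial (j+5) : ℝ) = (J+5)*(J+4)*(Nat.factorial (j+3) : ℝ) := by
    have h1 : j+5 = (j+4)+1 := by omega
    have h2 : j+4 = (j+3)+1 := by omega
    rw [h1, Nat.factorial_succ, h2, Nat.factorial_succ]
    push_cast
    ring
  have hF4 : (Nat.factorial (j+4) : ℝ) = (J+4)*(Nat.factorial (j+3) : ℝ) := by
    have h2 : j+4 = (j+3)+1 := by omega
    rw [h2, Nat.factorial_succ]
    push_cast
    ring
  have hF2 : (Nat.factorial (j+2) : ℝ) = (J+2)*(J+1)*(Nat.factorial j : ℝ) := by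
    have h1 : j+2 = (j+1)+1 := by omega
    rw [h1, Nat.factorial_succ, Nat.factorial_succ]
    push_cast
    ring
  have hF1 : (Nat.factorial (j+1) : ℝ) = (J+1)*(Nat.factorial j : ℝ) := by
    rw [Nat.factorial_succ]
    push_cast
    ring
  rw [hF5, hF4, hF2, hF1]
  set jf := (Nat.factorial j : ℝ) with hjf
  set g3 := (Nat.factorial (j+3) : ℝ) with hg3
  have hjfp : 0 < jf := by rw [hjf]; exact_mod_cast Nat.factorial_pos j
  have hg3p : 0 < g3 := by rw [hg3]; exact_mod_cast Nat.factorial_pos (j+3)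
  have hD : (0:ℝ) < ((J+2)*(J+1)*jf) * ((J+5)*(J+4)*g3) := by positivity
  -- cleared forms
  set CL := 144*f + 32*d*(J+2)*(J+5) + 144*e2*(J+2) + 24*c*(J+1)*(J+2)*(J+5) with hCL
  set CR := 144*e2*(J+5) + 24*c*(J+2)*(J+4)*(J+5) with hCR
  have hP : (0:ℝ) < (J+2)*(J+3)*(J+4) := by positivity
  have q1 : CL * ((J+2)*(J+3)*(J+4))
      = c * (144*(2*J+5)*(2*J+6)*(2*J+7) + 32*(2*J+5)*(J+2)*(J+3)*(J+4)*(J+5)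
          + 144*(2*J+5)*(2*J+6)*(J+2)*(J+3) + 24*(J+1)*(J+2)^2*(J+3)*(J+4)*(J+5)) := by
    rw [hCL]
    linear_combination (144*(J+2)*(J+4)) * lad3
      + (144*(J+2)*(2*J+7) + 144*(J+2)^2*(J+3)) * lad2
      + (144*(2*J+7)*(2*J+6) + 32*(J+5)*(J+2)*(J+3)*(J+4) + 144*(J+2)*(J+3)*(2*J+6)) * lad1
  have q2 : CR * ((J+2)*(J+3)*(J+4))
      = c * (144*(2*J+5)*(2*J+6)*(J+3)*(J+5) + 24*(J+2)^2*(J+3)*(J+4)^2*(J+5)) := by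
    rw [hCR]
    linear_combination (144*(J+5)*(J+2)*(J+3)) * lad2
      + (144*(J+5)*(J+3)*(2*J+6)) * lad1
  have hpoly : 144*(2*J+5)*(2*J+6)*(2*J+7) + 32*(2*J+5)*(J+2)*(J+3)*(J+4)*(J+5)
          + 144*(2*J+5)*(2*J+6)*(J+2)*(J+3) + 24*(J+1)*(J+2)^2*(J+3)*(J+4)*(J+5)
      ≤ 144*(2*J+5)*(2*J+6)*(J+3)*(J+5) + 24*(J+2)^2*(J+3)*(J+4)^2*(J+5) := by
    nlinarith [hJ0, pow_nonneg hJ0 2, pow_nonneg hJ0 3, pow_nonneg hJ0 4, pow_nonneg hJ0 5]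
  have keyineq : CL ≤ CR := by
    have h1 : CL * ((J+2)*(J+3)*(J+4)) ≤ CR * ((J+2)*(J+3)*(J+4)) := by
      rw [q1, q2]
      exact mul_le_mul_of_nonneg_left hpoly hcn
    exact le_of_mul_le_mul_right h1 hP
  -- final: both sides equal CL/D and CR/D
  have eL : 144 * (f / ((J+2)*(J+1)*jf * ((J+5)*(J+4)*g3)))
      + 32 * (d / ((J+1)*jf * ((J+4)*g3)))
      + 144 * (e2 / ((J+1)*jf * ((J+5)*(J+4)*g3)))
      + 24 * (c / (jf * ((J+4)*g3)))
      = CL / (((J+2)*(J+1)*jf) * ((J+5)*(J+4)*g3)) := by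
    rw [hCL]
    field_simp
  have eR : 144 * (e2 / ((J+2)*(J+1)*jf * ((J+4)*g3)))
      + 24 * (c / ((J+1)*jf * g3))
      = CR / (((J+2)*(J+1)*jf) * ((J+5)*(J+4)*g3)) := by
    rw [hCR]
    field_simp
  rw [eL, eR]
  exact (div_le_div_iff_of_pos_right hD).mpr keyineq


lemma summable_PCq_shift (hx : 0 < x) (A B : ℕ) :
    Summable (fun j => PC A B (j+1) * ((x/2)^2) ^ (j+1)) :=
  (summable_nat_add_iff 1).mpr (summable_PCq hx A B)

/-- tail bound : dropping the 0-th term -/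
lemma tail_le (hx : 0 < x) (A B : ℕ) :
    ∑' j, PC A B (j+1) * ((x/2)^2) ^ (j+1) ≤ ∑' j, PC A B j * ((x/2)^2) ^ j := by
  rw [Summable.tsum_eq_zero_add (summable_PCq hx A B)]
  have h0 : 0 ≤ PC A B 0 * ((x/2)^2) ^ 0 := by
    apply mul_nonneg (PC_nonneg A B 0); positivity
  linarith

lemma summable_shift_c (hx : 0 < x) (A B : ℕ) (c : ℝ) :
    Summable (fun j => c * PC A B j * ((x/2)^2) ^ (j+1)) := by
  have h := (summable_PCq hx A B).mul_left (c * ((x/2)^2))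
  apply h.congr
  intro j
  ring

lemma L1' (hx : 0 < x) (m : ℕ) :
    2 * ((x/2)^2) * ∑' j, PC (m+1) (m+1) j * ((x/2)^2) ^ j
      ≤ (∑' j, PC m (m+1) j * ((x/2)^2) ^ j)
        + 2 * ((x/2)^2) * ∑' j, PC m (m+2) j * ((x/2)^2) ^ j := by
  set q2 := ((x/2)^2) with hq2
  have hq2p : 0 < q2 := by rw [hq2]; positivity
  have e1 : 2 * q2 * ∑' j, PC (m+1) (m+1) j * q2 ^ j
      = ∑' j, 2 * PC (m+1) (m+1) j * q2 ^ (j+1) := by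
    rw [← tsum_mul_left]
    congr 1; funext j; ring
  have e3 : 2 * q2 * ∑' j, PC m (m+2) j * q2 ^ j
      = ∑' j, 2 * PC m (m+2) j * q2 ^ (j+1) := by
    rw [← tsum_mul_left]
    congr 1; funext j; ring
  rw [e1, e3]
  have hs1 : Summable (fun j => 2 * PC (m+1) (m+1) j * q2 ^ (j+1)) := summable_shift_c hx _ _ 2
  have hs2 : Summable (fun j => PC m (m+1) (j+1) * q2 ^ (j+1)) := summable_PCq_shift hx m (m+1)
  have hs3 : Summable (fun j => 2 * PC m (m+2) j * q2 ^ (j+1)) := summable_shift_c hx _ _ 2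
  have step1 : ∑' j, 2 * PC (m+1) (m+1) j * q2 ^ (j+1)
      ≤ ∑' j, (PC m (m+1) (j+1) * q2 ^ (j+1) + 2 * PC m (m+2) j * q2 ^ (j+1)) := by
    apply Summable.tsum_le_tsum _ hs1 (hs2.add hs3)
    intro j
    have h := keyL1 m j
    nlinarith [pow_pos hq2p (j+1)]
  have step2 : ∑' j, (PC m (m+1) (j+1) * q2 ^ (j+1) + 2 * PC m (m+2) j * q2 ^ (j+1))
      = (∑' j, PC m (m+1) (j+1) * q2 ^ (j+1)) + ∑' j, 2 * PC m (m+2) j * q2 ^ (j+1) :=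
    Summable.tsum_add hs2 hs3
  have step3 : ∑' j, PC m (m+1) (j+1) * q2 ^ (j+1) ≤ ∑' j, PC m (m+1) j * q2 ^ j :=
    tail_le hx m (m+1)
  linarith

lemma L2' (hx : 0 < x) (m : ℕ) :
    ((m:ℝ)+1) * ((m:ℝ)+2) * ∑' j, PC (m+1) (m+1) j * ((x/2)^2) ^ j
      ≤ (∑' j, PC m (m+1) j * ((x/2)^2) ^ j)
        + ((m:ℝ)+1) * ((m:ℝ)+2) * ∑' j, PC m (m+2) j * ((x/2)^2) ^ j := by
  set q2 := ((x/2)^2) with hq2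
  have hq2p : 0 < q2 := by rw [hq2]; positivity
  rw [mul_comm (((m:ℝ)+1) * ((m:ℝ)+2)) (∑' j, PC (m+1) (m+1) j * q2 ^ j),
    mul_comm (((m:ℝ)+1) * ((m:ℝ)+2)) (∑' j, PC m (m+2) j * q2 ^ j),
    ← tsum_mul_right, ← tsum_mul_right]
  have hs1 : Summable (fun j => PC (m+1) (m+1) j * q2 ^ j * (((m:ℝ)+1) * ((m:ℝ)+2))) :=
    (summable_PCq hx (m+1) (m+1)).mul_right _
  have hs2 : Summable (fun j => PC m (m+1) j * q2 ^ j) := summable_PCq hx m (m+1)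
  have hs3 : Summable (fun j => PC m (m+2) j * q2 ^ j * (((m:ℝ)+1) * ((m:ℝ)+2))) :=
    (summable_PCq hx m (m+2)).mul_right _
  have := Summable.tsum_add hs2 hs3
  rw [← this]
  apply Summable.tsum_le_tsum _ hs1 (hs2.add hs3)
  intro j
  have h := keyL2 m j
  nlinarith [pow_pos hq2p j]

lemma L3' (hx : 0 < x) :
    144 * ∑' j, PC 1 2 j * ((x/2)^2) ^ j
      + 32 * ((x/2)^2) * ∑' j, PC 1 2 j * ((x/2)^2) ^ j
      + 144 * ((x/2)^2) * ∑' j, PC 1 3 j * ((x/2)^2) ^ j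
      + 24 * ((x/2)^2)^2 * ∑' j, PC 1 3 j * ((x/2)^2) ^ j
    ≤ 144 * ∑' j, PC 0 2 j * ((x/2)^2) ^ j
      + 24 * ((x/2)^2) * ∑' j, PC 0 2 j * ((x/2)^2) ^ j := by
  set q2 := ((x/2)^2) with hq2
  have hq2p : 0 < q2 := by rw [hq2]; positivity
  -- summability helpers
  have S0 : ∀ A B : ℕ, Summable (fun j => PC A B j * q2 ^ j) := fun A B => summable_PCq hx A B
  have S1 : ∀ A B : ℕ, Summable (fun j => PC A B (j+1) * q2 ^ (j+1)) :=
    fun A B => (summable_nat_add_iff 1).mpr (S0 A B)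
  have S2 : ∀ A B : ℕ, Summable (fun j => PC A B (j+2) * q2 ^ (j+2)) :=
    fun A B => (summable_nat_add_iff 2).mpr (S0 A B)
  have T2 : ∀ (A B : ℕ) (c : ℝ), Summable (fun j => c * PC A B (j+2) * q2 ^ (j+2)) :=
    fun A B c => ((S2 A B).mul_left c).congr (fun j => by ring)
  have T1 : ∀ (A B : ℕ) (c : ℝ), Summable (fun j => c * PC A B (j+1) * q2 ^ (j+2)) :=
    fun A B c => ((S1 A B).mul_left (c * q2)).congr (fun j => by ring)
  have T0 : ∀ (A B : ℕ) (c : ℝ), Summable (fun j => c * PC A B j * q2 ^ (j+2)) :=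
    fun A B c => ((S0 A B).mul_left (c * q2^2)).congr (fun j => by ring)
  -- decompositions
  have dec : ∀ A B : ℕ, ∑' j, PC A B j * q2 ^ j
      = PC A B 0 + PC A B 1 * q2 + ∑' j, PC A B (j+2) * q2 ^ (j+2) := by
    intro A B
    rw [Summable.tsum_eq_zero_add (S0 A B), Summable.tsum_eq_zero_add (S1 A B)]
    norm_num
    ring
  have E1 : 144 * ∑' j, PC 1 2 j * q2 ^ j
      = 144 * PC 1 2 0 + 144 * PC 1 2 1 * q2 + ∑' j, 144 * PC 1 2 (j+2) * q2 ^ (j+2) := by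
    rw [dec 1 2]
    have h : (144:ℝ) * ∑' j, PC 1 2 (j+2) * q2 ^ (j+2) = ∑' j, 144 * PC 1 2 (j+2) * q2 ^ (j+2) := by
      rw [← tsum_mul_left]; exact tsum_congr (fun j => by ring)
    linarith [h]
  have E5 : 144 * ∑' j, PC 0 2 j * q2 ^ j
      = 144 * PC 0 2 0 + 144 * PC 0 2 1 * q2 + ∑' j, 144 * PC 0 2 (j+2) * q2 ^ (j+2) := by
    rw [dec 0 2]
    have h : (144:ℝ) * ∑' j, PC 0 2 (j+2) * q2 ^ (j+2) = ∑' j, 144 * PC 0 2 (j+2) * q2 ^ (j+2) := by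
      rw [← tsum_mul_left]; exact tsum_congr (fun j => by ring)
    linarith [h]
  have dec1 : ∀ (A B : ℕ) (c : ℝ), c * q2 * (∑' j, PC A B j * q2 ^ j)
      = c * PC A B 0 * q2 + ∑' j, c * PC A B (j+1) * q2 ^ (j+2) := by
    intro A B c
    rw [Summable.tsum_eq_zero_add (S0 A B)]
    have h : c * q2 * ∑' j, PC A B (j+1) * q2 ^ (j+1) = ∑' j, c * PC A B (j+1) * q2 ^ (j+2) := by
      rw [← tsum_mul_left]; exact tsum_congr (fun j => by ring)
    rw [mul_add, h]
    ring
  have E4 : 24 * q2^2 * ∑' j, PC 1 3 j * q2 ^ j = ∑' j, 24 * PC 1 3 j * q2 ^ (j+2) := by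
    rw [← tsum_mul_left]
    congr 1; funext j; ring
  -- head comparison facts
  have head0 : PC 1 2 0 = PC 0 2 0 := by
    unfold PC; norm_num [Nat.factorial, Nat.choose]
  have head1 : 144 * PC 1 2 1 + 32 * PC 1 2 0 + 144 * PC 1 3 0
      ≤ 144 * PC 0 2 1 + 24 * PC 0 2 0 := keyK0
  -- tail comparison
  have tail : (∑' j, 144 * PC 1 2 (j+2) * q2 ^ (j+2)) + (∑' j, 32 * PC 1 2 (j+1) * q2 ^ (j+2))
      + (∑' j, 144 * PC 1 3 (j+1) * q2 ^ (j+2)) + (∑' j, 24 * PC 1 3 j * q2 ^ (j+2))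
      ≤ (∑' j, 144 * PC 0 2 (j+2) * q2 ^ (j+2)) + (∑' j, 24 * PC 0 2 (j+1) * q2 ^ (j+2)) := by
    rw [← Summable.tsum_add (T2 1 2 144) (T1 1 2 32), ← Summable.tsum_add ((T2 1 2 144).add (T1 1 2 32)) (T1 1 3 144),
      ← Summable.tsum_add (((T2 1 2 144).add (T1 1 2 32)).add (T1 1 3 144)) (T0 1 3 24),
      ← Summable.tsum_add (T2 0 2 144) (T1 0 2 24)]
    apply Summable.tsum_le_tsum _ ((((T2 1 2 144).add (T1 1 2 32)).add (T1 1 3 144)).add (T0 1 3 24))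
      ((T2 0 2 144).add (T1 0 2 24))
    intro j
    have h := keyK1 j
    nlinarith [pow_pos hq2p (j+2)]
  have e12 : 32 * q2 * (∑' j, PC 1 2 j * q2 ^ j)
      = 32 * PC 1 2 0 * q2 + ∑' j, 32 * PC 1 2 (j+1) * q2 ^ (j+2) := dec1 1 2 32
  have e13 : 144 * q2 * (∑' j, PC 1 3 j * q2 ^ j)
      = 144 * PC 1 3 0 * q2 + ∑' j, 144 * PC 1 3 (j+1) * q2 ^ (j+2) := dec1 1 3 144
  have e02 : 24 * q2 * (∑' j, PC 0 2 j * q2 ^ j)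
      = 24 * PC 0 2 0 * q2 + ∑' j, 24 * PC 0 2 (j+1) * q2 ^ (j+2) := dec1 0 2 24
  nlinarith [tail, head1, mul_le_mul_of_nonneg_right head1 hq2p.le, E1, E5, e12, e13, e02, head0]


lemma bes_L1 (hx : 0 < x) (m : ℕ) :
    x * (besselI (m+1) x * besselI (m+1) x)
      ≤ besselI m x * besselI (m+1) x + x * (besselI m x * besselI (m+2) x) := by
  have key := L1' hx m
  have hq : (0:ℝ) < x/2 := by positivity
  have p1 : (x/2)^((m+1)+(m+1)) = (x/2)^(m+(m+1)) * (x/2) := by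
    rw [show (m+1)+(m+1) = (m+(m+1))+1 from by omega, pow_succ]
  have p2 : (x/2)^(m+(m+2)) = (x/2)^(m+(m+1)) * (x/2) := by
    rw [show m+(m+2) = (m+(m+1))+1 from by omega, pow_succ]
  rw [prod_eq hx (m+1) (m+1), prod_eq hx m (m+1), prod_eq hx m (m+2), p1, p2]
  have hK : (0:ℝ) ≤ (x/2)^(m+(m+1)) := by positivity
  nlinarith [mul_le_mul_of_nonneg_left key hK]

lemma bes_L2 (hx : 0 < x) (m : ℕ) :
    2 * (((m:ℝ)+1) * ((m:ℝ)+2)) * (besselI (m+1) x * besselI (m+1) x)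
      ≤ x * (besselI m x * besselI (m+1) x)
        + 2 * (((m:ℝ)+1) * ((m:ℝ)+2)) * (besselI m x * besselI (m+2) x) := by
  have key := L2' hx m
  have hq : (0:ℝ) < x/2 := by positivity
  have p1 : (x/2)^((m+1)+(m+1)) = (x/2)^(m+(m+1)) * (x/2) := by
    rw [show (m+1)+(m+1) = (m+(m+1))+1 from by omega, pow_succ]
  have p2 : (x/2)^(m+(m+2)) = (x/2)^(m+(m+1)) * (x/2) := by
    rw [show m+(m+2) = (m+(m+1))+1 from by omega, pow_succ]
  rw [prod_eq hx (m+1) (m+1), prod_eq hx m (m+1), prod_eq hx m (m+2), p1, p2]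
  have hK : (0:ℝ) ≤ 2 * ((x/2)^(m+(m+1)) * (x/2)) := by positivity
  nlinarith [mul_le_mul_of_nonneg_left key hK]

lemma bes_L3 (hx : 0 < x) :
    144 * (besselI 1 x * besselI 2 x) + 8 * x^2 * (besselI 1 x * besselI 2 x)
      + 72 * x * (besselI 1 x * besselI 3 x) + 3 * x^3 * (besselI 1 x * besselI 3 x)
    ≤ 72 * x * (besselI 0 x * besselI 2 x) + 3 * x^3 * (besselI 0 x * besselI 2 x) := by
  have key := L3' hx
  rw [prod_eq hx 1 2, prod_eq hx 1 3, prod_eq hx 0 2]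
  have hK : (0:ℝ) ≤ (x/2)^3 := by positivity
  nlinarith [mul_le_mul_of_nonneg_left key hK]


/-- the ratio I_{m+1}/I_m -/
noncomputable def rr (x : ℝ) (m : ℕ) : ℝ := besselI (m+1) x / besselI m x

/-- the denominator expression -/
noncomputable def Dn (x : ℝ) (n : ℕ) : ℝ :=
  1 - 2 * besselI 1 x / (x * besselI 0 x)
    - besselI 1 x * besselI (n + 1) x / (besselI 0 x * besselI n x)

lemma r_step_1 (hx : 0 < x) (m : ℕ) : rr x m - rr x (m+1) ≤ 1/x := by
  unfold rr
  have h0 := besselI_pos hx m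
  have h1 := besselI_pos hx (m+1)
  have h2 := besselI_pos hx (m+2)
  rw [div_sub_div _ _ (ne_of_gt h0) (ne_of_gt h1), div_le_div_iff₀ (by positivity) hx]
  have := bes_L1 hx m
  nlinarith [this]

lemma r_step_2 (hx : 0 < x) (m : ℕ) :
    rr x m - rr x (m+1) ≤ x / (2 * (((m:ℝ)+1) * ((m:ℝ)+2))) := by
  unfold rr
  have h0 := besselI_pos hx m
  have h1 := besselI_pos hx (m+1)
  have h2 := besselI_pos hx (m+2)
  rw [div_sub_div _ _ (ne_of_gt h0) (ne_of_gt h1), div_le_div_iff₀ (by positivity) (by positivity)]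
  have := bes_L2 hx m
  nlinarith [this]

lemma D2_ge (hx : 0 < x) :
    2 * x * (besselI 1 x / besselI 0 x) ≤ 3 * (24 + x^2) * Dn x 2 := by
  have h0 := besselI_pos hx 0
  have h1 := besselI_pos hx 1
  have h2 := besselI_pos hx 2
  have h3 := besselI_pos hx 3
  have h3' : besselI (2+1) x = besselI 3 x := by norm_num
  have expand : 3 * (24 + x^2) * Dn x 2 - 2 * x * (besselI 1 x / besselI 0 x)
      = (3 * (24 + x^2) * (x * (besselI 0 x * besselI 2 x) - 2 * (besselI 1 x * besselI 2 x)
          - x * (besselI 1 x * besselI 3 x)) - 2 * x^2 * (besselI 1 x * besselI 2 x))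
        / (x * (besselI 0 x * besselI 2 x)) := by
    unfold Dn
    rw [h3']
    field_simp
  have key := bes_L3 hx
  have : 0 ≤ 3 * (24 + x^2) * Dn x 2 - 2 * x * (besselI 1 x / besselI 0 x) := by
    rw [expand]
    apply div_nonneg _ (by positivity)
    nlinarith [key]
  linarith

lemma D2_pos (hx : 0 < x) : 0 < Dn x 2 := by
  have h0 := besselI_pos hx 0
  have h1 := besselI_pos hx 1
  have hb : 0 < 2 * x * (besselI 1 x / besselI 0 x) := by positivity
  have := D2_ge hx
  nlinarith

lemma step_lemma (hx : 0 < x) (m : ℕ) (hm : 2 ≤ m) :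
    (besselI 1 x / besselI 0 x) * (rr x m - rr x (m+1))
      ≤ ((m:ℝ) * ((m:ℝ)+1) / 2) * Dn x 2 := by
  have hmR : (2:ℝ) ≤ (m:ℝ) := by exact_mod_cast hm
  have hd1 := r_step_1 hx m
  have hd2 := r_step_2 hx m
  have hden : (0:ℝ) < 2 * (((m:ℝ)+1) * ((m:ℝ)+2)) := by positivity
  have hx24 : (0:ℝ) < 24 + x^2 := by positivity
  -- d ≤ 2x/(24+x²)
  have hd : rr x m - rr x (m+1) ≤ 2*x / (24 + x^2) := by
    rw [le_div_iff₀ hx24]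
    have e1 : (rr x m - rr x (m+1)) * x^2 ≤ x := by
      have := mul_le_mul_of_nonneg_right hd1 (sq_nonneg x)
      calc (rr x m - rr x (m+1)) * x^2 ≤ 1/x * x^2 := this
        _ = x := by field_simp
    have e2 : (rr x m - rr x (m+1)) * 24 ≤ x := by
      have h24 : (24:ℝ) ≤ 2 * (((m:ℝ)+1) * ((m:ℝ)+2)) := by nlinarith
      have := mul_le_mul_of_nonneg_right hd2 (by norm_num : (0:ℝ) ≤ 24)
      calc (rr x m - rr x (m+1)) * 24 ≤ x / (2 * (((m:ℝ)+1) * ((m:ℝ)+2))) * 24 := this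
        _ ≤ x := by
          rw [div_mul_eq_mul_div, div_le_iff₀ hden]
          nlinarith
    nlinarith
  have hb : 0 < besselI 1 x / besselI 0 x := by
    have h0 := besselI_pos hx 0
    have h1 := besselI_pos hx 1
    positivity
  have hD2 := D2_pos hx
  have hge := D2_ge hx
  -- b * d ≤ b * 2x/(24+x²) ≤ 3 D2 ≤ m(m+1)/2 D2
  have c1 : (besselI 1 x / besselI 0 x) * (rr x m - rr x (m+1))
      ≤ (besselI 1 x / besselI 0 x) * (2*x / (24 + x^2)) :=
    mul_le_mul_of_nonneg_left hd hb.le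
  have c2 : (besselI 1 x / besselI 0 x) * (2*x / (24 + x^2)) ≤ 3 * Dn x 2 := by
    rw [← mul_div_assoc, div_le_iff₀ hx24]
    nlinarith [hge]
  have c3 : 3 * Dn x 2 ≤ ((m:ℝ) * ((m:ℝ)+1) / 2) * Dn x 2 := by
    apply mul_le_mul_of_nonneg_right _ hD2.le
    nlinarith
  linarith

lemma Dn_succ (hx : 0 < x) (n : ℕ) :
    Dn x (n+1) = Dn x n + (besselI 1 x / besselI 0 x) * (rr x n - rr x (n+1)) := by
  unfold Dn rr
  have h0 := besselI_pos hx 0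
  have h1 := besselI_pos hx n
  have h2 := besselI_pos hx (n+1)
  have h3 := besselI_pos hx (n+2)
  have e : n + 1 + 1 = n + 2 := by omega
  rw [e]
  field_simp
  ring

lemma main_ineq (hx : 0 < x) (n : ℕ) (hn : 2 ≤ n) :
    6 * Dn x n ≤ ((n:ℝ)^3 - (n:ℝ)) * Dn x 2 := by
  induction n, hn using Nat.le_induction with
  | base => norm_num
  | succ n hn ih =>
    have hstep := step_lemma hx n hn
    have := Dn_succ hx n
    have hcast : ((n:ℝ)+1)^3 - ((n:ℝ)+1) = ((n:ℝ)^3 - (n:ℝ)) + 3*(n:ℝ)*((n:ℝ)+1) := by ring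
    push_cast
    nlinarith [hstep, ih]

end SpecAux

/-- Lemma 4.5 (uniform spectral bound): let `R > 0` and `μ_* := μ₂(R)`. For every
`0 < μ < μ_*` there exists `δ > 0`, independent of `n`, such that for every `n ≥ 2`,
`μ(1 − 2I₁(R)/(R I₀(R)) − I₁(R)I_{n+1}(R)/(I₀(R)I_n(R))) − n(n²−1)/R³ < −δ n³`. -/
theorem uniform_spectral_bound (R : ℝ) (hR : 0 < R) (μ : ℝ)
    (hμ : 0 < μ) (hμ₂ : μ < mu 2 R) :
    ∃ δ > 0, ∀ n : ℕ, 2 ≤ n →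
      μ * (1 - 2 * besselI 1 R / (R * besselI 0 R)
          - besselI 1 R * besselI (n + 1) R / (besselI 0 R * besselI n R))
        - (n : ℝ) * ((n : ℝ) ^ 2 - 1) / R ^ 3 < -δ * (n : ℝ) ^ 3 := by
  have hD2 := SpecAux.D2_pos hR
  set D2 := SpecAux.Dn R 2 with hD2def
  have hmu2 : mu 2 R * D2 = 6 / R^3 := by
    unfold mu
    rw [hD2def]
    unfold SpecAux.Dn
    rw [div_mul_cancel₀]
    · norm_num
    · have := hD2
      unfold SpecAux.Dn at this
      rw [hD2def] at this
      unfold SpecAux.Dn at this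
      exact ne_of_gt this
  set ε := (mu 2 R - μ) * D2 with hε
  have hεpos : 0 < ε := by
    apply mul_pos _ hD2
    linarith
  refine ⟨ε/16, by positivity, ?_⟩
  intro n hn
  have hnR : (2:ℝ) ≤ (n:ℝ) := by exact_mod_cast hn
  have hmain := SpecAux.main_ineq hR n hn
  have hDn : SpecAux.Dn R n = 1 - 2 * besselI 1 R / (R * besselI 0 R)
      - besselI 1 R * besselI (n + 1) R / (besselI 0 R * besselI n R) := rfl
  rw [← hDn]
  have hc : (n:ℝ) * ((n:ℝ)^2 - 1) = (n:ℝ)^3 - (n:ℝ) := by ring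
  rw [hc]
  -- μ Dn ≤ μ (n³-n) D2 / 6
  have s1 : μ * SpecAux.Dn R n ≤ μ * (((n:ℝ)^3 - (n:ℝ)) * D2) / 6 := by
    have := mul_le_mul_of_nonneg_left hmain hμ.le
    linarith
  have s2 : ((n:ℝ)^3 - (n:ℝ)) / R^3 = mu 2 R * (((n:ℝ)^3 - (n:ℝ)) * D2) / 6 := by
    rw [show mu 2 R * (((n:ℝ)^3 - (n:ℝ)) * D2) = (mu 2 R * D2) * ((n:ℝ)^3 - (n:ℝ)) from by ring,
      hmu2]
    field_simp
  have hcube : (0:ℝ) < (n:ℝ)^3 := by positivity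
  have hpoly : (3/4) * (n:ℝ)^3 ≤ (n:ℝ)^3 - (n:ℝ) := by nlinarith
  have s3 : μ * SpecAux.Dn R n - ((n:ℝ)^3 - (n:ℝ)) / R^3
      ≤ -(ε * (((n:ℝ)^3 - (n:ℝ))) / 6) := by
    rw [s2, hε]
    have : μ * (((n:ℝ)^3 - (n:ℝ)) * D2) / 6 - mu 2 R * (((n:ℝ)^3 - (n:ℝ)) * D2) / 6
        = -((mu 2 R - μ) * D2 * ((n:ℝ)^3 - (n:ℝ)) / 6) := by ring
    linarith [s1, this.ge, this.le]
  have s4 : -(ε * ((n:ℝ)^3 - (n:ℝ)) / 6) < -(ε/16) * (n:ℝ)^3 := by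
    have h1 : ε * ((3/4) * (n:ℝ)^3) ≤ ε * ((n:ℝ)^3 - (n:ℝ)) :=
      mul_le_mul_of_nonneg_left hpoly hεpos.le
    nlinarith [mul_pos hεpos hcube]
  linarith
end

section
/- (Lemma 4.7, differential-inequality decay.) Let f : [0,∞) → ℝ be differentiable, and suppose there are constants C ≥ 0 and d₁, d₂ > 0 with d₁ ≠ d₂ such that |f'(t) + d₁·f(t)| ≤ C·e^{−d₂·t} for all t > 0. Then, with d := min(d₁, d₂), there exists a constant C' ≥ 0 (depending only on |f(0)|, C, d₁, d₂) such that |f(t)| ≤ C'·e^{−d·t} for all t ≥ 0; in fact one may take C' = |f(0)| + 2C/|d₁ − d₂|. -/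
/-!
With the integrating factor `exp (d₁ * s)`, the hypothesis says that
`exp (d₁ * s) * f s - C * exp ((d₁ - d₂) * s) / (d₁ - d₂)` is antitone on `[0, ∞)`. Comparing its
values at `0` and `t`, for `f` and for `-f`, bounds `|f t|` by
`|f 0| * exp (-d₁ * t) + C * (exp (-d₂ * t) - exp (-d₁ * t)) / (d₁ - d₂)`, and the last quotient
is at most `exp (-min d₁ d₂ * t) / |d₁ - d₂|` because both exponentials lie in
`(0, exp (-min d₁ d₂ * t)]`.
-/

open Real Set

section IntegratingFactor

variable {f : ℝ → ℝ} {C d₁ d₂ : ℝ}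

lemma hasDerivAt_exp_mul_mul_sub_exp_div {x : ℝ} (hfx : DifferentiableAt ℝ f x) (hne : d₁ ≠ d₂) :
    HasDerivAt (fun s ↦ exp (d₁ * s) * f s - C * exp ((d₁ - d₂) * s) / (d₁ - d₂))
      (exp (d₁ * x) * (deriv f x + d₁ * f x) - C * exp ((d₁ - d₂) * x)) x := by
  have hsub : d₁ - d₂ ≠ 0 := sub_ne_zero.2 hne
  refine ((((hasDerivAt_id' x).const_mul d₁).exp.mul hfx.hasDerivAt).sub
    ((((hasDerivAt_id' x).const_mul (d₁ - d₂)).exp.const_mul C).div_const (d₁ - d₂))).congr_deriv ?_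
  field_simp
  ring

lemma antitoneOn_exp_mul_mul_sub_exp_div (hf : ∀ t ∈ Ici (0 : ℝ), DifferentiableAt ℝ f t)
    (hne : d₁ ≠ d₂) (h : ∀ t, 0 < t → deriv f t + d₁ * f t ≤ C * exp (-d₂ * t)) :
    AntitoneOn (fun s ↦ exp (d₁ * s) * f s - C * exp ((d₁ - d₂) * s) / (d₁ - d₂)) (Ici 0) := by
  have hderiv (x : ℝ) (hx : 0 ≤ x) := hasDerivAt_exp_mul_mul_sub_exp_div (C := C) (hf x hx) hne
  refine antitoneOn_of_deriv_nonpos (convex_Ici 0)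
    (fun x hx ↦ (hderiv x hx).continuousAt.continuousWithinAt)
    (fun x hx ↦ (hderiv x (interior_subset hx)).differentiableAt.differentiableWithinAt)
    fun x hx ↦ ?_
  rw [interior_Ici] at hx
  rw [(hderiv x (le_of_lt hx)).deriv, sub_nonpos]
  calc exp (d₁ * x) * (deriv f x + d₁ * f x)
      ≤ exp (d₁ * x) * (C * exp (-d₂ * x)) := by gcongr; exact h x hx
    _ = C * exp ((d₁ - d₂) * x) := by rw [mul_left_comm, ← exp_add]; ring_nf

lemma le_of_deriv_add_mul_le (hf : ∀ t ∈ Ici (0 : ℝ), DifferentiableAt ℝ f t)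
    (hne : d₁ ≠ d₂) (h : ∀ t, 0 < t → deriv f t + d₁ * f t ≤ C * exp (-d₂ * t))
    {t : ℝ} (ht : 0 ≤ t) :
    f t ≤ f 0 * exp (-d₁ * t) + C * ((exp (-d₂ * t) - exp (-d₁ * t)) / (d₁ - d₂)) := by
  have hmono := mul_le_mul_of_nonneg_right
    (antitoneOn_exp_mul_mul_sub_exp_div hf hne h self_mem_Ici ht ht) (exp_pos (-d₁ * t)).le
  have h₁ : exp (d₁ * t) * exp (-d₁ * t) = 1 := by rw [← exp_add]; simp
  have h₂ : exp ((d₁ - d₂) * t) * exp (-d₁ * t) = exp (-d₂ * t) := by rw [← exp_add]; ring_nf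
  simp only [mul_zero, exp_zero] at hmono
  linear_combination hmono - f t * h₁ + C / (d₁ - d₂) * h₂

lemma abs_le_of_abs_deriv_add_mul_le (hf : ∀ t ∈ Ici (0 : ℝ), DifferentiableAt ℝ f t)
    (hne : d₁ ≠ d₂) (h : ∀ t, 0 < t → |deriv f t + d₁ * f t| ≤ C * exp (-d₂ * t))
    {t : ℝ} (ht : 0 ≤ t) :
    |f t| ≤ |f 0| * exp (-d₁ * t) + C * ((exp (-d₂ * t) - exp (-d₁ * t)) / (d₁ - d₂)) := by
  have upper := le_of_deriv_add_mul_le hf hne (fun s hs ↦ (le_abs_self _).trans (h s hs)) ht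
  have lower := le_of_deriv_add_mul_le (f := fun s ↦ -f s) (C := C) (fun s hs ↦ (hf s hs).neg) hne
    (fun s hs ↦ by rw [deriv.fun_neg]; linarith [neg_abs_le (deriv f s + d₁ * f s), h s hs]) ht
  have hpos := (exp_pos (-d₁ * t)).le
  rw [abs_le]
  constructor
  · linarith [mul_le_mul_of_nonneg_right (neg_abs_le (f 0)) hpos]
  · linarith [mul_le_mul_of_nonneg_right (le_abs_self (f 0)) hpos]

end IntegratingFactor

lemma exp_neg_mul_sub_exp_neg_mul_div_le {a b t : ℝ} (ht : 0 ≤ t) (hab : a ≠ b) :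
    (exp (-b * t) - exp (-a * t)) / (a - b) ≤ exp (-min a b * t) / |a - b| := by
  have exp_le (c : ℝ) (hc : min a b ≤ c) : exp (-c * t) ≤ exp (-min a b * t) :=
    exp_le_exp.2 (by nlinarith)
  calc (exp (-b * t) - exp (-a * t)) / (a - b)
      ≤ |(exp (-b * t) - exp (-a * t)) / (a - b)| := le_abs_self _
    _ = |exp (-b * t) - exp (-a * t)| / |a - b| := abs_div _ _
    _ ≤ exp (-min a b * t) / |a - b| := by
      gcongr
      exact abs_sub_le_of_nonneg_of_le (exp_pos _).le (exp_le b (min_le_right a b))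
        (exp_pos _).le (exp_le a (min_le_left a b))

theorem decay_from_differential_inequality_general (f : ℝ → ℝ)
    (hf : ∀ t ∈ Set.Ici (0 : ℝ), DifferentiableAt ℝ f t)
    (C d₁ d₂ : ℝ) (hC : 0 ≤ C) (hne : d₁ ≠ d₂)
    (hineq : ∀ t : ℝ, 0 < t → |deriv f t + d₁ * f t| ≤ C * Real.exp (-d₂ * t)) :
    ∀ t : ℝ, 0 ≤ t →
      |f t| ≤ (|f 0| + 2 * C / |d₁ - d₂|) * Real.exp (-(min d₁ d₂) * t) := by
  intro t ht
  have hexp_le : exp (-d₁ * t) ≤ exp (-min d₁ d₂ * t) :=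
    exp_le_exp.2 (by nlinarith [min_le_left d₁ d₂])
  calc |f t| ≤ |f 0| * exp (-d₁ * t) + C * ((exp (-d₂ * t) - exp (-d₁ * t)) / (d₁ - d₂)) :=
        abs_le_of_abs_deriv_add_mul_le hf hne hineq ht
    _ ≤ |f 0| * exp (-min d₁ d₂ * t) + C * (exp (-min d₁ d₂ * t) / |d₁ - d₂|) :=
        add_le_add (mul_le_mul_of_nonneg_left hexp_le (abs_nonneg _))
          (mul_le_mul_of_nonneg_left (exp_neg_mul_sub_exp_neg_mul_div_le ht hne) hC)
    _ = (|f 0| + C / |d₁ - d₂|) * exp (-min d₁ d₂ * t) := by ring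
    _ ≤ (|f 0| + 2 * C / |d₁ - d₂|) * exp (-min d₁ d₂ * t) := by
        gcongr
        linarith

/-- Lemma 4.7 (differential-inequality decay): if `f` is differentiable on `[0,∞)` and
`|f'(t) + d₁ f(t)| ≤ C e^{−d₂ t}` for all `t > 0`, with `C ≥ 0`, `d₁, d₂ > 0`, `d₁ ≠ d₂`,
then `|f(t)| ≤ (|f(0)| + 2C/|d₁ − d₂|) e^{− min(d₁,d₂) t}` for all `t ≥ 0`. -/
theorem decay_from_differential_inequality (f : ℝ → ℝ)
    (hf : ∀ t ∈ Set.Ici (0 : ℝ), DifferentiableAt ℝ f t)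
    (C d₁ d₂ : ℝ) (hC : 0 ≤ C) (hd₁ : 0 < d₁) (hd₂ : 0 < d₂) (hne : d₁ ≠ d₂)
    (hineq : ∀ t : ℝ, 0 < t → |deriv f t + d₁ * f t| ≤ C * Real.exp (-d₂ * t)) :
    ∀ t : ℝ, 0 ≤ t →
      |f t| ≤ (|f 0| + 2 * C / |d₁ - d₂|) * Real.exp (-(min d₁ d₂) * t) :=
  decay_from_differential_inequality_general f hf C d₁ d₂ hC hne hineq
end

section
/- (Weighted energy estimate from Lemma 4.6.) Let n ≥ 2 be an integer, let 0 < ε < R, let b : [ε,R] → ℝ be continuous, and let w be a C² function on [ε,R] satisfying −w''(r) − (1/r)·w'(r) + (n²/r²)·w(r) = b(r) for all r ∈ [ε,R] and w(ε) = w(R) = 0. Then (1/3)·∫_ε^R |w'(r)|²·(1/r) dr + (n²/2 − 3/2)·∫_ε^R |w(r)|²·(1/r³) dr ≤ (1/(2n²))·∫_ε^R |b(r)|²·r dr. -/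
/-- Weighted energy estimate from Lemma 4.6: if `n ≥ 2`, `0 < ε < R`, `b` is continuous on
`[ε,R]`, and `w` is `C²` on `[ε,R]` with `−w'' − (1/r)w' + (n²/r²)w = b` on `[ε,R]` and
`w(ε) = w(R) = 0`, then
`(1/3)∫ |w'|²/r + (n²/2 − 3/2)∫ |w|²/r³ ≤ (1/(2n²))∫ |b|² r`. -/
theorem weighted_energy_estimate (n : ℕ) (hn : 2 ≤ n) (ε R : ℝ)
    (hε : 0 < ε) (hεR : ε < R)
    (b w w' w'' : ℝ → ℝ)
    (hb : ContinuousOn b (Set.Icc ε R))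
    (hw' : ∀ r ∈ Set.Icc ε R, HasDerivAt w (w' r) r)
    (hw'' : ∀ r ∈ Set.Icc ε R, HasDerivAt w' (w'' r) r)
    (hw''cont : ContinuousOn w'' (Set.Icc ε R))
    (heq : ∀ r ∈ Set.Icc ε R, -w'' r - (1 / r) * w' r + ((n : ℝ) ^ 2 / r ^ 2) * w r = b r)
    (hbdε : w ε = 0) (hbdR : w R = 0) :
    (1 / 3) * (∫ r in ε..R, |w' r| ^ 2 * (1 / r))
        + ((n : ℝ) ^ 2 / 2 - 3 / 2) * (∫ r in ε..R, |w r| ^ 2 * (1 / r ^ 3))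
      ≤ (1 / (2 * (n : ℝ) ^ 2)) * (∫ r in ε..R, |b r| ^ 2 * r) := by
  have hle : ε ≤ R := le_of_lt hεR
  have huIcc : Set.uIcc ε R = Set.Icc ε R := Set.uIcc_of_le hle
  have hpos : ∀ r ∈ Set.Icc ε R, (0:ℝ) < r := fun r hr => lt_of_lt_of_le hε hr.1
  have hne : ∀ r ∈ Set.Icc ε R, r ≠ 0 := fun r hr => (hpos r hr).ne'
  have hn2 : (2:ℝ) ≤ (n:ℝ) := by exact_mod_cast hn
  have hnpos : (0:ℝ) < (n:ℝ)^2 := by nlinarith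
  have hwc : ContinuousOn w (Set.Icc ε R) :=
    fun r hr => (hw' r hr).continuousAt.continuousWithinAt
  have hw'c : ContinuousOn w' (Set.Icc ε R) :=
    fun r hr => (hw'' r hr).continuousAt.continuousWithinAt
  have hidc : ContinuousOn (fun r : ℝ => r) (Set.Icc ε R) := continuousOn_id
  -- integrability
  have int₁ : IntervalIntegrable (fun r => w r * w' r / r ^ 2) MeasureTheory.volume ε R := by
    apply ContinuousOn.intervalIntegrable; rw [huIcc]
    exact (hwc.mul hw'c).div (hidc.pow 2) (fun r hr => pow_ne_zero _ (hne r hr))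
  have int₂ : IntervalIntegrable (fun r => w r ^ 2 / r ^ 3) MeasureTheory.volume ε R := by
    apply ContinuousOn.intervalIntegrable; rw [huIcc]
    exact (hwc.pow 2).div (hidc.pow 3) (fun r hr => pow_ne_zero _ (hne r hr))
  have int₃ : IntervalIntegrable (fun r => w' r ^ 2 / r) MeasureTheory.volume ε R := by
    apply ContinuousOn.intervalIntegrable; rw [huIcc]
    exact (hw'c.pow 2).div hidc hne
  have int₄ : IntervalIntegrable (fun r => -w'' r * w r / r) MeasureTheory.volume ε R := by
    apply ContinuousOn.intervalIntegrable; rw [huIcc]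
    exact ((hw''cont.neg.mul hwc)).div hidc hne
  have int₅ : IntervalIntegrable (fun r => b r * w r / r) MeasureTheory.volume ε R := by
    apply ContinuousOn.intervalIntegrable; rw [huIcc]
    exact (hb.mul hwc).div hidc hne
  have int₆ : IntervalIntegrable (fun r => b r ^ 2 * r) MeasureTheory.volume ε R := by
    apply ContinuousOn.intervalIntegrable; rw [huIcc]
    exact (hb.pow 2).mul hidc
  set A := ∫ r in ε..R, w' r ^ 2 / r with hA
  set B := ∫ r in ε..R, w r ^ 2 / r ^ 3 with hB
  set C := ∫ r in ε..R, b r * w r / r with hC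
  set D := ∫ r in ε..R, b r ^ 2 * r with hD
  set E := ∫ r in ε..R, w r * w' r / r ^ 2 with hE
  -- identity 1 : E = B
  have hEB : E = B := by
    have hder : ∀ r ∈ Set.uIcc ε R,
        HasDerivAt (fun r => w r ^ 2 / (2 * r ^ 2)) (w r * w' r / r ^ 2 - w r ^ 2 / r ^ 3) r := by
      rw [huIcc]; intro r hr
      have hrne : r ≠ 0 := hne r hr
      have h1 : HasDerivAt (fun r => w r ^ 2) (2 * w r ^ 1 * w' r) r := (hw' r hr).pow 2
      have h2 : HasDerivAt (fun r : ℝ => 2 * r ^ 2) (2 * (2 * r ^ 1)) r :=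
        (hasDerivAt_pow 2 r).const_mul 2
      have h3 := h1.div h2 (by positivity)
      refine h3.congr_deriv ?_
      field_simp
    have hint := intervalIntegral.integral_eq_sub_of_hasDerivAt hder (int₁.sub int₂)
    rw [intervalIntegral.integral_sub int₁ int₂] at hint
    rw [hbdε, hbdR] at hint
    simp at hint
    rw [hE, hB]; linarith
  -- identity 2 : ∫ f₄ = A - E
  have hF4 : (∫ r in ε..R, -w'' r * w r / r) = A - E := by
    have hder : ∀ r ∈ Set.uIcc ε R,
        HasDerivAt (fun r => -(w' r * w r / r))
          (-w'' r * w r / r - w' r ^ 2 / r + w r * w' r / r ^ 2) r := by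
      rw [huIcc]; intro r hr
      have hrne : r ≠ 0 := hne r hr
      have h1 : HasDerivAt (fun r => w' r * w r) (w'' r * w r + w' r * w' r) r :=
        (hw'' r hr).mul (hw' r hr)
      have h2 := (h1.div (hasDerivAt_id r) hrne).neg
      refine h2.congr_deriv ?_
      simp only [id]; field_simp
      ring
    have hint := intervalIntegral.integral_eq_sub_of_hasDerivAt hder ((int₄.sub int₃).add int₁)
    rw [intervalIntegral.integral_add (int₄.sub int₃) int₁,
      intervalIntegral.integral_sub int₄ int₃] at hint
    rw [hbdε, hbdR] at hint
    simp only [mul_zero, zero_mul, zero_div, neg_zero, sub_zero, zero_sub, div_zero] at hint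
    rw [hA, hE]; linarith
  -- weak formulation : ∫ f₄ - E + n² B = C
  have hweak : (∫ r in ε..R, -w'' r * w r / r) - E + (n:ℝ)^2 * B = C := by
    have hcongr : (∫ r in ε..R,
        (-w'' r * w r / r - w r * w' r / r ^ 2 + (n:ℝ)^2 * (w r ^ 2 / r ^ 3)))
        = ∫ r in ε..R, b r * w r / r := by
      apply intervalIntegral.integral_congr
      rw [huIcc]
      intro r hr
      have hrne : r ≠ 0 := hne r hr
      have h := heq r hr
      linear_combination (w r / r) * h
    rw [intervalIntegral.integral_add (int₄.sub int₁) (int₂.const_mul _),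
      intervalIntegral.integral_sub int₄ int₁,
      intervalIntegral.integral_const_mul] at hcongr
    rw [hC, hE, hB]; linarith
  -- combined identity: A + (n²-2) B = C
  have hkey : A + ((n:ℝ)^2 - 2) * B = C := by
    rw [hF4, hEB] at hweak; linarith
  -- Young : C ≤ (1/(2n²)) D + (n²/2) B
  have hyoung : C ≤ 1 / (2 * (n:ℝ)^2) * D + (n:ℝ)^2 / 2 * B := by
    have hmono : C ≤ ∫ r in ε..R,
        (1 / (2 * (n:ℝ)^2) * (b r ^ 2 * r) + (n:ℝ)^2 / 2 * (w r ^ 2 / r ^ 3)) := by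
      apply intervalIntegral.integral_mono_on hle int₅
        ((int₆.const_mul _).add (int₂.const_mul _))
      intro r hr
      have hr0 : (0:ℝ) < r := hpos r hr
      have key : 1 / (2 * (n:ℝ)^2) * (b r ^ 2 * r) + (n:ℝ)^2 / 2 * (w r ^ 2 / r ^ 3)
          - b r * w r / r = (b r * r ^ 2 - (n:ℝ)^2 * w r) ^ 2 / (2 * (n:ℝ)^2 * r ^ 3) := by
        field_simp
        ring
      have hpos2 : (0:ℝ) ≤ (b r * r ^ 2 - (n:ℝ)^2 * w r) ^ 2 / (2 * (n:ℝ)^2 * r ^ 3) := by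
        positivity
      linarith
    rw [intervalIntegral.integral_add (int₆.const_mul _) (int₂.const_mul _),
      intervalIntegral.integral_const_mul, intervalIntegral.integral_const_mul] at hmono
    exact hmono
  -- Hardy : B ≤ A
  have hBA : B ≤ A := by
    have hmono : E ≤ ∫ r in ε..R, (1/2 * (w' r ^ 2 / r) + 1/2 * (w r ^ 2 / r ^ 3)) := by
      apply intervalIntegral.integral_mono_on hle int₁
        ((int₃.const_mul _).add (int₂.const_mul _))
      intro r hr
      have hr0 : (0:ℝ) < r := hpos r hr
      have key : 1/2 * (w' r ^ 2 / r) + 1/2 * (w r ^ 2 / r ^ 3) - w r * w' r / r ^ 2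
          = (w' r * r - w r) ^ 2 / (2 * r ^ 3) := by
        field_simp
        ring
      have hpos2 : (0:ℝ) ≤ (w' r * r - w r) ^ 2 / (2 * r ^ 3) := by positivity
      linarith
    rw [intervalIntegral.integral_add (int₃.const_mul _) (int₂.const_mul _),
      intervalIntegral.integral_const_mul, intervalIntegral.integral_const_mul] at hmono
    rw [hEB] at hmono
    linarith
  -- B ≥ 0
  have hB0 : 0 ≤ B := by
    rw [hB]
    apply intervalIntegral.integral_nonneg hle
    intro r hr
    have hr0 : (0:ℝ) < r := hpos r hr
    positivity
  -- rewrite goal integrals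
  have g1 : (∫ r in ε..R, |w' r| ^ 2 * (1 / r)) = A := by
    rw [hA]; congr 1; funext r; rw [sq_abs, mul_one_div]
  have g2 : (∫ r in ε..R, |w r| ^ 2 * (1 / r ^ 3)) = B := by
    rw [hB]; congr 1; funext r; rw [sq_abs, mul_one_div]
  have g3 : (∫ r in ε..R, |b r| ^ 2 * r) = D := by
    rw [hD]; congr 1; funext r; rw [sq_abs]
  rw [g1, g2, g3]
  have h5 : A + ((n:ℝ)^2/2 - 2) * B ≤ 1 / (2 * (n:ℝ)^2) * D := by linarith
  linarith
end
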